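/- arXiv:2508.00371 — 7 statements merged into one kernel-verified Lean document; each statement's English description precedes it below -/
import Mathlib

section
/- Let α ∈ ℝ, let X be a compact topological space equipped with a finite Borel measure λ, let I ⊆ ℝ be an open interval, and let f : I × X → (0,∞) be continuous such that ∂_t f and ∂_t² f exist and are continuous on I × X. If f(t,x) ∂_t²f(t,x) = ((1+α)/2) (∂_t f(t,x))² for all (t,x) ∈ I × X, then the α-Fisher–Rao energy E(t) = ∫_X f(t,x)^{−α−1} (∂_t f(t,x))² dλ(x) is constant in t on I. -/
open MeasureTheory

/-! Along an α-geodesic the energy density `f ^ (-α - 1) * (∂ₜ f) ^ 2` is already constant in `t`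
at every point `x`: its time derivative is
`f ^ (-α - 2) * ∂ₜ f * (2 * f * ∂ₜ² f - (1 + α) * (∂ₜ f) ^ 2)`, which the geodesic equation kills.
Integrating the pointwise identity over `x` gives the conservation of the energy. -/

theorem Convex.is_const_of_hasDerivWithinAt_zero {𝕜 G : Type*} [RCLike 𝕜]
    [NormedAddCommGroup G] [NormedSpace 𝕜 G] {f : 𝕜 → G} {s : Set 𝕜} (hs : Convex ℝ s)
    (hf : ∀ x ∈ s, HasDerivWithinAt f 0 s x) {x y : 𝕜} (hx : x ∈ s) (hy : y ∈ s) :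
    f x = f y := by
  have h := hs.norm_image_sub_le_of_norm_hasDerivWithin_le hf (fun _ _ => norm_zero.le) hy hx
  rwa [zero_mul, norm_le_zero_iff, sub_eq_zero] at h

theorem hasDerivAt_rpow_neg_sub_one_mul_sq_of_geodesic {α : ℝ} {f f' : ℝ → ℝ} {f'' t : ℝ}
    (hf : HasDerivAt f (f' t) t) (hf' : HasDerivAt f' f'' t) (hpos : 0 < f t)
    (hgeo : f t * f'' = (1 + α) / 2 * f' t ^ 2) :
    HasDerivAt (fun s => f s ^ (-α - 1) * f' s ^ 2) 0 t := by
  have hprod : HasDerivAt (fun s => f s ^ (-α - 1) * f' s ^ 2)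
      (f' t * (-α - 1) * f t ^ (-α - 1 - 1) * f' t ^ 2 + f t ^ (-α - 1) * (2 * f' t * f'')) t := by
    simpa using (hf.rpow_const (p := -α - 1) (Or.inl hpos.ne')).fun_mul (hf'.fun_pow 2)
  refine hprod.congr_deriv ?_
  have hsplit : f t ^ (-α - 1) = f t ^ (-α - 1 - 1) * f t := by
    rw [← Real.rpow_add_one hpos.ne']; ring_nf
  rw [hsplit]
  linear_combination (2 * f' t * f t ^ (-α - 1 - 1)) * hgeo

theorem stmt5_general (α : ℝ) {X : Type*}
    [MeasurableSpace X]
    (lam : Measure X)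
    (I : Set ℝ) (hIc : I.OrdConnected)
    (f ft ftt : ℝ → X → ℝ)
    (hfpos : ∀ t ∈ I, ∀ x : X, 0 < f t x)
    (hft : ∀ x : X, ∀ t ∈ I, HasDerivAt (fun s => f s x) (ft t x) t)
    (hftt : ∀ x : X, ∀ t ∈ I, HasDerivAt (fun s => ft s x) (ftt t x) t)
    (hpde : ∀ t ∈ I, ∀ x : X, f t x * ftt t x = ((1 + α) / 2) * (ft t x) ^ 2) :
    ∀ s ∈ I, ∀ t ∈ I,
      ∫ x, (f t x) ^ (-α - 1 : ℝ) * (ft t x) ^ 2 ∂lam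
        = ∫ x, (f s x) ^ (-α - 1 : ℝ) * (ft s x) ^ 2 ∂lam := by
  intro s hs t ht
  refine integral_congr_ae (Filter.Eventually.of_forall fun x => ?_)
  have hdensity : ∀ u ∈ I,
      HasDerivWithinAt (fun v => f v x ^ (-α - 1) * ft v x ^ 2) 0 I u := fun u hu =>
    (hasDerivAt_rpow_neg_sub_one_mul_sq_of_geodesic (hft x u hu) (hftt x u hu) (hfpos u hu x)
      (hpde u hu x)).hasDerivWithinAt
  exact hIc.convex.is_const_of_hasDerivWithinAt_zero hdensity ht hs

/-- Conservation of the α-Fisher–Rao energy along α-geodesics. If `f > 0` is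
continuous on `I × X` (`X` compact with a finite Borel measure `lam`) with continuous first
and second time derivatives `ft`, `ftt`, and satisfies the pointwise geodesic equation
`f ∂_t²f = ((1+α)/2) (∂_t f)²`, then the energy
`E(t) = ∫ f(t,x)^(−α−1) (∂_t f(t,x))² dlam` is constant in `t` on `I`. -/
theorem stmt5 (α : ℝ) {X : Type*} [TopologicalSpace X] [CompactSpace X]
    [MeasurableSpace X] [BorelSpace X]
    (lam : Measure X) [IsFiniteMeasure lam]
    (I : Set ℝ) (hIo : IsOpen I) (hIc : I.OrdConnected)
    (f ft ftt : ℝ → X → ℝ)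
    (hfpos : ∀ t ∈ I, ∀ x : X, 0 < f t x)
    (hft : ∀ x : X, ∀ t ∈ I, HasDerivAt (fun s => f s x) (ft t x) t)
    (hftt : ∀ x : X, ∀ t ∈ I, HasDerivAt (fun s => ft s x) (ftt t x) t)
    (hfc : ContinuousOn (fun q : ℝ × X => f q.1 q.2) (I ×ˢ Set.univ))
    (hftc : ContinuousOn (fun q : ℝ × X => ft q.1 q.2) (I ×ˢ Set.univ))
    (hfttc : ContinuousOn (fun q : ℝ × X => ftt q.1 q.2) (I ×ˢ Set.univ))
    (hpde : ∀ t ∈ I, ∀ x : X, f t x * ftt t x = ((1 + α) / 2) * (ft t x) ^ 2) :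
    ∀ s ∈ I, ∀ t ∈ I,
      ∫ x, (f t x) ^ (-α - 1 : ℝ) * (ft t x) ^ 2 ∂lam
        = ∫ x, (f s x) ^ (-α - 1 : ℝ) * (ft s x) ^ 2 ∂lam :=
  stmt5_general α lam I hIc f ft ftt hfpos hft hftt hpde
end

section
/- Let α ∈ ℝ, I ⊆ ℝ an interval, and let u : I × ℝ → ℝ be smooth. Suppose u satisfies the generalized Proudman–Johnson equation u_{txx} + (2−α) u_x u_{xx} + u u_{xxx} = 0 on I × ℝ, and that for every t ∈ I, (u_{tx} + u u_{xx} + ((1−α)/2) u_x²)(t,x) → 0 as x → −∞. Then u_{tx} + u u_{xx} + ((1−α)/2) u_x² = 0 identically on I × ℝ. Consequently, if φ : I × ℝ → ℝ is smooth with ∂_t φ(t,x) = u(t, φ(t,x)) and g := ∂_x φ > 0, then g(t,x) ∂_t² g(t,x) = ((1+α)/2) (∂_t g(t,x))² for all (t,x) ∈ I × ℝ; in particular, for α ≠ 1, ∂_t²( (∂_x φ)^{(1−α)/2} ) = 0. -/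
noncomputable def p1 (F : ℝ × ℝ → ℝ) (p : ℝ × ℝ) : ℝ := fderiv ℝ F p (1, 0)
noncomputable def p2 (F : ℝ × ℝ → ℝ) (p : ℝ × ℝ) : ℝ := fderiv ℝ F p (0, 1)

lemma p1_smooth {F : ℝ × ℝ → ℝ} (hF : ContDiff ℝ (⊤ : ℕ∞) F) : ContDiff ℝ (⊤ : ℕ∞) (p1 F) :=
  (hF.fderiv_right (le_refl _)).clm_apply contDiff_const

lemma p2_smooth {F : ℝ × ℝ → ℝ} (hF : ContDiff ℝ (⊤ : ℕ∞) F) : ContDiff ℝ (⊤ : ℕ∞) (p2 F) :=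
  (hF.fderiv_right (le_refl _)).clm_apply contDiff_const

lemma hasDerivAt_comp' {F : ℝ × ℝ → ℝ} (hF : ContDiff ℝ (⊤ : ℕ∞) F) {γ : ℝ → ℝ × ℝ}
    {a b t₀ : ℝ} (hγ : HasDerivAt γ (a, b) t₀) :
    HasDerivAt (fun s => F (γ s)) (a * p1 F (γ t₀) + b * p2 F (γ t₀)) t₀ := by
  have h := (hF.differentiable (by simp) (γ t₀)).hasFDerivAt.comp_hasDerivAt t₀ hγ
  refine h.congr_deriv ?_
  have hv : (a, b) = a • ((1:ℝ), (0:ℝ)) + b • ((0:ℝ), (1:ℝ)) := by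
    simp [Prod.ext_iff]
  rw [hv, map_add, map_smul, map_smul]
  unfold p1 p2
  simp [smul_eq_mul]

lemma hasDerivAt_sect2 {F : ℝ × ℝ → ℝ} (hF : ContDiff ℝ (⊤ : ℕ∞) F) (t x : ℝ) :
    HasDerivAt (fun y => F (t, y)) (p2 F (t, x)) x := by
  have hγ : HasDerivAt (fun y : ℝ => (t, y)) ((0:ℝ), (1:ℝ)) x :=
    HasDerivAt.prodMk (hasDerivAt_const x t) (hasDerivAt_id x)
  simpa using hasDerivAt_comp' hF hγ

lemma hasDerivAt_sect1 {F : ℝ × ℝ → ℝ} (hF : ContDiff ℝ (⊤ : ℕ∞) F) (t x : ℝ) :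
    HasDerivAt (fun s => F (s, x)) (p1 F (t, x)) t := by
  have hγ : HasDerivAt (fun s : ℝ => (s, x)) ((1:ℝ), (0:ℝ)) t :=
    HasDerivAt.prodMk (hasDerivAt_id t) (hasDerivAt_const t x)
  simpa using hasDerivAt_comp' hF hγ

lemma fderiv_apply_vec {F : ℝ × ℝ → ℝ} (hF : ContDiff ℝ (⊤ : ℕ∞) F) (v w : ℝ × ℝ) (p : ℝ × ℝ) :
    fderiv ℝ (fun q => fderiv ℝ F q v) p w = fderiv ℝ (fderiv ℝ F) p w v := by
  have hd : DifferentiableAt ℝ (fderiv ℝ F) p :=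
    (hF.fderiv_right (m := (⊤ : ℕ∞)) (le_refl _)).differentiable (by simp) p
  have := fderiv_clm_apply hd (differentiableAt_const v)
  simp at this
  rw [show (fun q => fderiv ℝ F q v) = fun q => (fderiv ℝ F q) v from rfl, this]
  simp

lemma p_swap {F : ℝ × ℝ → ℝ} (hF : ContDiff ℝ (⊤ : ℕ∞) F) (p : ℝ × ℝ) :
    p1 (p2 F) p = p2 (p1 F) p := by
  have hs : IsSymmSndFDerivAt ℝ F p := hF.contDiffAt.isSymmSndFDerivAt (by rw [minSmoothness_of_isRCLikeNormedField]; exact (WithTop.coe_le_coe.mpr (le_top : (2 : ℕ∞) ≤ ⊤) : ((2 : ℕ∞) : WithTop ℕ∞) ≤ ((⊤ : ℕ∞) : WithTop ℕ∞)))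
  unfold p1 p2
  rw [fderiv_apply_vec hF, fderiv_apply_vec hF]
  exact (hs _ _).symm

/-- If a smooth `u` satisfies the generalized Proudman–Johnson equation
`u_{txx} + (2−α) u_x u_{xx} + u u_{xxx} = 0` on `I × ℝ` and the quantity
`u_{tx} + u u_{xx} + ((1−α)/2) u_x²` tends to `0` as `x → −∞` for every `t ∈ I`, then this
quantity vanishes identically on `I × ℝ`. Consequently, if `φ` is a smooth flow of `u`
(`∂_t φ = u ∘ φ`) with `g := ∂_x φ > 0`, then `g ∂_t² g = ((1+α)/2) (∂_t g)²` on `I × ℝ`,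
and for `α ≠ 1`, `∂_t²((∂_x φ)^((1−α)/2)) = 0`. -/
theorem stmt6 (α : ℝ) (I : Set ℝ) (hIo : IsOpen I) (hIc : I.OrdConnected)
    (u : ℝ → ℝ → ℝ) (hu : ContDiff ℝ (⊤ : ℕ∞) (Function.uncurry u))
    (hpde : ∀ t ∈ I, ∀ x : ℝ,
      deriv (fun s => deriv (deriv (u s)) x) t
        + (2 - α) * deriv (u t) x * deriv (deriv (u t)) x
        + u t x * deriv (deriv (deriv (u t))) x = 0)
    (hdecay : ∀ t ∈ I,
      Filter.Tendsto (fun x : ℝ =>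
          deriv (fun s => deriv (u s) x) t + u t x * deriv (deriv (u t)) x
            + ((1 - α) / 2) * (deriv (u t) x) ^ 2)
        Filter.atBot (nhds 0)) :
    (∀ t ∈ I, ∀ x : ℝ,
      deriv (fun s => deriv (u s) x) t + u t x * deriv (deriv (u t)) x
        + ((1 - α) / 2) * (deriv (u t) x) ^ 2 = 0) ∧
    (∀ φ : ℝ → ℝ → ℝ, ContDiff ℝ (⊤ : ℕ∞) (Function.uncurry φ) →
      (∀ t ∈ I, ∀ x : ℝ, deriv (fun s => φ s x) t = u t (φ t x)) →
      (∀ t ∈ I, ∀ x : ℝ, 0 < deriv (φ t) x) →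
      ((∀ t ∈ I, ∀ x : ℝ,
          deriv (φ t) x * deriv (fun s => deriv (fun r => deriv (φ r) x) s) t
            = ((1 + α) / 2) * (deriv (fun s => deriv (φ s) x) t) ^ 2) ∧
        (α ≠ 1 → ∀ t ∈ I, ∀ x : ℝ,
          deriv (fun s => deriv (fun r => (deriv (φ r) x) ^ ((1 - α) / 2 : ℝ)) s) t
            = 0))) := by
  set V : ℝ × ℝ → ℝ := Function.uncurry u with hVdef
  -- basic conversions
  have h1 : ∀ s x : ℝ, deriv (u s) x = p2 V (s, x) := fun s x =>
    (hasDerivAt_sect2 hu s x).deriv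
  have h1f : ∀ s : ℝ, deriv (u s) = fun y => p2 V (s, y) := fun s => funext (h1 s)
  have h2 : ∀ s x : ℝ, deriv (deriv (u s)) x = p2 (p2 V) (s, x) := by
    intro s x
    rw [h1f s]
    exact (hasDerivAt_sect2 (p2_smooth hu) s x).deriv
  have h2f : ∀ s : ℝ, deriv (deriv (u s)) = fun y => p2 (p2 V) (s, y) := fun s =>
    funext (h2 s)
  have h3 : ∀ s x : ℝ, deriv (deriv (deriv (u s))) x = p2 (p2 (p2 V)) (s, x) := by
    intro s x
    rw [h2f s]
    exact (hasDerivAt_sect2 (p2_smooth (p2_smooth hu)) s x).deriv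
  have h4 : ∀ t x : ℝ, deriv (fun s => deriv (u s) x) t = p1 (p2 V) (t, x) := by
    intro t x
    rw [show (fun s => deriv (u s) x) = fun s => p2 V (s, x) from funext fun s => h1 s x]
    exact (hasDerivAt_sect1 (p2_smooth hu) t x).deriv
  have h5 : ∀ t x : ℝ, deriv (fun s => deriv (deriv (u s)) x) t = p1 (p2 (p2 V)) (t, x) := by
    intro t x
    rw [show (fun s => deriv (deriv (u s)) x) = fun s => p2 (p2 V) (s, x) from
      funext fun s => h2 s x]
    exact (hasDerivAt_sect1 (p2_smooth (p2_smooth hu)) t x).deriv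
  -- internal form of the PDE
  have hpde' : ∀ t ∈ I, ∀ x : ℝ, p1 (p2 (p2 V)) (t, x)
      + (2 - α) * p2 V (t, x) * p2 (p2 V) (t, x) + V (t, x) * p2 (p2 (p2 V)) (t, x) = 0 := by
    intro t ht x
    have := hpde t ht x
    rwa [h5, h1, h2, h3] at this
  -- PART 1 (internal form)
  have key : ∀ t ∈ I, ∀ x : ℝ, p1 (p2 V) (t, x) + V (t, x) * p2 (p2 V) (t, x)
      + ((1 - α) / 2) * (p2 V (t, x)) ^ 2 = 0 := by
    intro t ht
    set f : ℝ → ℝ := fun x => p1 (p2 V) (t, x) + V (t, x) * p2 (p2 V) (t, x)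
      + ((1 - α) / 2) * (p2 V (t, x)) ^ 2 with hfdef
    have hfd : ∀ x : ℝ, HasDerivAt f 0 x := by
      intro x
      have hA : HasDerivAt (fun y => p1 (p2 V) (t, y)) (p2 (p1 (p2 V)) (t, x)) x :=
        hasDerivAt_sect2 (p1_smooth (p2_smooth hu)) t x
      have hB : HasDerivAt (fun y => V (t, y)) (p2 V (t, x)) x := hasDerivAt_sect2 hu t x
      have hC : HasDerivAt (fun y => p2 (p2 V) (t, y)) (p2 (p2 (p2 V)) (t, x)) x :=
        hasDerivAt_sect2 (p2_smooth (p2_smooth hu)) t x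
      have hD : HasDerivAt (fun y => p2 V (t, y)) (p2 (p2 V) (t, x)) x :=
        hasDerivAt_sect2 (p2_smooth hu) t x
      have hsum := (hA.add (hB.mul hC)).add (((hD.pow 2).const_mul ((1 - α) / 2)))
      refine hsum.congr_deriv ?_
      have hswap : p2 (p1 (p2 V)) (t, x) = p1 (p2 (p2 V)) (t, x) :=
        (p_swap (p2_smooth hu) (t, x)).symm
      have hp := hpde' t ht x
      rw [hswap]
      push_cast
      linarith [hp, sq_nonneg (p2 V (t, x))]
    have hconst : ∀ x y : ℝ, f x = f y :=
      fun x y => is_const_of_deriv_eq_zero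
        (fun z => (hfd z).differentiableAt) (fun z => (hfd z).deriv) x y
    have hten : Filter.Tendsto f Filter.atBot (nhds 0) := by
      have := hdecay t ht
      have heq : (fun x : ℝ =>
          deriv (fun s => deriv (u s) x) t + u t x * deriv (deriv (u t)) x
            + ((1 - α) / 2) * (deriv (u t) x) ^ 2) = f := by
        funext x
        rw [h4, h1, h2]
        rfl
      rwa [heq] at this
    have hten2 : Filter.Tendsto f Filter.atBot (nhds (f 0)) := by
      have : f = fun _ => f 0 := funext fun x => hconst x 0
      rw [this]
      exact tendsto_const_nhds
    have hf0 : f 0 = 0 := tendsto_nhds_unique hten2 hten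
    intro x
    calc p1 (p2 V) (t, x) + V (t, x) * p2 (p2 V) (t, x)
        + ((1 - α) / 2) * (p2 V (t, x)) ^ 2 = f x := rfl
      _ = f 0 := hconst x 0
      _ = 0 := hf0
  constructor
  · intro t ht x
    rw [h4, h1, h2]
    exact key t ht x
  -- PART 2
  intro φ hφ hflow hpos
  set Φ : ℝ × ℝ → ℝ := Function.uncurry φ with hΦdef
  have g1 : ∀ s x : ℝ, deriv (φ s) x = p2 Φ (s, x) := fun s x =>
    (hasDerivAt_sect2 hφ s x).deriv
  have g2 : ∀ t x : ℝ, deriv (fun s => φ s x) t = p1 Φ (t, x) := fun t x =>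
    (hasDerivAt_sect1 hφ t x).deriv
  have ha : ∀ t ∈ I, ∀ x : ℝ, p1 Φ (t, x) = V (t, Φ (t, x)) := by
    intro t ht x
    rw [← g2 t x]
    exact hflow t ht x
  have g3 : ∀ t x : ℝ, deriv (fun s => deriv (φ s) x) t = p1 (p2 Φ) (t, x) := by
    intro t x
    rw [show (fun s => deriv (φ s) x) = fun s => p2 Φ (s, x) from funext fun s => g1 s x]
    exact (hasDerivAt_sect1 (p2_smooth hφ) t x).deriv
  have g4 : ∀ t x : ℝ, deriv (fun s => deriv (fun r => deriv (φ r) x) s) t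
      = p1 (p1 (p2 Φ)) (t, x) := by
    intro t x
    have hinner : (fun s => deriv (fun r => deriv (φ r) x) s) = fun s => p1 (p2 Φ) (s, x) := by
      funext s
      exact g3 s x
    rw [hinner]
    exact (hasDerivAt_sect1 (p1_smooth (p2_smooth hφ)) t x).deriv
  have hpos' : ∀ t ∈ I, ∀ x : ℝ, 0 < p2 Φ (t, x) := by
    intro t ht x
    rw [← g1]
    exact hpos t ht x
  -- g_t = u_x(t, Φ) * g on I
  have hb : ∀ t ∈ I, ∀ x : ℝ, p1 (p2 Φ) (t, x) = p2 V (t, Φ (t, x)) * p2 Φ (t, x) := by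
    intro t ht x
    rw [p_swap hφ (t, x)]
    have heq : (fun y => p1 Φ (t, y)) = fun y => V (t, Φ (t, y)) :=
      funext fun y => ha t ht y
    have hγ : HasDerivAt (fun y : ℝ => (t, Φ (t, y))) ((0:ℝ), p2 Φ (t, x)) x :=
      HasDerivAt.prodMk (hasDerivAt_const x t) (hasDerivAt_sect2 hφ t x)
    have hd2 : HasDerivAt (fun y => V (t, Φ (t, y)))
        (0 * p1 V (t, Φ (t, x)) + p2 Φ (t, x) * p2 V (t, Φ (t, x))) x :=
      hasDerivAt_comp' hu hγ
    have : p2 (p1 Φ) (t, x) = deriv (fun y => p1 Φ (t, y)) x :=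
      (hasDerivAt_sect2 (p1_smooth hφ) t x).deriv.symm
    rw [this, heq, hd2.deriv]
    ring
  -- g_tt on I
  have hc : ∀ t ∈ I, ∀ x : ℝ, p1 (p1 (p2 Φ)) (t, x)
      = ((1 + α) / 2) * (p2 V (t, Φ (t, x))) ^ 2 * p2 Φ (t, x) := by
    intro t ht x
    have hev : (fun s => p1 (p2 Φ) (s, x))
        =ᶠ[nhds t] fun s => p2 V (s, Φ (s, x)) * p2 Φ (s, x) := by
      filter_upwards [hIo.mem_nhds ht] with s hs
      exact hb s hs x
    have hL : p1 (p1 (p2 Φ)) (t, x) = deriv (fun s => p1 (p2 Φ) (s, x)) t :=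
      (hasDerivAt_sect1 (p1_smooth (p2_smooth hφ)) t x).deriv.symm
    rw [hL, hev.deriv_eq]
    have hγ : HasDerivAt (fun s : ℝ => (s, Φ (s, x))) ((1:ℝ), p1 Φ (t, x)) t :=
      HasDerivAt.prodMk (hasDerivAt_id t) (hasDerivAt_sect1 hφ t x)
    have hP : HasDerivAt (fun s => p2 V (s, Φ (s, x)))
        (1 * p1 (p2 V) (t, Φ (t, x)) + p1 Φ (t, x) * p2 (p2 V) (t, Φ (t, x))) t :=
      hasDerivAt_comp' (p2_smooth hu) hγ
    have hQ : HasDerivAt (fun s => p2 Φ (s, x)) (p1 (p2 Φ) (t, x)) t :=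
      hasDerivAt_sect1 (p2_smooth hφ) t x
    rw [(show HasDerivAt (fun s => p2 V (s, Φ (s, x)) * p2 Φ (s, x)) _ t from hP.mul hQ).deriv]
    have hk := key t ht (Φ (t, x))
    have hA := ha t ht x
    have hB := hb t ht x
    rw [hA, hB]
    linear_combination (p2 Φ (t, x)) * hk
  refine ⟨?_, ?_⟩
  · intro t ht x
    rw [g1, g4, g3, hc t ht x, hb t ht x]
    ring
  · intro hα t ht x
    set c : ℝ := (1 - α) / 2 with hcdef
    have hfun : (fun r => (deriv (φ r) x) ^ c) = fun r => (p2 Φ (r, x)) ^ c := by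
      funext r
      rw [g1]
    simp only [hfun]
    have hR : ∀ s ∈ I, deriv (fun r => (p2 Φ (r, x)) ^ c) s
        = p1 (p2 Φ) (s, x) * c * (p2 Φ (s, x)) ^ (c - 1) := by
      intro s hs
      exact ((hasDerivAt_sect1 (p2_smooth hφ) s x).rpow_const
        (Or.inl (hpos' s hs x).ne')).deriv
    have hev : (fun s => deriv (fun r => (p2 Φ (r, x)) ^ c) s)
        =ᶠ[nhds t] fun s => p1 (p2 Φ) (s, x) * c * (p2 Φ (s, x)) ^ (c - 1) := by
      filter_upwards [hIo.mem_nhds ht] with s hs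
      exact hR s hs
    rw [hev.deriv_eq]
    have h1' : HasDerivAt (fun s => p1 (p2 Φ) (s, x) * c) (p1 (p1 (p2 Φ)) (t, x) * c) t :=
      (hasDerivAt_sect1 (p1_smooth (p2_smooth hφ)) t x).mul_const c
    have h2' : HasDerivAt (fun s => (p2 Φ (s, x)) ^ (c - 1))
        (p1 (p2 Φ) (t, x) * (c - 1) * (p2 Φ (t, x)) ^ (c - 1 - 1)) t :=
      (hasDerivAt_sect1 (p2_smooth hφ) t x).rpow_const (Or.inl (hpos' t ht x).ne')
    rw [(show HasDerivAt (fun s => p1 (p2 Φ) (s, x) * c * (p2 Φ (s, x)) ^ (c - 1)) _ t from h1'.mul h2').deriv]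
    have hG : (0:ℝ) < p2 Φ (t, x) := hpos' t ht x
    have hpow : (p2 Φ (t, x)) ^ (c - 1) = (p2 Φ (t, x)) ^ (c - 1 - 1) * p2 Φ (t, x) := by
      have := Real.rpow_add_one hG.ne' (c - 1 - 1)
      rw [show c - 1 - 1 + 1 = c - 1 by ring] at this
      exact this
    rw [hc t ht x, hb t ht x, hpow]
    have hca : (1 + α) / 2 = 1 - c := by rw [hcdef]; ring
    rw [hca]
    ring
end

section
/- Let n ≥ 3 and α ∈ ℝ with α ∉ {−1, 0, 1}. Then there exists no smooth assignment p ↦ g_p of positive-definite symmetric bilinear forms on H (a Riemannian metric on the open simplex Δ) such that the α-connection is compatible with g, i.e. such that for all smooth vector fields X, Y, Z : Δ → H one has D( g(Y,Z) )[X] (p) = g_p( (∇^{(α)}_X Y)(p), Z(p) ) + g_p( Y(p), (∇^{(α)}_X Z)(p) ) for all p ∈ Δ. In other words, for α ∉ {−1,0,1} the Amari–Čencov α-connection on the probability simplex is a non-metric affine connection. -/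
open scoped BigOperators

/-- The open probability simplex `Δ = {p : p_i > 0, Σ p_i = 1}`. -/
def probSimplex (n : ℕ) : Set (Fin n → ℝ) :=
  {p | (∀ i, 0 < p i) ∧ ∑ i, p i = 1}

/-- The Fisher–Rao metric `G_p(a,b) = Σ_i a_i b_i / p_i`. -/
noncomputable def fisherRao (n : ℕ) (p a b : Fin n → ℝ) : ℝ :=
  ∑ i, a i * b i / p i

/-- A smooth vector field on the simplex, realized as a smooth map on the ambient space
with values in the hyperplane `H = {v : Σ_i v_i = 0}`. -/
def IsTangentVF (n : ℕ) (X : (Fin n → ℝ) → (Fin n → ℝ)) : Prop :=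
  ContDiff ℝ (⊤ : ℕ∞) X ∧ ∀ p, ∑ i, X p i = 0

/-- The Amari–Čencov α-connection on the simplex. -/
noncomputable def alphaConn (α : ℝ) (n : ℕ) (X Y : (Fin n → ℝ) → (Fin n → ℝ)) :
    (Fin n → ℝ) → (Fin n → ℝ) :=
  fun p => fderiv ℝ Y p (X p)
    - ((1 + α) / 2) • ((fun i => X p i * Y p i / p i) - fisherRao n p (X p) (Y p) • p)

/-- The bilinear form on `H` associated to a matrix field `g`. -/
noncomputable def matForm (n : ℕ) (g : (Fin n → ℝ) → Matrix (Fin n) (Fin n) ℝ)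
    (p a b : Fin n → ℝ) : ℝ :=
  ∑ i, ∑ j, a i * g p i j * b j


noncomputable def Tsum (n : ℕ) (p x y z : Fin n → ℝ) : ℝ :=
  ∑ i, x i * y i * z i / p i ^ 2

noncomputable def Gam (n : ℕ) (c : ℝ) (q x y : Fin n → ℝ) : Fin n → ℝ :=
  fun i => c * (x i * y i / q i - fisherRao n q x y * q i)

noncomputable def dGam (n : ℕ) (c : ℝ) (p w x y : Fin n → ℝ) : Fin n → ℝ :=
  fun i => c * (-(x i * y i * w i) / p i ^ 2 + Tsum n p x y w * p i - fisherRao n p x y * w i)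

section Alg
variable {n : ℕ} (g : (Fin n → ℝ) → Matrix (Fin n) (Fin n) ℝ) (p q a b x y z w : Fin n → ℝ) (c r s u : ℝ)

lemma fisherRao_comm : fisherRao n p a b = fisherRao n p b a := by
  exact Finset.sum_congr rfl fun i _ => by ring

lemma fisherRao_add_left : fisherRao n p (a + b) x = fisherRao n p a x + fisherRao n p b x := by
  unfold fisherRao
  rw [← Finset.sum_add_distrib]
  exact Finset.sum_congr rfl fun i _ => by simp [Pi.add_apply]; ring

lemma fisherRao_add_right : fisherRao n p x (a + b) = fisherRao n p x a + fisherRao n p x b := by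
  unfold fisherRao
  rw [← Finset.sum_add_distrib]
  exact Finset.sum_congr rfl fun i _ => by simp [Pi.add_apply]; ring

lemma Tsum_perm1 : Tsum n p x y w = Tsum n p w y x :=
  Finset.sum_congr rfl fun i _ => by ring

lemma Tsum_perm2 : Tsum n p x y w = Tsum n p x w y :=
  Finset.sum_congr rfl fun i _ => by ring

lemma matForm_add_left : matForm n g p (a + b) z = matForm n g p a z + matForm n g p b z := by
  unfold matForm
  rw [← Finset.sum_add_distrib]
  refine Finset.sum_congr rfl fun i _ => ?_
  rw [← Finset.sum_add_distrib]
  exact Finset.sum_congr rfl fun j _ => by simp [Pi.add_apply]; ring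

lemma matForm_add_right : matForm n g p z (a + b) = matForm n g p z a + matForm n g p z b := by
  unfold matForm
  rw [← Finset.sum_add_distrib]
  refine Finset.sum_congr rfl fun i _ => ?_
  rw [← Finset.sum_add_distrib]
  exact Finset.sum_congr rfl fun j _ => by simp [Pi.add_apply]; ring

lemma matForm_neg_left : matForm n g p (-a) z = -matForm n g p a z := by
  unfold matForm
  rw [← Finset.sum_neg_distrib]
  refine Finset.sum_congr rfl fun i _ => ?_
  rw [← Finset.sum_neg_distrib]
  exact Finset.sum_congr rfl fun j _ => by simp [Pi.neg_apply]

lemma matForm_neg_right : matForm n g p z (-a) = -matForm n g p z a := by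
  unfold matForm
  rw [← Finset.sum_neg_distrib]
  refine Finset.sum_congr rfl fun i _ => ?_
  rw [← Finset.sum_neg_distrib]
  exact Finset.sum_congr rfl fun j _ => by simp [Pi.neg_apply]

lemma matForm_sub_left : matForm n g p (a - b) z = matForm n g p a z - matForm n g p b z := by
  rw [sub_eq_add_neg, matForm_add_left, matForm_neg_left, sub_eq_add_neg]

lemma matForm_sub_right : matForm n g p z (a - b) = matForm n g p z a - matForm n g p z b := by
  rw [sub_eq_add_neg, matForm_add_right, matForm_neg_right, sub_eq_add_neg]

lemma matForm_zero_right : matForm n g p a (fun _ => 0) = 0 := by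
  unfold matForm; simp

lemma matForm_comb_left :
    matForm n g p (fun i => r * (s * x i - u * w i)) z
      = r * (s * matForm n g p x z - u * matForm n g p w z) := by
  unfold matForm
  have h : ∀ i ∈ Finset.univ, ∑ j, (r * (s * x i - u * w i)) * g p i j * z j
      = ∑ j, ((r*s) * (x i * g p i j * z j) - (r*u) * (w i * g p i j * z j)) :=
    fun i _ => Finset.sum_congr rfl fun j _ => by ring
  rw [Finset.sum_congr rfl h]
  simp only [Finset.sum_sub_distrib, ← Finset.mul_sum]
  ring

lemma matForm_comb_right :
    matForm n g p z (fun i => r * (s * x i - u * w i))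
      = r * (s * matForm n g p z x - u * matForm n g p z w) := by
  unfold matForm
  have h : ∀ i ∈ Finset.univ, ∑ j, z i * g p i j * (r * (s * x j - u * w j))
      = ∑ j, ((r*s) * (z i * g p i j * x j) - (r*u) * (z i * g p i j * w j)) :=
    fun i _ => Finset.sum_congr rfl fun j _ => by ring
  rw [Finset.sum_congr rfl h]
  simp only [Finset.sum_sub_distrib, ← Finset.mul_sum]
  ring

lemma Gam_sum_zero (hq : ∑ i, q i = 1) : ∑ i, Gam n c q x y i = 0 := by
  unfold Gam
  rw [← Finset.mul_sum, Finset.sum_sub_distrib]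
  have h1 : ∑ i, x i * y i / q i = fisherRao n q x y := rfl
  rw [h1, ← Finset.mul_sum, hq, mul_one, sub_self, mul_zero]

lemma FR_Gam (hq : ∀ i, q i ≠ 0) (ha : ∑ i, a i = 0) :
    fisherRao n q a (Gam n c q x y) = c * Tsum n q a x y := by
  unfold fisherRao Gam Tsum
  have h : ∀ i ∈ Finset.univ, a i * (c * (x i * y i / q i - fisherRao n q x y * q i)) / q i
      = c * (a i * x i * y i / q i ^ 2) - (c * fisherRao n q x y) * a i := by
    intro i _
    field_simp [hq i]
  rw [Finset.sum_congr rfl h, Finset.sum_sub_distrib, ← Finset.mul_sum, ← Finset.mul_sum, ha,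
    mul_zero, sub_zero]

lemma CVI (hq1 : ∑ i, p i = 1) (hp : ∀ i, p i ≠ 0) (hw : ∑ i, w i = 0) (hx : ∑ i, x i = 0) :
    (dGam n c p w x y - dGam n c p x w y + Gam n c p x (Gam n c p w y)
      - Gam n c p w (Gam n c p x y))
    = fun i => (c - c^2) * (fisherRao n p w y * x i - fisherRao n p x y * w i) := by
  funext i
  have hfx : fisherRao n p x (Gam n c p w y) = c * Tsum n p x w y := FR_Gam p x w y c hp hx
  have hfw : fisherRao n p w (Gam n c p x y) = c * Tsum n p w x y := FR_Gam p w x y c hp hw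
  have hT1 : Tsum n p x y w = Tsum n p w y x := Tsum_perm1 p x y w
  have hT2 : Tsum n p x w y = Tsum n p w x y := by
    exact Finset.sum_congr rfl fun i _ => by ring
  simp only [Pi.sub_apply, Pi.add_apply, dGam, Gam, hfx, hfw, hT1, hT2]
  field_simp [hp i]
  ring
end Alg

section Calc
variable {n : ℕ} {g : (Fin n → ℝ) → Matrix (Fin n) (Fin n) ℝ}

lemma line_hasDerivAt (p w : Fin n → ℝ) : HasDerivAt (fun t : ℝ => p + t • w) w 0 := by
  have h : HasDerivAt (fun t : ℝ => t • w) ((1:ℝ) • w) 0 := (hasDerivAt_id 0).smul_const w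
  simpa using h.const_add p

lemma comp_line {F : Type*} [NormedAddCommGroup F] [NormedSpace ℝ F]
    {f : (Fin n → ℝ) → F} {f' : (Fin n → ℝ) →L[ℝ] F} {p w : Fin n → ℝ}
    (hf : HasFDerivAt f f' p) :
    HasDerivAt (fun t : ℝ => f (p + t • w)) (f' w) 0 := by
  have h0 : p + (0:ℝ) • w = p := by simp
  have hf' : HasFDerivAt f f' ((fun t : ℝ => p + t • w) 0) := by
    simpa [h0] using hf
  exact hf'.comp_hasDerivAt 0 (line_hasDerivAt p w)

lemma phi_contDiff (hg : ∀ i j, ContDiff ℝ (⊤ : ℕ∞) (fun p => g p i j)) (a b : Fin n → ℝ) :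
    ContDiff ℝ (⊤ : ℕ∞) (fun q => matForm n g q a b) := by
  unfold matForm
  exact ContDiff.sum fun i _ => ContDiff.sum fun j _ =>
    (contDiff_const.mul (hg i j)).mul contDiff_const

lemma phi_line (hg : ∀ i j, ContDiff ℝ (⊤ : ℕ∞) (fun p => g p i j)) (p w a b : Fin n → ℝ) :
    HasDerivAt (fun t : ℝ => matForm n g (p + t • w) a b)
      (fderiv ℝ (fun q => matForm n g q a b) p w) 0 :=
  comp_line (((phi_contDiff hg a b).differentiable (by simp) p).hasFDerivAt)

lemma FR_line (p : Fin n → ℝ) (hp : ∀ i, p i ≠ 0) (a b w : Fin n → ℝ) :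
    HasDerivAt (fun t : ℝ => fisherRao n (p + t • w) a b) (-(Tsum n p a b w)) 0 := by
  unfold fisherRao Tsum
  rw [← Finset.sum_neg_distrib]
  apply HasDerivAt.fun_sum
  intro i _
  have hden : HasDerivAt (fun t : ℝ => p i + t * w i) (w i) 0 := by
    simpa using ((hasDerivAt_id (0:ℝ)).mul_const (w i)).const_add (p i)
  have hdiv := (hasDerivAt_const (0:ℝ) (a i * b i)).fun_div hden (by simpa using hp i)
  have hfun : (fun t : ℝ => a i * b i / (p i + t * w i))
      = fun t : ℝ => a i * b i / ((p + t • w) i) := by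
    funext t; simp [Pi.add_apply, Pi.smul_apply, smul_eq_mul]
  rw [hfun] at hdiv
  have e : (0 * (p i + 0 * w i) - a i * b i * w i) / (p i + 0 * w i) ^ 2
      = -(a i * b i * w i / p i ^ 2) := by
    simp only [zero_mul, add_zero, zero_sub]
    ring
  exact e ▸ hdiv

lemma Gam_line (c : ℝ) (p : Fin n → ℝ) (hp : ∀ i, p i ≠ 0) (w x y : Fin n → ℝ) (i : Fin n) :
    HasDerivAt (fun t : ℝ => Gam n c (p + t • w) x y i) (dGam n c p w x y i) 0 := by
  unfold Gam dGam
  have hden : HasDerivAt (fun t : ℝ => p i + t * w i) (w i) 0 := by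
    simpa using ((hasDerivAt_id (0:ℝ)).mul_const (w i)).const_add (p i)
  have hdiv := (hasDerivAt_const (0:ℝ) (x i * y i)).fun_div hden (by simpa using hp i)
  have hFR := FR_line p hp x y w
  have hprod := hFR.fun_mul hden
  have h := (hdiv.fun_sub hprod).const_mul c
  have hfun : (fun t : ℝ => c * (x i * y i / (p i + t * w i)
        - fisherRao n (p + t • w) x y * (p i + t * w i)))
      = fun t : ℝ => c * (x i * y i / ((p + t • w) i)
        - fisherRao n (p + t • w) x y * ((p + t • w) i)) := by
    funext t; simp [Pi.add_apply, Pi.smul_apply, smul_eq_mul]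
  rw [hfun] at h
  have e : c * ((0 * (p i + 0 * w i) - x i * y i * w i) / (p i + 0 * w i) ^ 2
      - (-Tsum n p x y w * (p i + 0 * w i) + fisherRao n (p + (0:ℝ) • w) x y * w i))
      = c * (-(x i * y i * w i) / p i ^ 2 + Tsum n p x y w * p i
          - fisherRao n p x y * w i) := by
    simp only [zero_smul, add_zero, zero_mul, zero_sub]
    ring
  exact e ▸ h

lemma Dg_eq_sum (hg : ∀ i j, ContDiff ℝ (⊤ : ℕ∞) (fun p => g p i j)) (p w a b : Fin n → ℝ) :
    fderiv ℝ (fun q => matForm n g q a b) p w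
      = ∑ i, ∑ j, a i * (fderiv ℝ (fun q => g q i j) p w) * b j := by
  have h1 := phi_line hg p w a b
  have h2 : HasDerivAt (fun t : ℝ => matForm n g (p + t • w) a b)
      (∑ i, ∑ j, a i * (fderiv ℝ (fun q => g q i j) p w) * b j) 0 := by
    unfold matForm
    apply HasDerivAt.fun_sum
    intro i _
    apply HasDerivAt.fun_sum
    intro j _
    have hgl : HasDerivAt (fun t : ℝ => g (p + t • w) i j)
        (fderiv ℝ (fun q => g q i j) p w) 0 :=
      comp_line (((hg i j).differentiable (by simp) p).hasFDerivAt)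
    simpa [mul_comm, mul_assoc, mul_left_comm] using (hgl.const_mul (a i)).mul_const (b j)
  exact h1.unique h2

lemma bpl (hg : ∀ i j, ContDiff ℝ (⊤ : ℕ∞) (fun p => g p i j)) (p w : Fin n → ℝ)
    {A B : ℝ → Fin n → ℝ} {A' B' : Fin n → ℝ}
    (hA : ∀ i, HasDerivAt (fun t => A t i) (A' i) 0)
    (hB : ∀ j, HasDerivAt (fun t => B t j) (B' j) 0) :
    HasDerivAt (fun t : ℝ => matForm n g (p + t • w) (A t) (B t))
      (matForm n g p A' (B 0) + matForm n g p (A 0) B'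
        + fderiv ℝ (fun q => matForm n g q (A 0) (B 0)) p w) 0 := by
  rw [Dg_eq_sum hg]
  have hterm : ∀ i j, HasDerivAt (fun t : ℝ => A t i * g (p + t • w) i j * B t j)
      (A' i * g p i j * B 0 j + A 0 i * (fderiv ℝ (fun q => g q i j) p w) * B 0 j
        + A 0 i * g p i j * B' j) 0 := by
    intro i j
    have hgl : HasDerivAt (fun t : ℝ => g (p + t • w) i j)
        (fderiv ℝ (fun q => g q i j) p w) 0 :=
      comp_line (((hg i j).differentiable (by simp) p).hasFDerivAt)
    have h := ((hA i).fun_mul hgl).fun_mul (hB j)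
    refine h.congr_deriv ?_
    simp only [zero_smul, add_zero]
    ring
  have h2 : HasDerivAt (fun t : ℝ => ∑ i, ∑ j, A t i * g (p + t • w) i j * B t j)
      (∑ i, ∑ j, (A' i * g p i j * B 0 j
        + A 0 i * (fderiv ℝ (fun q => g q i j) p w) * B 0 j
        + A 0 i * g p i j * B' j)) 0 :=
    HasDerivAt.fun_sum fun i _ => HasDerivAt.fun_sum fun j _ => hterm i j
  have h3 : (fun t : ℝ => matForm n g (p + t • w) (A t) (B t))
      = fun t : ℝ => ∑ i, ∑ j, A t i * g (p + t • w) i j * B t j := rfl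
  rw [h3]
  convert h2 using 1
  simp only [Finset.sum_add_distrib, matForm]
  ring

end Calc

section Star
variable {n : ℕ} {g : (Fin n → ℝ) → Matrix (Fin n) (Fin n) ℝ} {α : ℝ}

lemma alphaConn_const (α : ℝ) (n : ℕ) (w a p : Fin n → ℝ) :
    alphaConn α n (fun _ => w) (fun _ => a) p = -(Gam n ((1 + α) / 2) p w a) := by
  unfold alphaConn Gam
  funext i
  simp [fisherRao]

lemma star
    (hcompat : ∀ X Y Z : (Fin n → ℝ) → (Fin n → ℝ),
        IsTangentVF n X → IsTangentVF n Y → IsTangentVF n Z →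
        ∀ p ∈ probSimplex n,
          fderiv ℝ (fun q => matForm n g q (Y q) (Z q)) p (X p)
            = matForm n g p (alphaConn α n X Y p) (Z p)
              + matForm n g p (Y p) (alphaConn α n X Z p))
    (p : Fin n → ℝ) (hp : p ∈ probSimplex n) (w a b : Fin n → ℝ)
    (hw : ∑ i, w i = 0) (ha : ∑ i, a i = 0) (hb : ∑ i, b i = 0) :
    fderiv ℝ (fun q => matForm n g q a b) p w
      = -(matForm n g p (Gam n ((1 + α) / 2) p w a) b)
        - matForm n g p a (Gam n ((1 + α) / 2) p w b) := by
  have h := hcompat (fun _ => w) (fun _ => a) (fun _ => b)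
    ⟨contDiff_const, fun _ => hw⟩ ⟨contDiff_const, fun _ => ha⟩ ⟨contDiff_const, fun _ => hb⟩ p hp
  rw [alphaConn_const, alphaConn_const, matForm_neg_left, matForm_neg_right] at h
  rw [show (fun q => matForm n g q a b) = (fun q => matForm n g q ((fun _ => a) q) ((fun _ => b) q)) from rfl]
  rw [h]
  ring

lemma eventually_mem (p : Fin n → ℝ) (hp : p ∈ probSimplex n) (w : Fin n → ℝ)
    (hw : ∑ i, w i = 0) :
    ∀ᶠ t in nhds (0:ℝ), p + t • w ∈ probSimplex n := by
  have hpos : ∀ᶠ t in nhds (0:ℝ), ∀ i, 0 < (p + t • w) i := by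
    rw [Filter.eventually_all]
    intro i
    have hc : ContinuousAt (fun t : ℝ => p i + t * w i) 0 := by fun_prop
    have h0 : (0:ℝ) < p i + 0 * w i := by simpa using hp.1 i
    have := hc.eventually (eventually_gt_nhds h0)
    filter_upwards [this] with t ht
    simpa [Pi.add_apply, Pi.smul_apply, smul_eq_mul] using ht
  filter_upwards [hpos] with t ht
  refine ⟨ht, ?_⟩
  have : ∑ i, (p i + t * w i) = (∑ i, p i) + t * ∑ i, w i := by
    rw [Finset.sum_add_distrib, Finset.mul_sum]
  simp only [Pi.add_apply, Pi.smul_apply, smul_eq_mul]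
  rw [this, hp.2, hw, mul_zero, add_zero]

end Star

section Main
variable {n : ℕ} {g : (Fin n → ℝ) → Matrix (Fin n) (Fin n) ℝ} {α : ℝ}

lemma matForm_zero_left (p a : Fin n → ℝ) : matForm n g p (fun _ => 0) a = 0 := by
  unfold matForm; simp

lemma fpp (hg : ∀ i j, ContDiff ℝ (⊤ : ℕ∞) (fun p => g p i j))
    (hcompat : ∀ X Y Z : (Fin n → ℝ) → (Fin n → ℝ),
        IsTangentVF n X → IsTangentVF n Y → IsTangentVF n Z →
        ∀ p ∈ probSimplex n,
          fderiv ℝ (fun q => matForm n g q (Y q) (Z q)) p (X p)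
            = matForm n g p (alphaConn α n X Y p) (Z p)
              + matForm n g p (Y p) (alphaConn α n X Z p))
    (p : Fin n → ℝ) (hp : p ∈ probSimplex n) (w x y z : Fin n → ℝ)
    (hw : ∑ i, w i = 0) (hx : ∑ i, x i = 0) (hy : ∑ i, y i = 0) (hz : ∑ i, z i = 0) :
    fderiv ℝ (fderiv ℝ (fun q => matForm n g q y z)) p x w
      = -(matForm n g p (dGam n ((1+α)/2) p x w y) z)
        + matForm n g p (Gam n ((1+α)/2) p x (Gam n ((1+α)/2) p w y)) z
        + matForm n g p (Gam n ((1+α)/2) p w y) (Gam n ((1+α)/2) p x z)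
        - matForm n g p y (dGam n ((1+α)/2) p x w z)
        + matForm n g p (Gam n ((1+α)/2) p x y) (Gam n ((1+α)/2) p w z)
        + matForm n g p y (Gam n ((1+α)/2) p x (Gam n ((1+α)/2) p w z)) := by
  have hpne : ∀ i, p i ≠ 0 := fun i => ne_of_gt (hp.1 i)
  have hf : ContDiff ℝ (⊤ : ℕ∞) (fun q => matForm n g q y z) := phi_contDiff hg y z
  have hf's : ContDiff ℝ (⊤ : ℕ∞) (fderiv ℝ (fun q => matForm n g q y z)) := hf.fderiv_right (by simp)
  have hf'' : HasFDerivAt (fderiv ℝ (fun q => matForm n g q y z))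
      (fderiv ℝ (fderiv ℝ (fun q => matForm n g q y z)) p) p :=
    (hf's.differentiable (by simp) p).hasFDerivAt
  have h1 : HasDerivAt (fun t : ℝ => fderiv ℝ (fun q => matForm n g q y z) (p + t • x))
      (fderiv ℝ (fderiv ℝ (fun q => matForm n g q y z)) p x) 0 := comp_line hf''
  have h2 : HasDerivAt (fun t : ℝ => fderiv ℝ (fun q => matForm n g q y z) (p + t • x) w)
      (fderiv ℝ (fderiv ℝ (fun q => matForm n g q y z)) p x w) 0 := by
    simpa using h1.clm_apply (hasDerivAt_const 0 w)
  have hev := eventually_mem p hp x hx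
  have heq : (fun t : ℝ => fderiv ℝ (fun q => matForm n g q y z) (p + t • x) w) =ᶠ[nhds (0:ℝ)]
      (fun t : ℝ => -(matForm n g (p + t • x) (Gam n ((1+α)/2) (p + t • x) w y) z)
         - matForm n g (p + t • x) y (Gam n ((1+α)/2) (p + t • x) w z)) := by
    filter_upwards [hev] with t ht
    exact star hcompat _ ht w y z hw hy hz
  have h3 := h2.congr_of_eventuallyEq heq.symm
  have hb1 := bpl hg p x (A := fun t => Gam n ((1+α)/2) (p + t • x) w y)
    (B := fun _ => z) (A' := dGam n ((1+α)/2) p x w y) (B' := fun _ => 0)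
    (fun i => Gam_line ((1+α)/2) p hpne x w y i) (fun j => hasDerivAt_const 0 (z j))
  have hb2 := bpl hg p x (A := fun _ => y)
    (B := fun t => Gam n ((1+α)/2) (p + t • x) w z) (A' := fun _ => 0)
    (B' := dGam n ((1+α)/2) p x w z)
    (fun i => hasDerivAt_const 0 (y i)) (fun j => Gam_line ((1+α)/2) p hpne x w z j)
  simp only [zero_smul, add_zero] at hb1 hb2
  have hexp := (hb1.neg).sub hb2
  have hval := h3.unique hexp
  rw [hval]
  rw [matForm_zero_right, matForm_zero_left,
    star hcompat p hp x (Gam n ((1+α)/2) p w y) z hx (Gam_sum_zero p w y ((1+α)/2) hp.2) hz,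
    star hcompat p hp x y (Gam n ((1+α)/2) p w z) hx hy (Gam_sum_zero p w z ((1+α)/2) hp.2)]
  ring

end Main

section Dag
variable {n : ℕ} {g : (Fin n → ℝ) → Matrix (Fin n) (Fin n) ℝ} {α : ℝ}

lemma dagger (hg : ∀ i j, ContDiff ℝ (⊤ : ℕ∞) (fun p => g p i j))
    (hcompat : ∀ X Y Z : (Fin n → ℝ) → (Fin n → ℝ),
        IsTangentVF n X → IsTangentVF n Y → IsTangentVF n Z →
        ∀ p ∈ probSimplex n,
          fderiv ℝ (fun q => matForm n g q (Y q) (Z q)) p (X p)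
            = matForm n g p (alphaConn α n X Y p) (Z p)
              + matForm n g p (Y p) (alphaConn α n X Z p))
    (hC : (1+α)/2 - ((1+α)/2)^2 ≠ 0)
    (p : Fin n → ℝ) (hp : p ∈ probSimplex n) (w x y z : Fin n → ℝ)
    (hw : ∑ i, w i = 0) (hx : ∑ i, x i = 0) (hy : ∑ i, y i = 0) (hz : ∑ i, z i = 0) :
    fisherRao n p w y * matForm n g p x z - fisherRao n p x y * matForm n g p w z
      + fisherRao n p w z * matForm n g p y x - fisherRao n p x z * matForm n g p y w = 0 := by
  have hpne : ∀ i, p i ≠ 0 := fun i => ne_of_gt (hp.1 i)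
  have h1 := fpp hg hcompat p hp w x y z hw hx hy hz
  have h2 := fpp hg hcompat p hp x w y z hx hw hy hz
  have hf : ContDiff ℝ (⊤ : ℕ∞) (fun q => matForm n g q y z) := phi_contDiff hg y z
  have hf' : ∀ q, HasFDerivAt (fun q => matForm n g q y z)
      (fderiv ℝ (fun q => matForm n g q y z) q) q :=
    fun q => (hf.differentiable (by simp) q).hasFDerivAt
  have hf'' : HasFDerivAt (fderiv ℝ (fun q => matForm n g q y z))
      (fderiv ℝ (fderiv ℝ (fun q => matForm n g q y z)) p) p :=
    ((hf.fderiv_right (m := (⊤ : ℕ∞)) (by simp)).differentiable (by simp) p).hasFDerivAt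
  have hsym := second_derivative_symmetric hf' hf'' x w
  rw [h1, h2] at hsym
  have hVy := CVI (p := p) (x := x) (y := y) (w := w) (c := (1+α)/2) hp.2 hpne hw hx
  have hVz := CVI (p := p) (x := x) (y := z) (w := w) (c := (1+α)/2) hp.2 hpne hw hx
  have hcomb1 : matForm n g p
      (dGam n ((1+α)/2) p w x y - dGam n ((1+α)/2) p x w y
        + Gam n ((1+α)/2) p x (Gam n ((1+α)/2) p w y)
        - Gam n ((1+α)/2) p w (Gam n ((1+α)/2) p x y)) z
      = matForm n g p (dGam n ((1+α)/2) p w x y) z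
        - matForm n g p (dGam n ((1+α)/2) p x w y) z
        + matForm n g p (Gam n ((1+α)/2) p x (Gam n ((1+α)/2) p w y)) z
        - matForm n g p (Gam n ((1+α)/2) p w (Gam n ((1+α)/2) p x y)) z := by
    rw [matForm_sub_left, matForm_add_left, matForm_sub_left]
  have hcomb2 : matForm n g p y
      (dGam n ((1+α)/2) p w x z - dGam n ((1+α)/2) p x w z
        + Gam n ((1+α)/2) p x (Gam n ((1+α)/2) p w z)
        - Gam n ((1+α)/2) p w (Gam n ((1+α)/2) p x z))
      = matForm n g p y (dGam n ((1+α)/2) p w x z)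
        - matForm n g p y (dGam n ((1+α)/2) p x w z)
        + matForm n g p y (Gam n ((1+α)/2) p x (Gam n ((1+α)/2) p w z))
        - matForm n g p y (Gam n ((1+α)/2) p w (Gam n ((1+α)/2) p x z)) := by
    rw [matForm_sub_right, matForm_add_right, matForm_sub_right]
  rw [hVy, matForm_comb_left] at hcomb1
  rw [hVz, matForm_comb_right] at hcomb2
  have hkey : ((1+α)/2 - ((1+α)/2)^2)
      * ((fisherRao n p w y * matForm n g p x z - fisherRao n p x y * matForm n g p w z)
        + (fisherRao n p w z * matForm n g p y x - fisherRao n p x z * matForm n g p y w)) = 0 := by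
    nlinarith [hsym, hcomb1, hcomb2]
  rcases mul_eq_zero.mp hkey with h | h
  · exact absurd h hC
  · linarith

lemma E1 (hg : ∀ i j, ContDiff ℝ (⊤ : ℕ∞) (fun p => g p i j))
    (hcompat : ∀ X Y Z : (Fin n → ℝ) → (Fin n → ℝ),
        IsTangentVF n X → IsTangentVF n Y → IsTangentVF n Z →
        ∀ p ∈ probSimplex n,
          fderiv ℝ (fun q => matForm n g q (Y q) (Z q)) p (X p)
            = matForm n g p (alphaConn α n X Y p) (Z p)
              + matForm n g p (Y p) (alphaConn α n X Z p))
    (hC : (1+α)/2 - ((1+α)/2)^2 ≠ 0)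
    (p : Fin n → ℝ) (hp : p ∈ probSimplex n) (a b : Fin n → ℝ)
    (ha : ∑ i, a i = 0) (hb : ∑ i, b i = 0) :
    fisherRao n p a a * matForm n g p b b = fisherRao n p b b * matForm n g p a a := by
  have h := dagger hg hcompat hC p hp a b a b ha hb ha hb
  have hc := fisherRao_comm (n := n) p b a
  rw [hc] at h
  linarith

lemma propE (hg : ∀ i j, ContDiff ℝ (⊤ : ℕ∞) (fun p => g p i j))
    (hsymm : ∀ p ∈ probSimplex n, ∀ a b : Fin n → ℝ, (∑ i, a i = 0) → (∑ i, b i = 0) →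
        matForm n g p a b = matForm n g p b a)
    (hcompat : ∀ X Y Z : (Fin n → ℝ) → (Fin n → ℝ),
        IsTangentVF n X → IsTangentVF n Y → IsTangentVF n Z →
        ∀ p ∈ probSimplex n,
          fderiv ℝ (fun q => matForm n g q (Y q) (Z q)) p (X p)
            = matForm n g p (alphaConn α n X Y p) (Z p)
              + matForm n g p (Y p) (alphaConn α n X Z p))
    (hC : (1+α)/2 - ((1+α)/2)^2 ≠ 0)
    (p : Fin n → ℝ) (hp : p ∈ probSimplex n) (v a b : Fin n → ℝ)
    (hv : ∑ i, v i = 0) (ha : ∑ i, a i = 0) (hb : ∑ i, b i = 0) :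
    matForm n g p a b * fisherRao n p v v = matForm n g p v v * fisherRao n p a b := by
  have hab : ∑ i, (a + b) i = 0 := by
    simp only [Pi.add_apply]; rw [Finset.sum_add_distrib, ha, hb, add_zero]
  have h1 := E1 hg hcompat hC p hp (a + b) v hab hv
  have h2 := E1 hg hcompat hC p hp a v ha hv
  have h3 := E1 hg hcompat hC p hp b v hb hv
  rw [fisherRao_add_left, fisherRao_add_right, fisherRao_add_right] at h1
  rw [matForm_add_left, matForm_add_right, matForm_add_right] at h1
  have hsab := hsymm p hp a b ha hb
  have hfab := fisherRao_comm (n := n) p a b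
  rw [hsab] at h1 ⊢
  rw [hfab] at h1 ⊢
  linarith

end Dag

section Fin3
variable {n : ℕ}

lemma sum3 (f : Fin n → ℝ) (i0 i1 i2 : Fin n) (h01 : i0 ≠ i1) (h02 : i0 ≠ i2)
    (h12 : i1 ≠ i2) (h : ∀ i, i ≠ i0 → i ≠ i1 → i ≠ i2 → f i = 0) :
    ∑ i, f i = f i0 + f i1 + f i2 := by
  rw [← Finset.sum_subset (Finset.subset_univ ({i0, i1, i2} : Finset (Fin n)))]
  · rw [Finset.sum_insert (by simp [h01, h02]), Finset.sum_insert (by simp [h12]),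
      Finset.sum_singleton, add_assoc]
  · intro i _ hi
    simp only [Finset.mem_insert, Finset.mem_singleton] at hi
    push_neg at hi
    exact h i hi.1 hi.2.1 hi.2.2

def vA (n : ℕ) (i0 i1 : Fin n) : Fin n → ℝ := fun i => if i = i0 then 1 else if i = i1 then -1 else 0

lemma vA_sum (i0 i1 i2 : Fin n) (h01 : i0 ≠ i1) (h02 : i0 ≠ i2) (h12 : i1 ≠ i2) :
    ∑ i, vA n i0 i1 i = 0 := by
  rw [sum3 _ i0 i1 i2 h01 h02 h12 (fun i hi0 hi1 _ => by simp [vA, hi0, hi1])]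
  simp [vA, h01.symm, h02.symm, h12.symm]

lemma vA_ne_zero (i0 i1 : Fin n) (h01 : i0 ≠ i1) : vA n i0 i1 ≠ 0 := by
  intro h
  have := congrFun h i0
  simp [vA] at this

end Fin3

theorem stmt8' (n : ℕ) (hn : 3 ≤ n) (α : ℝ) (hα : α ≠ -1 ∧ α ≠ 0 ∧ α ≠ 1) :
    ¬ ∃ g : (Fin n → ℝ) → Matrix (Fin n) (Fin n) ℝ,
      (∀ i j, ContDiff ℝ (⊤ : ℕ∞) (fun p => g p i j)) ∧
      (∀ p ∈ probSimplex n, ∀ a b : Fin n → ℝ, (∑ i, a i = 0) → (∑ i, b i = 0) →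
        matForm n g p a b = matForm n g p b a) ∧
      (∀ p ∈ probSimplex n, ∀ a : Fin n → ℝ, (∑ i, a i = 0) → a ≠ 0 →
        0 < matForm n g p a a) ∧
      (∀ X Y Z : (Fin n → ℝ) → (Fin n → ℝ),
        IsTangentVF n X → IsTangentVF n Y → IsTangentVF n Z →
        ∀ p ∈ probSimplex n,
          fderiv ℝ (fun q => matForm n g q (Y q) (Z q)) p (X p)
            = matForm n g p (alphaConn α n X Y p) (Z p)
              + matForm n g p (Y p) (alphaConn α n X Z p)) := by
  rintro ⟨g, hg, hsymm, hpos, hcompat⟩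
  -- the constant c and its nondegeneracy
  have hC : (1+α)/2 - ((1+α)/2)^2 ≠ 0 := by
    have h1 : (1+α)/2 ≠ 0 := fun h => hα.1 (by linarith)
    have h2 : 1 - (1+α)/2 ≠ 0 := fun h => hα.2.2 (by linarith)
    have := mul_ne_zero h1 h2
    intro h; apply this; linarith [h]
  -- the uniform distribution
  have hn0 : (n:ℝ) ≠ 0 := by positivity
  set p : Fin n → ℝ := fun _ => (n:ℝ)⁻¹ with hpdef
  have hp : p ∈ probSimplex n := by
    constructor
    · intro i; positivity
    · simp [hpdef, Finset.sum_const, Finset.card_univ, mul_comm, hn0]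
  have hpne : ∀ i, p i ≠ 0 := fun i => ne_of_gt (hp.1 i)
  -- the index vectors
  have h3 : (3:ℕ) ≤ n := hn
  set i0 : Fin n := ⟨0, by omega⟩
  set i1 : Fin n := ⟨1, by omega⟩
  set i2 : Fin n := ⟨2, by omega⟩
  have h01 : i0 ≠ i1 := by simp [i0, i1, Fin.ext_iff]
  have h02 : i0 ≠ i2 := by simp [i0, i2, Fin.ext_iff]
  have h12 : i1 ≠ i2 := by simp [i1, i2, Fin.ext_iff]
  set x0 : Fin n → ℝ := vA n i0 i1 with hx0def
  set u : Fin n → ℝ := vA n i1 i2 with hudef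
  have hx0sum : ∑ i, x0 i = 0 := vA_sum i0 i1 i2 h01 h02 h12
  have husum : ∑ i, u i = 0 := by
    refine vA_sum i1 i2 i0 h12 (Ne.symm h01) (Ne.symm h02)
  have hx0ne : x0 ≠ 0 := vA_ne_zero i0 i1 h01
  -- componentwise values
  have hu0 : u i0 = 0 := by simp [hudef, vA, h01, h02]
  have hu1 : u i1 = 1 := by simp [hudef, vA]
  have hu2 : u i2 = -1 := by simp [hudef, vA, h12.symm]
  have hx00 : x0 i0 = 1 := by simp [hx0def, vA]
  have hx01 : x0 i1 = -1 := by simp [hx0def, vA, h01.symm]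
  have hx02 : x0 i2 = 0 := by simp [hx0def, vA, h02.symm, h12.symm]
  -- key scalar computations at p
  have hT0 : Tsum n p x0 x0 x0 = 0 := by
    unfold Tsum
    rw [sum3 _ i0 i1 i2 h01 h02 h12 (fun i hi0 hi1 _ => by simp [hx0def, vA, hi0, hi1])]
    rw [hx00, hx01, hx02]
    ring
  have hT : Tsum n p u u x0 = -(n:ℝ)^2 := by
    unfold Tsum
    rw [sum3 _ i0 i1 i2 h01 h02 h12 (fun i _ hi1 hi2 => by simp [hudef, vA, hi1, hi2])]
    rw [hu0, hu1, hu2, hx00, hx01, hx02]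
    have hpi : p i1 = (n:ℝ)⁻¹ := rfl
    field_simp [hpi]
    simp [hpi]
  have hTne : Tsum n p u u x0 ≠ 0 := by
    rw [hT]
    exact neg_ne_zero.mpr (pow_ne_zero 2 hn0)
  have hBpos : 0 < fisherRao n p x0 x0 := by
    unfold fisherRao
    apply Finset.sum_pos'
    · exact fun i _ => div_nonneg (mul_self_nonneg _) (le_of_lt (hp.1 i))
    · refine ⟨i0, Finset.mem_univ _, ?_⟩
      rw [hx00]
      have hpi : p i0 = (n:ℝ)⁻¹ := rfl
      rw [hpi]
      positivity
  have hBne : fisherRao n p x0 x0 ≠ 0 := ne_of_gt hBpos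
  have hApos : 0 < matForm n g p x0 x0 := hpos p hp x0 hx0sum hx0ne
  -- sums of the Christoffel vectors
  have hG0sum : ∑ i, Gam n ((1+α)/2) p x0 x0 i = 0 := Gam_sum_zero p x0 x0 ((1+α)/2) hp.2
  have hG1sum : ∑ i, Gam n ((1+α)/2) p x0 u i = 0 := Gam_sum_zero p x0 u ((1+α)/2) hp.2
  -- star values
  have hstarA := star hcompat p hp x0 x0 x0 hx0sum hx0sum hx0sum
  have hstarC := star hcompat p hp x0 u u hx0sum husum husum
  -- proportionality instances
  have hm1 := propE hg hsymm hcompat hC p hp x0 (Gam n ((1+α)/2) p x0 u) u hx0sum hG1sum husum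
  have hm2 := propE hg hsymm hcompat hC p hp x0 u (Gam n ((1+α)/2) p x0 u) hx0sum husum hG1sum
  have hm3 := propE hg hsymm hcompat hC p hp x0 (Gam n ((1+α)/2) p x0 x0) x0 hx0sum hG0sum hx0sum
  have hm4 := propE hg hsymm hcompat hC p hp x0 x0 (Gam n ((1+α)/2) p x0 x0) hx0sum hx0sum hG0sum
  -- Fisher-Rao pairings with the Christoffel vectors
  have hfr1 : fisherRao n p (Gam n ((1+α)/2) p x0 u) u = ((1+α)/2) * Tsum n p u u x0 := by
    rw [fisherRao_comm, FR_Gam p u x0 u ((1+α)/2) hpne husum, Tsum_perm2 p u x0 u]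
  have hfr2 : fisherRao n p u (Gam n ((1+α)/2) p x0 u) = ((1+α)/2) * Tsum n p u u x0 := by
    rw [FR_Gam p u x0 u ((1+α)/2) hpne husum, Tsum_perm2 p u x0 u]
  have hfr3 : fisherRao n p (Gam n ((1+α)/2) p x0 x0) x0 = 0 := by
    rw [fisherRao_comm, FR_Gam p x0 x0 x0 ((1+α)/2) hpne hx0sum, hT0, mul_zero]
  have hfr4 : fisherRao n p x0 (Gam n ((1+α)/2) p x0 x0) = 0 := by
    rw [FR_Gam p x0 x0 x0 ((1+α)/2) hpne hx0sum, hT0, mul_zero]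
  -- the Γ₀–pairings vanish
  have hz3 : matForm n g p (Gam n ((1+α)/2) p x0 x0) x0 = 0 := by
    rw [hfr3, mul_zero] at hm3
    exact (mul_eq_zero.mp hm3).resolve_right hBne
  have hz4 : matForm n g p x0 (Gam n ((1+α)/2) p x0 x0) = 0 := by
    rw [hfr4, mul_zero] at hm4
    exact (mul_eq_zero.mp hm4).resolve_right hBne
  -- rewrite the propE instances
  rw [hfr1] at hm1
  rw [hfr2] at hm2
  -- the derivative comparison along the line through p in direction x0
  have hA' := phi_line hg p x0 x0 x0
  have hC' := phi_line hg p x0 u u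
  have hB' := FR_line p hpne x0 x0 x0
  have hD' := FR_line p hpne u u x0
  have hleft := hC'.mul hB'
  have hright := hA'.mul hD'
  have hev := eventually_mem p hp x0 hx0sum
  have heq : (fun t : ℝ => matForm n g (p + t • x0) u u * fisherRao n (p + t • x0) x0 x0)
      =ᶠ[nhds (0:ℝ)]
      (fun t : ℝ => matForm n g (p + t • x0) x0 x0 * fisherRao n (p + t • x0) u u) := by
    filter_upwards [hev] with t ht
    exact propE hg hsymm hcompat hC _ ht x0 u u hx0sum husum husum
  have hkey := hleft.unique (hright.congr_of_eventuallyEq heq)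
  simp only [zero_smul, add_zero] at hkey
  rw [hstarA, hstarC, hz3, hz4, hT0] at hkey
  -- final arithmetic
  have hfinal : α * (matForm n g p x0 x0 * Tsum n p u u x0) = 0 := by
    linear_combination (-1 : ℝ) * hkey - hm1 - hm2
  exact hα.2.1 (by
    have := mul_ne_zero (ne_of_gt hApos) hTne
    rcases mul_eq_zero.mp hfinal with h | h
    · exact h
    · exact absurd h this)

/-- For `n ≥ 3` and `α ∉ {−1,0,1}`, there exists no smooth field of
positive-definite symmetric bilinear forms on `H` over the open probability simplex with
which the Amari–Čencov α-connection is compatible: the α-connection on the simplex is a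
non-metric affine connection. -/
theorem stmt8 (n : ℕ) (hn : 3 ≤ n) (α : ℝ) (hα : α ≠ -1 ∧ α ≠ 0 ∧ α ≠ 1) :
    ¬ ∃ g : (Fin n → ℝ) → Matrix (Fin n) (Fin n) ℝ,
      (∀ i j, ContDiff ℝ (⊤ : ℕ∞) (fun p => g p i j)) ∧
      (∀ p ∈ probSimplex n, ∀ a b : Fin n → ℝ, (∑ i, a i = 0) → (∑ i, b i = 0) →
        matForm n g p a b = matForm n g p b a) ∧
      (∀ p ∈ probSimplex n, ∀ a : Fin n → ℝ, (∑ i, a i = 0) → a ≠ 0 →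
        0 < matForm n g p a a) ∧
      (∀ X Y Z : (Fin n → ℝ) → (Fin n → ℝ),
        IsTangentVF n X → IsTangentVF n Y → IsTangentVF n Z →
        ∀ p ∈ probSimplex n,
          fderiv ℝ (fun q => matForm n g q (Y q) (Z q)) p (X p)
            = matForm n g p (alphaConn α n X Y p) (Z p)
              + matForm n g p (Y p) (alphaConn α n X Z p)) := by
  exact stmt8' n hn α hα
end

section
/- Let n ≥ 2 and define on Δ the symmetric bilinear forms g̃_p(a,b) = (1/n) Σ_i a_i b_i / p_i² − (1/n²) (Σ_i a_i/p_i)(Σ_i b_i/p_i) for a, b ∈ H. Then: (i) g̃_p is positive definite on H for every p ∈ Δ, so g̃ is a Riemannian metric on Δ; and (ii) the 1-connection ∇^{(1)} is compatible with g̃, i.e. for all smooth vector fields X, Y, Z : Δ → H, D( g̃(Y,Z) )[X](p) = g̃_p( (∇^{(1)}_X Y)(p), Z(p) ) + g̃_p( Y(p), (∇^{(1)}_X Z)(p) ). Since ∇^{(1)} is torsion-free, it is the Levi-Civita connection of g̃. -/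
open scoped BigOperators

/-- The exponential connection `∇^{(1)}` on the simplex:
`(∇^{(1)}_X Y)(p) = DY(p)[X(p)] − ((X(p)·Y(p))/p − G_p(X(p),Y(p)) p)`. -/
noncomputable def expConn (n : ℕ) (X Y : (Fin n → ℝ) → (Fin n → ℝ)) :
    (Fin n → ℝ) → (Fin n → ℝ) :=
  fun p => fderiv ℝ Y p (X p)
    - ((fun i => X p i * Y p i / p i) - fisherRao n p (X p) (Y p) • p)

/-- The metric `g̃_p(a,b) = (1/n) Σ_i a_i b_i / p_i² − (1/n²)(Σ_i a_i/p_i)(Σ_i b_i/p_i)`. -/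
noncomputable def gTilde (n : ℕ) (p a b : Fin n → ℝ) : ℝ :=
  (1 / (n : ℝ)) * ∑ i, a i * b i / (p i) ^ 2
    - (1 / (n : ℝ) ^ 2) * (∑ i, a i / p i) * (∑ i, b i / p i)

private theorem posdef (n : ℕ) (hn : 2 ≤ n) (p : Fin n → ℝ) (hp : ∀ i, 0 < p i) (hps : ∑ i, p i = 1)
    (a : Fin n → ℝ) (ha : ∑ i, a i = 0) (ha0 : a ≠ 0) :
    0 < (1 / (n : ℝ)) * ∑ i, a i * a i / (p i) ^ 2
      - (1 / (n : ℝ) ^ 2) * (∑ i, a i / p i) * (∑ i, a i / p i) := by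
  have hn0 : (0:ℝ) < n := by positivity
  have hpne : ∀ i, p i ≠ 0 := fun i => (hp i).ne'
  set c : Fin n → ℝ := fun i => a i / p i with hc
  set m : ℝ := (∑ i, c i) / n with hm
  have key : (1 / (n : ℝ)) * ∑ i, a i * a i / (p i) ^ 2
      - (1 / (n : ℝ) ^ 2) * (∑ i, a i / p i) * (∑ i, a i / p i)
      = (1 / (n:ℝ)) * ∑ i, (c i - m) ^ 2 := by
    have h1 : ∀ i, a i * a i / (p i) ^ 2 = c i ^ 2 := by
      intro i; rw [hc]; field_simp
    have h2 : ∑ i, (c i - m) ^ 2 = (∑ i, c i ^ 2) - m * (2 * ∑ i, c i) + n * m ^ 2 := by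
      have he : ∀ i : Fin n, (c i - m) ^ 2 = c i ^ 2 - m * (2 * c i) + m ^ 2 := fun i => by ring
      rw [Finset.sum_congr rfl fun i _ => he i, Finset.sum_add_distrib, Finset.sum_sub_distrib,
        ← Finset.mul_sum, ← Finset.mul_sum, Finset.sum_const, Finset.card_univ,
        Fintype.card_fin, nsmul_eq_mul]
    rw [Finset.sum_congr rfl (fun i _ => h1 i), h2, hm]
    field_simp
    ring
  rw [key]
  have hex : ∃ i, c i ≠ m := by
    by_contra h
    push_neg at h
    have hap : ∀ i, a i = m * p i := by
      intro i
      have hi := h i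
      simp only [hc] at hi
      rw [div_eq_iff (hpne i)] at hi
      linarith [hi]
    have hsum : (0:ℝ) = m := by
      rw [← ha, Finset.sum_congr rfl (fun i _ => hap i), ← Finset.mul_sum, hps, mul_one]
    apply ha0
    funext i
    simp [hap i, ← hsum]
  obtain ⟨j, hj⟩ := hex
  have hpos : 0 < ∑ i, (c i - m) ^ 2 := by
    apply Finset.sum_pos' (fun i _ => sq_nonneg _)
    have := sub_ne_zero.mpr hj
    exact ⟨j, Finset.mem_univ j, by positivity⟩
  positivity

/-- On the open probability simplex (`n ≥ 2`), the bilinear forms `g̃` are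
(i) positive definite on `H`, hence a Riemannian metric on `Δ`, and (ii) the exponential
connection `∇^{(1)}` is compatible with `g̃`; being torsion-free, it is the Levi-Civita
connection of `g̃`. -/
theorem stmt9 (n : ℕ) (hn : 2 ≤ n) :
    (∀ p ∈ probSimplex n, ∀ a : Fin n → ℝ, (∑ i, a i = 0) → a ≠ 0 →
      0 < gTilde n p a a) ∧
    (∀ X Y Z : (Fin n → ℝ) → (Fin n → ℝ),
      IsTangentVF n X → IsTangentVF n Y → IsTangentVF n Z →
      ∀ p ∈ probSimplex n,
        fderiv ℝ (fun q => gTilde n q (Y q) (Z q)) p (X p)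
          = gTilde n p (expConn n X Y p) (Z p) + gTilde n p (Y p) (expConn n X Z p)) := by
  constructor
  · rintro p ⟨hp1, hp2⟩ a ha ha0
    exact posdef n hn p hp1 hp2 a ha ha0
  · rintro X Y Z hX hY hZ p ⟨hp1, hp2⟩
    have hYs := hY.1
    have hZs := hZ.1
    clear hX hY hZ
    have hpne : ∀ i, p i ≠ 0 := fun i => (hp1 i).ne'
    have hYd : HasFDerivAt Y (fderiv ℝ Y p) p :=
      (hYs.differentiable (by simp)).differentiableAt.hasFDerivAt
    have hZd : HasFDerivAt Z (fderiv ℝ Z p) p :=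
      (hZs.differentiable (by simp)).differentiableAt.hasFDerivAt
    set v : Fin n → ℝ := X p with hv
    set c : ℝ → (Fin n → ℝ) := fun t => p + t • v with hcdef
    have hc0 : c 0 = p := by simp [hcdef]
    have hc : HasDerivAt c v 0 := by
      have h1 : HasDerivAt (fun t : ℝ => t • v) ((1:ℝ) • v) 0 := (hasDerivAt_id 0).smul_const v
      simpa [hcdef] using h1.const_add p
    have hci : ∀ i, HasDerivAt (fun t => c t i) (v i) 0 := by
      intro i
      have := ((ContinuousLinearMap.proj (R := ℝ) (φ := fun _ : Fin n => ℝ) i).hasFDerivAt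
        (x := c 0)).comp_hasDerivAt 0 hc
      exact this
    have hyc : ∀ i, HasDerivAt (fun t => Y (c t) i) (fderiv ℝ Y p v i) 0 := by
      intro i
      have hYc : HasFDerivAt Y (fderiv ℝ Y p) (c 0) := by rw [hc0]; exact hYd
      have := (((ContinuousLinearMap.proj (R := ℝ) (φ := fun _ : Fin n => ℝ) i).hasFDerivAt).comp
        (c 0) hYc).comp_hasDerivAt 0 hc
      exact this
    have hzc : ∀ i, HasDerivAt (fun t => Z (c t) i) (fderiv ℝ Z p v i) 0 := by
      intro i
      have hZc : HasFDerivAt Z (fderiv ℝ Z p) (c 0) := by rw [hc0]; exact hZd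
      have := (((ContinuousLinearMap.proj (R := ℝ) (φ := fun _ : Fin n => ℝ) i).hasFDerivAt).comp
        (c 0) hZc).comp_hasDerivAt 0 hc
      exact this
    have hc0i : ∀ i, c 0 i = p i := fun i => by rw [hc0]
    have h1 : ∀ i, HasDerivAt (fun t => Y (c t) i * Z (c t) i / (c t i) ^ 2)
        (((fderiv ℝ Y p v i * Z (c 0) i + Y (c 0) i * fderiv ℝ Z p v i) * (c 0 i) ^ 2
          - Y (c 0) i * Z (c 0) i * ((2:ℕ) * (c 0 i) ^ 1 * v i)) / ((c 0 i) ^ 2) ^ 2) 0 := by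
      intro i
      exact ((hyc i).mul (hzc i)).div ((hci i).pow 2)
        (by rw [hc0i i]; exact pow_ne_zero 2 (hpne i))
    have h2 : ∀ i, HasDerivAt (fun t => Y (c t) i / c t i)
        ((fderiv ℝ Y p v i * c 0 i - Y (c 0) i * v i) / (c 0 i) ^ 2) 0 := by
      intro i
      exact (hyc i).div (hci i) (by rw [hc0i i]; exact hpne i)
    have h3 : ∀ i, HasDerivAt (fun t => Z (c t) i / c t i)
        ((fderiv ℝ Z p v i * c 0 i - Z (c 0) i * v i) / (c 0 i) ^ 2) 0 := by
      intro i
      exact (hzc i).div (hci i) (by rw [hc0i i]; exact hpne i)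
    have hS1 := HasDerivAt.fun_sum (fun i (_ : i ∈ Finset.univ) => h1 i)
    have hSY := HasDerivAt.fun_sum (fun i (_ : i ∈ Finset.univ) => h2 i)
    have hSZ := HasDerivAt.fun_sum (fun i (_ : i ∈ Finset.univ) => h3 i)
    have hG : HasDerivAt (fun t => gTilde n (c t) (Y (c t)) (Z (c t)))
        ((1 / (n:ℝ)) * (∑ i, ((fderiv ℝ Y p v i * Z (c 0) i + Y (c 0) i * fderiv ℝ Z p v i) * (c 0 i) ^ 2
          - Y (c 0) i * Z (c 0) i * ((2:ℕ) * (c 0 i) ^ 1 * v i)) / ((c 0 i) ^ 2) ^ 2)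
         - (((1 / (n:ℝ) ^ 2) * ∑ i, (fderiv ℝ Y p v i * c 0 i - Y (c 0) i * v i) / (c 0 i) ^ 2)
              * (∑ i, Z (c 0) i / c 0 i)
            + ((1 / (n:ℝ) ^ 2) * ∑ i, Y (c 0) i / c 0 i)
              * (∑ i, (fderiv ℝ Z p v i * c 0 i - Z (c 0) i * v i) / (c 0 i) ^ 2))) 0 := by
      simp only [gTilde]
      exact (hS1.const_mul _).sub ((hSY.const_mul _).mul hSZ)
    -- differentiability of F at p
    have hYdi : ∀ i, DifferentiableAt ℝ (fun q => Y q i) p := fun i =>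
      (ContinuousLinearMap.proj (R := ℝ) (φ := fun _ : Fin n => ℝ) i).differentiableAt.comp p
        hYd.differentiableAt
    have hZdi : ∀ i, DifferentiableAt ℝ (fun q => Z q i) p := fun i =>
      (ContinuousLinearMap.proj (R := ℝ) (φ := fun _ : Fin n => ℝ) i).differentiableAt.comp p
        hZd.differentiableAt
    have hqi : ∀ i, DifferentiableAt ℝ (fun q : Fin n → ℝ => q i) p := fun i =>
      (ContinuousLinearMap.proj (R := ℝ) (φ := fun _ : Fin n => ℝ) i).differentiableAt
    have hd1 : DifferentiableAt ℝ (fun q : Fin n → ℝ => ∑ i, Y q i * Z q i / (q i) ^ 2) p := by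
      apply DifferentiableAt.fun_sum
      intro i _
      simp only [div_eq_mul_inv]
      exact ((hYdi i).mul (hZdi i)).mul (((hqi i).pow 2).inv (pow_ne_zero 2 (hpne i)))
    have hd2 : DifferentiableAt ℝ (fun q : Fin n → ℝ => ∑ i, Y q i / q i) p := by
      apply DifferentiableAt.fun_sum
      intro i _
      simp only [div_eq_mul_inv]
      exact (hYdi i).mul ((hqi i).inv (hpne i))
    have hd3 : DifferentiableAt ℝ (fun q : Fin n → ℝ => ∑ i, Z q i / q i) p := by
      apply DifferentiableAt.fun_sum
      intro i _
      simp only [div_eq_mul_inv]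
      exact (hZdi i).mul ((hqi i).inv (hpne i))
    have hFd : DifferentiableAt ℝ (fun q => gTilde n q (Y q) (Z q)) p := by
      simp only [gTilde]
      exact (hd1.const_mul _).sub (((hd2.const_mul _)).mul hd3)
    have hfc : HasFDerivAt (fun q => gTilde n q (Y q) (Z q))
        (fderiv ℝ (fun q => gTilde n q (Y q) (Z q)) p) (c 0) := by
      rw [hc0]; exact hFd.hasFDerivAt
    have hcomp := hfc.comp_hasDerivAt 0 hc
    have hkey := hcomp.unique hG
    rw [hkey]
    simp only [hc0]
    simp only [expConn, fisherRao, gTilde, Pi.sub_apply, Pi.smul_apply, smul_eq_mul]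
    push_cast
    simp only [← hv]
    set y : Fin n → ℝ := Y p with hy
    set z : Fin n → ℝ := Z p with hz
    set A : Fin n → ℝ := fderiv ℝ Y p v with hA
    set B : Fin n → ℝ := fderiv ℝ Z p v with hB
    set Gxy : ℝ := ∑ i, v i * y i / p i with hGxy
    set Gxz : ℝ := ∑ i, v i * z i / p i with hGxz
    have hnR : (n:ℝ) ≠ 0 := by positivity
    have hnc : ∀ r : ℝ, (n:ℝ) * r = ∑ _x : Fin n, r := by
      intro r; rw [Finset.sum_const]; simp [mul_comm]
    have e1 : ∑ x, ((A x * z x + y x * B x) * p x ^ 2 - y x * z x * (2 * p x ^ 1 * v x)) / (p x ^ 2) ^ 2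
        = (∑ x, A x * z x / p x ^ 2) + (∑ x, y x * B x / p x ^ 2) - 2 * ∑ x, v x * y x * z x / p x ^ 3 := by
      rw [Finset.mul_sum, ← Finset.sum_add_distrib, ← Finset.sum_sub_distrib]
      exact Finset.sum_congr rfl fun x _ => by have := hpne x; field_simp
    have e2 : ∑ x, (A x * p x - y x * v x) / p x ^ 2
        = (∑ x, A x / p x) - ∑ x, v x * y x / p x ^ 2 := by
      rw [← Finset.sum_sub_distrib]
      exact Finset.sum_congr rfl fun x _ => by have := hpne x; field_simp
    have e3 : ∑ x, (B x * p x - z x * v x) / p x ^ 2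
        = (∑ x, B x / p x) - ∑ x, v x * z x / p x ^ 2 := by
      rw [← Finset.sum_sub_distrib]
      exact Finset.sum_congr rfl fun x _ => by have := hpne x; field_simp
    have e4 : ∑ x, (A x - (v x * y x / p x - Gxy * p x)) * z x / p x ^ 2
        = (∑ x, A x * z x / p x ^ 2) - (∑ x, v x * y x * z x / p x ^ 3) + Gxy * ∑ x, z x / p x := by
      rw [Finset.mul_sum, ← Finset.sum_sub_distrib, ← Finset.sum_add_distrib]
      exact Finset.sum_congr rfl fun x _ => by have := hpne x; field_simp; ring
    have e5 : ∑ x, (A x - (v x * y x / p x - Gxy * p x)) / p x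
        = (∑ x, A x / p x) - (∑ x, v x * y x / p x ^ 2) + (n:ℝ) * Gxy := by
      rw [hnc Gxy, ← Finset.sum_sub_distrib, ← Finset.sum_add_distrib]
      exact Finset.sum_congr rfl fun x _ => by have := hpne x; field_simp; ring
    have e6 : ∑ x, y x * (B x - (v x * z x / p x - Gxz * p x)) / p x ^ 2
        = (∑ x, y x * B x / p x ^ 2) - (∑ x, v x * y x * z x / p x ^ 3) + Gxz * ∑ x, y x / p x := by
      rw [Finset.mul_sum, ← Finset.sum_sub_distrib, ← Finset.sum_add_distrib]
      exact Finset.sum_congr rfl fun x _ => by have := hpne x; field_simp; ring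
    have e7 : ∑ x, (B x - (v x * z x / p x - Gxz * p x)) / p x
        = (∑ x, B x / p x) - (∑ x, v x * z x / p x ^ 2) + (n:ℝ) * Gxz := by
      rw [hnc Gxz, ← Finset.sum_sub_distrib, ← Finset.sum_add_distrib]
      exact Finset.sum_congr rfl fun x _ => by have := hpne x; field_simp; ring
    rw [e1, e2, e3, e4, e5, e6, e7]
    field_simp
    ring
end

section
/- With the exponential family setup: the log-partition function F is infinitely differentiable on Θ, and for all θ ∈ Θ and all 1 ≤ i, j ≤ d: ∂_i F(θ) = E_θ[φ_i], and ∂_i ∂_j F(θ) = E_θ[ (φ_i − E_θ[φ_i])(φ_j − E_θ[φ_j]) ]. Consequently, the Fisher information matrix G_{ij}(θ) = E_θ[ ∂_i ℓ(·,θ) ∂_j ℓ(·,θ) ], where ℓ(x,θ) = log p_θ(x) = h(x) + ⟨θ, φ(x)⟩ − F(θ), equals the Hessian of F: G_{ij}(θ) = ∂_i ∂_j F(θ). -/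
open MeasureTheory
open scoped BigOperators

set_option linter.unusedSectionVars false
set_option maxHeartbeats 1000000
set_option synthInstance.maxHeartbeats 1000000

open Metric Filter

namespace Stmt10Aux

variable {Ω : Type*} [MeasurableSpace Ω] {d : ℕ}
variable (μ : Measure Ω) (h : Ω → ℝ) (φ : Ω → Fin d → ℝ)

/-- The unnormalized density. -/
noncomputable def expo (θ : Fin d → ℝ) (x : Ω) : ℝ := Real.exp (h x + ∑ i, θ i * φ x i)

/-- Interior of the natural parameter domain. -/
def S : Set (Fin d → ℝ) :=
  interior {θ : Fin d → ℝ | Integrable (fun x => Real.exp (h x + ∑ i, θ i * φ x i)) μ}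

lemma expo_pos (θ : Fin d → ℝ) (x : Ω) : 0 < expo h φ θ x := Real.exp_pos _

lemma measurable_expo (hh : Measurable h) (hφ : Measurable φ) (θ : Fin d → ℝ) :
    Measurable (expo h φ θ) := by
  apply Measurable.exp
  exact hh.add (Finset.measurable_sum _ fun i _ =>
    (measurable_const.mul ((measurable_pi_apply i).comp hφ)))

/-- Functions whose product with every density in the family is integrable. -/
def Good (ψ : Ω → ℝ) : Prop :=
  Measurable ψ ∧ ∀ θ ∈ S μ h φ, Integrable (fun x => ψ x * expo h φ θ x) μ

lemma good_one : Good μ h φ (fun _ => 1) := by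
  refine ⟨measurable_const, fun θ hθ => ?_⟩
  have h2 : θ ∈ {θ : Fin d → ℝ | Integrable (fun x => Real.exp (h x + ∑ i, θ i * φ x i)) μ} :=
    interior_subset hθ
  simpa [expo] using h2

lemma Good.abs {ψ : Ω → ℝ} (hψ : Good μ h φ ψ) : Good μ h φ (fun x => |ψ x|) := by
  refine ⟨hψ.1.abs, fun θ hθ => ?_⟩
  have := (hψ.2 θ hθ).abs
  refine this.congr (.of_forall fun x => ?_)
  show |ψ x * expo h φ θ x| = |ψ x| * expo h φ θ x
  rw [abs_mul, abs_of_pos (expo_pos h φ θ x)]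

lemma abs_le_exp_add {c : ℝ} (hc : 0 < c) (t : ℝ) :
    |t| ≤ c⁻¹ * (Real.exp (c * t) + Real.exp (-(c * t))) := by
  have h1 : c * |t| ≤ Real.exp (c * |t|) := by
    have := Real.add_one_le_exp (c * |t|); linarith
  have h2 : Real.exp (c * |t|) ≤ Real.exp (c * t) + Real.exp (-(c * t)) := by
    rcases abs_cases t with ⟨ht, _⟩ | ⟨ht, _⟩
    · rw [ht]; have := Real.exp_pos (-(c * t)); linarith
    · rw [ht, mul_neg]; have := Real.exp_pos (c * t); linarith
  have h3 := h1.trans h2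
  calc |t| = c⁻¹ * (c * |t|) := by field_simp
  _ ≤ c⁻¹ * (Real.exp (c * t) + Real.exp (-(c * t))) :=
      mul_le_mul_of_nonneg_left h3 (inv_nonneg.2 hc.le)

lemma expo_shift (θ v : Fin d → ℝ) (x : Ω) :
    expo h φ (θ + v) x = expo h φ θ x * Real.exp (∑ i, v i * φ x i) := by
  unfold expo
  rw [← Real.exp_add]
  congr 1
  simp only [Pi.add_apply, add_mul, Finset.sum_add_distrib]
  ring

lemma expo_single_shift (θ : Fin d → ℝ) (c : ℝ) (i : Fin d) (x : Ω) :
    expo h φ (θ + c • (Pi.single i 1 : Fin d → ℝ)) x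
      = expo h φ θ x * Real.exp (c * φ x i) := by
  rw [expo_shift]
  congr 2
  rw [Finset.sum_eq_single i]
  · simp
  · intro b _ hb; simp [Pi.single_apply, hb]
  · simp

lemma corner_mem {θ₀ : Fin d → ℝ} (hθ₀ : θ₀ ∈ S μ h φ) :
    ∃ ε > 0, ∀ v : Fin d → ℝ, (∀ i, |v i| ≤ ε) → θ₀ + v ∈ S μ h φ := by
  obtain ⟨r, hr, hball⟩ := Metric.isOpen_iff.1 isOpen_interior θ₀ hθ₀
  refine ⟨r / 2, by linarith, fun v hv => hball ?_⟩
  rw [mem_ball, dist_pi_lt_iff hr]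
  intro b
  rw [Real.dist_eq, Pi.add_apply, add_sub_cancel_left]
  exact (hv b).trans_lt (by linarith)

lemma Good.mul_dominated {ψ g : Ω → ℝ} (hψ : Good μ h φ ψ)
    (hh : Measurable h) (hφ : Measurable φ)
    (hg : Measurable g) (i : Fin d) (hle : ∀ x, |g x| ≤ |ψ x| * |φ x i|) :
    Good μ h φ g := by
  refine ⟨hg, fun θ hθ => ?_⟩
  obtain ⟨ε, hε, hmem⟩ := corner_mem μ h φ hθ
  have habs : ∀ j : Fin d, ∀ c : ℝ, |c| ≤ ε → ∀ k, |(c • (Pi.single j 1 : Fin d → ℝ)) k| ≤ ε := by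
    intro j c hc k
    rcases eq_or_ne k j with rfl | hk
    · simpa using hc
    · simp [Pi.single_apply, hk, hε.le]
  have hmemp := hmem _ (habs i ε (le_of_eq (abs_of_pos hε)))
  have hmemm := hmem _ (habs i (-ε) (le_of_eq (by rw [abs_neg, abs_of_pos hε])))
  have hp := (Good.abs μ h φ hψ).2 _ hmemp
  have hm := (Good.abs μ h φ hψ).2 _ hmemm
  refine Integrable.mono' (((hp.add hm).const_mul ε⁻¹))
    ((hg.mul (measurable_expo h φ hh hφ θ)).aestronglyMeasurable) (.of_forall fun x => ?_)
  have hexp := expo_pos h φ θ x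
  calc ‖g x * expo h φ θ x‖ = |g x| * expo h φ θ x := by
        rw [norm_mul, Real.norm_eq_abs, Real.norm_eq_abs, abs_of_pos hexp]
  _ ≤ (|ψ x| * |φ x i|) * expo h φ θ x :=
        mul_le_mul_of_nonneg_right (hle x) hexp.le
  _ ≤ (|ψ x| * (ε⁻¹ * (Real.exp (ε * φ x i) + Real.exp (-(ε * φ x i))))) * expo h φ θ x := by
        apply mul_le_mul_of_nonneg_right _ hexp.le
        exact mul_le_mul_of_nonneg_left (abs_le_exp_add hε _) (abs_nonneg _)
  _ = ε⁻¹ * (|ψ x| * expo h φ (θ + ε • (Pi.single i 1 : Fin d → ℝ)) x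
        + |ψ x| * expo h φ (θ + (-ε) • (Pi.single i 1 : Fin d → ℝ)) x) := by
        rw [expo_single_shift, expo_single_shift, neg_mul]
        ring

lemma Good.mul_phi {ψ : Ω → ℝ} (hψ : Good μ h φ ψ)
    (hh : Measurable h) (hφ : Measurable φ) (i : Fin d) :
    Good μ h φ (fun x => ψ x * φ x i) := by
  refine Good.mul_dominated μ h φ hψ hh hφ (hψ.1.mul ((measurable_pi_apply i).comp hφ)) i
    (fun x => by rw [abs_mul])

lemma Good.mul_abs_phi {ψ : Ω → ℝ} (hψ : Good μ h φ ψ)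
    (hh : Measurable h) (hφ : Measurable φ) (i : Fin d) :
    Good μ h φ (fun x => |ψ x| * |φ x i|) := by
  refine Good.mul_dominated μ h φ hψ hh hφ (hψ.1.abs.mul ((measurable_pi_apply i).comp hφ).abs) i
    (fun x => by rw [abs_mul, abs_abs, abs_abs])

lemma expo_le (θ θ₀ : Fin d → ℝ) (x : Ω) :
    expo h φ θ x ≤ Real.exp (dist θ θ₀ * ∑ i, |φ x i|) * expo h φ θ₀ x := by
  unfold expo
  rw [← Real.exp_add]
  apply Real.exp_le_exp.2
  have h1 : ∑ i, θ i * φ x i - ∑ i, θ₀ i * φ x i = ∑ i, (θ i - θ₀ i) * φ x i := by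
    rw [← Finset.sum_sub_distrib]; congr 1; funext i; ring
  have h2 : ∑ i, (θ i - θ₀ i) * φ x i ≤ ∑ i, dist θ θ₀ * |φ x i| := by
    apply Finset.sum_le_sum
    intro i _
    calc (θ i - θ₀ i) * φ x i ≤ |(θ i - θ₀ i) * φ x i| := le_abs_self _
    _ = |θ i - θ₀ i| * |φ x i| := abs_mul _ _
    _ ≤ dist θ θ₀ * |φ x i| := by
        apply mul_le_mul_of_nonneg_right _ (abs_nonneg _)
        rw [← Real.dist_eq]; exact dist_le_pi_dist θ θ₀ i
  rw [← Finset.mul_sum] at h2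
  linarith

/-- Master bound: domination of `|ψ| e^{t Σ|φ_i|} expo θ₀` by an integrable function,
uniformly in `t ∈ [0, ε]`. -/
lemma exists_bound {ψ : Ω → ℝ} (hψ : Good μ h φ ψ) {θ₀ : Fin d → ℝ} (hθ₀ : θ₀ ∈ S μ h φ) :
    ∃ ε > 0, ∃ B : Ω → ℝ, Integrable B μ ∧
      ∀ x, ∀ t : ℝ, 0 ≤ t → t ≤ ε →
        |ψ x| * (Real.exp (t * ∑ i, |φ x i|) * expo h φ θ₀ x) ≤ B x := by
  obtain ⟨ε, hε, hmem⟩ := corner_mem μ h φ hθ₀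
  refine ⟨ε, hε, fun x => ∑ s : Fin d → Bool,
    |ψ x| * expo h φ (θ₀ + fun i => ε * (if s i then 1 else -1)) x, ?_, ?_⟩
  · apply integrable_finset_sum
    intro s _
    apply (Good.abs μ h φ hψ).2
    apply hmem
    intro i
    rcases Bool.eq_false_or_eq_true (s i) with hs | hs <;>
      simp [hs, abs_of_pos hε, hε.le]
  · intro x t ht htε
    set s₀ : Fin d → Bool := fun i => decide (0 ≤ φ x i) with hs₀
    have key : |ψ x| * (Real.exp (t * ∑ i, |φ x i|) * expo h φ θ₀ x)
        ≤ |ψ x| * expo h φ (θ₀ + fun i => ε * (if s₀ i then 1 else -1)) x := by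
      apply mul_le_mul_of_nonneg_left _ (abs_nonneg _)
      rw [expo_shift, mul_comm (expo h φ θ₀ x)]
      apply mul_le_mul_of_nonneg_right _ (expo_pos h φ θ₀ x).le
      apply Real.exp_le_exp.2
      have hsum : ∑ i, (ε * (if s₀ i then (1:ℝ) else -1)) * φ x i = ε * ∑ i, |φ x i| := by
        rw [Finset.mul_sum]
        congr 1; funext i
        rcases le_or_gt 0 (φ x i) with hp | hn
        · simp [hs₀, hp, abs_of_nonneg hp]
        · simp [hs₀, not_le.2 hn, abs_of_neg hn]
      rw [hsum]
      have hsnn : 0 ≤ ∑ i, |φ x i| := Finset.sum_nonneg fun i _ => abs_nonneg _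
      exact mul_le_mul_of_nonneg_right htε hsnn
    refine key.trans ?_
    have hnn : ∀ s : Fin d → Bool, s ∈ (Finset.univ : Finset (Fin d → Bool)) →
        0 ≤ |ψ x| * expo h φ (θ₀ + fun i => ε * (if s i then 1 else -1)) x :=
      fun s _ => mul_nonneg (abs_nonneg _) (expo_pos _ _ _ _).le
    exact Finset.single_le_sum hnn (Finset.mem_univ s₀)

lemma pow_le_fact_exp {t : ℝ} (ht : 0 ≤ t) (n : ℕ) :
    t ^ n ≤ (n.factorial : ℝ) * Real.exp t := by
  have h1 : t ^ n / (n.factorial : ℝ) ≤ Real.exp t := by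
    calc t ^ n / (n.factorial : ℝ)
        ≤ ∑ i ∈ Finset.range (n + 1), t ^ i / (i.factorial : ℝ) := by
          exact Finset.single_le_sum (f := fun i => t ^ i / (i.factorial : ℝ))
            (fun i _ => by positivity) (Finset.self_mem_range_succ n)
    _ ≤ Real.exp t := Real.sum_le_exp_of_nonneg ht _
  have hfac : (0:ℝ) < (n.factorial : ℝ) := by positivity
  calc t ^ n = (t ^ n / (n.factorial : ℝ)) * (n.factorial : ℝ) := by field_simp
  _ ≤ Real.exp t * (n.factorial : ℝ) := mul_le_mul_of_nonneg_right h1 hfac.le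
  _ = (n.factorial : ℝ) * Real.exp t := mul_comm _ _

/-- Integrability of all moments. -/
lemma integrable_pow {ψ : Ω → ℝ} (hψ : Good μ h φ ψ)
    (hh : Measurable h) (hφ : Measurable φ) {θ₀ : Fin d → ℝ} (hθ₀ : θ₀ ∈ S μ h φ) (n : ℕ) :
    Integrable (fun x => |ψ x| * ((∑ i, |φ x i|) ^ n * expo h φ θ₀ x)) μ := by
  obtain ⟨ε, hε, B, hB, hbd⟩ := exists_bound μ h φ hψ hθ₀
  have hmeasS : Measurable fun x => ∑ i, |φ x i| :=
    Finset.measurable_sum _ fun i _ => ((measurable_pi_apply i).comp hφ).abs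
  refine Integrable.mono' (hB.const_mul ((n.factorial : ℝ) * ε⁻¹ ^ n))
    ((hψ.1.abs.mul ((hmeasS.pow_const n).mul (measurable_expo h φ hh hφ θ₀))).aestronglyMeasurable)
    (.of_forall fun x => ?_)
  have hsnn : 0 ≤ ∑ i, |φ x i| := Finset.sum_nonneg fun i _ => abs_nonneg _
  have hkey : (∑ i, |φ x i|) ^ n ≤ ((n.factorial : ℝ) * ε⁻¹ ^ n) * Real.exp (ε * ∑ i, |φ x i|) := by
    have := pow_le_fact_exp (mul_nonneg hε.le hsnn) n
    rw [mul_pow] at this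
    have h2 : (∑ i, |φ x i|) ^ n = ε⁻¹ ^ n * (ε ^ n * (∑ i, |φ x i|) ^ n) := by
      rw [← mul_assoc, ← mul_pow, inv_mul_cancel₀ hε.ne', one_pow, one_mul]
    rw [h2]
    calc ε⁻¹ ^ n * (ε ^ n * (∑ i, |φ x i|) ^ n)
        ≤ ε⁻¹ ^ n * ((n.factorial : ℝ) * Real.exp (ε * ∑ i, |φ x i|)) := by
          apply mul_le_mul_of_nonneg_left this (by positivity)
    _ = ((n.factorial : ℝ) * ε⁻¹ ^ n) * Real.exp (ε * ∑ i, |φ x i|) := by ring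
  have hepos := expo_pos h φ θ₀ x
  calc ‖|ψ x| * ((∑ i, |φ x i|) ^ n * expo h φ θ₀ x)‖
      = |ψ x| * ((∑ i, |φ x i|) ^ n * expo h φ θ₀ x) := by
        rw [Real.norm_eq_abs, abs_of_nonneg (by positivity)]
  _ ≤ |ψ x| * ((((n.factorial : ℝ) * ε⁻¹ ^ n) * Real.exp (ε * ∑ i, |φ x i|)) * expo h φ θ₀ x) := by
        apply mul_le_mul_of_nonneg_left _ (abs_nonneg _)
        exact mul_le_mul_of_nonneg_right hkey hepos.le
  _ = ((n.factorial : ℝ) * ε⁻¹ ^ n) * (|ψ x| * (Real.exp (ε * ∑ i, |φ x i|) * expo h φ θ₀ x)) := by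
        ring
  _ ≤ ((n.factorial : ℝ) * ε⁻¹ ^ n) * B x := by
        apply mul_le_mul_of_nonneg_left (hbd x ε hε.le le_rfl) (by positivity)

/-- The linear form `v ↦ ⟨v, φ x⟩`. -/
noncomputable def Lx (x : Ω) : (Fin d → ℝ) →L[ℝ] ℝ :=
  ∑ i, φ x i • (ContinuousLinearMap.proj i : (Fin d → ℝ) →L[ℝ] ℝ)

lemma Lx_apply (x : Ω) (v : Fin d → ℝ) : Lx φ x v = ∑ i, φ x i * v i := by
  simp [Lx, ContinuousLinearMap.sum_apply]

lemma eval_single (c : Fin d → ℝ) (j : Fin d) :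
    (∑ i, c i • (ContinuousLinearMap.proj i : (Fin d → ℝ) →L[ℝ] ℝ)) (Pi.single j 1) = c j := by
  rw [ContinuousLinearMap.sum_apply]
  rw [Finset.sum_eq_single j]
  · simp
  · intro b _ hb
    simp [Pi.single_apply, Ne.symm hb]
  · simp

lemma norm_proj_le (i : Fin d) :
    ‖(ContinuousLinearMap.proj i : (Fin d → ℝ) →L[ℝ] ℝ)‖ ≤ 1 := by
  apply ContinuousLinearMap.opNorm_le_bound _ zero_le_one
  intro v
  rw [one_mul]
  exact norm_le_pi_norm v i

lemma norm_Lx_le (x : Ω) : ‖Lx φ x‖ ≤ ∑ i, |φ x i| := by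
  refine (norm_sum_le _ _).trans ?_
  apply Finset.sum_le_sum
  intro i _
  rw [norm_smul (φ x i) (ContinuousLinearMap.proj i : (Fin d → ℝ) →L[ℝ] ℝ), Real.norm_eq_abs]
  calc |φ x i| * ‖(ContinuousLinearMap.proj i : (Fin d → ℝ) →L[ℝ] ℝ)‖
      ≤ |φ x i| * 1 := mul_le_mul_of_nonneg_left (norm_proj_le i) (abs_nonneg _)
  _ = |φ x i| := mul_one _

lemma stronglyMeasurable_Lx (hφ : Measurable φ) : StronglyMeasurable (Lx φ) := by
  show StronglyMeasurable (fun x => ∑ i, φ x i • (ContinuousLinearMap.proj i : (Fin d → ℝ) →L[ℝ] ℝ))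
  apply Finset.stronglyMeasurable_fun_sum
  intro i _
  exact ((measurable_pi_apply i).comp hφ).stronglyMeasurable.smul_const _

/-- Differentiation under the integral sign. -/
lemma hasFDerivAt_int (hh : Measurable h) (hφ : Measurable φ)
    {ψ : Ω → ℝ} (hψ : Good μ h φ ψ) {θ₀ : Fin d → ℝ} (hθ₀ : θ₀ ∈ S μ h φ) :
    HasFDerivAt (fun θ => ∫ x, ψ x * expo h φ θ x ∂μ)
      (∑ i, (∫ x, (ψ x * φ x i) * expo h φ θ₀ x ∂μ) •
        (ContinuousLinearMap.proj i : (Fin d → ℝ) →L[ℝ] ℝ)) θ₀ := by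
  -- the big function |ψ| * Σ|φ_i| is Good
  have hbig : Good μ h φ (fun x => |ψ x| * ∑ i, |φ x i|) := by
    constructor
    · exact hψ.1.abs.mul (Finset.measurable_sum _ fun i _ => ((measurable_pi_apply i).comp hφ).abs)
    · intro θ hθ
      have : ∀ x, (|ψ x| * ∑ i, |φ x i|) * expo h φ θ x
          = ∑ i, (|ψ x| * |φ x i|) * expo h φ θ x := by
        intro x; rw [Finset.mul_sum, Finset.sum_mul]
      refine (integrable_finset_sum _ fun i _ => (Good.mul_abs_phi μ h φ hψ hh hφ i).2 θ hθ).congr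
        (.of_forall fun x => (this x).symm)
  obtain ⟨ε, hε, B, hB, hbd⟩ := exists_bound μ h φ hbig hθ₀
  have hmeas_expo : ∀ θ, Measurable (expo h φ θ) := measurable_expo h φ hh hφ
  have key := hasFDerivAt_integral_of_dominated_of_fderiv_le
    (F := fun θ x => ψ x * expo h φ θ x)
    (F' := fun θ x => (ψ x * expo h φ θ x) • Lx φ x)
    (bound := B) (μ := μ) (x₀ := θ₀) (ball_mem_nhds θ₀ hε)
    (Filter.Eventually.of_forall fun θ => (hψ.1.mul (hmeas_expo θ)).aestronglyMeasurable)
    (hψ.2 θ₀ hθ₀)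
    (((hψ.1.mul (hmeas_expo θ₀)).stronglyMeasurable.smul
      (stronglyMeasurable_Lx φ hφ)).aestronglyMeasurable)
    (Filter.Eventually.of_forall fun x => fun θ hθ => ?_)
    hB
    (Filter.Eventually.of_forall fun x => fun θ hθ => ?_)
  · -- rewrite the derivative integral
    have hrw : ∀ x, (ψ x * expo h φ θ₀ x) • Lx φ x
        = ∑ i, ((ψ x * φ x i) * expo h φ θ₀ x) •
            (ContinuousLinearMap.proj i : (Fin d → ℝ) →L[ℝ] ℝ) := by
      intro x
      rw [Lx, Finset.smul_sum]
      congr 1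
      funext i
      rw [smul_smul]
      congr 1
      ring
    have hint : ∫ x, (ψ x * expo h φ θ₀ x) • Lx φ x ∂μ
        = ∑ i, (∫ x, (ψ x * φ x i) * expo h φ θ₀ x ∂μ) •
            (ContinuousLinearMap.proj i : (Fin d → ℝ) →L[ℝ] ℝ) := by
      rw [integral_congr_ae (Filter.Eventually.of_forall hrw)]
      rw [integral_finset_sum _ fun i _ =>
        ((Good.mul_phi μ h φ hψ hh hφ i).2 θ₀ hθ₀).smul_const _]
      exact Finset.sum_congr rfl fun i _ => integral_smul_const _ _
    rw [hint] at key
    exact key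
  · -- norm bound
    show ‖(ψ x * expo h φ θ x) • Lx φ x‖ ≤ B x
    rw [norm_smul (ψ x * expo h φ θ x) (Lx φ x), norm_mul, Real.norm_eq_abs, Real.norm_eq_abs,
      abs_of_pos (expo_pos h φ θ x)]
    have h1 : |ψ x| * expo h φ θ x * ‖Lx φ x‖ ≤ |ψ x| * expo h φ θ x * ∑ i, |φ x i| := by
      apply mul_le_mul_of_nonneg_left (norm_Lx_le φ x)
      exact mul_nonneg (abs_nonneg _) (expo_pos _ _ _ _).le
    refine h1.trans ?_
    have h2 : expo h φ θ x ≤ Real.exp (dist θ θ₀ * ∑ i, |φ x i|) * expo h φ θ₀ x :=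
      expo_le h φ θ θ₀ x
    have hsnn : 0 ≤ ∑ i, |φ x i| := Finset.sum_nonneg fun i _ => abs_nonneg _
    have h3 : |ψ x| * expo h φ θ x * ∑ i, |φ x i|
        ≤ |(|ψ x| * ∑ i, |φ x i|)| * (Real.exp (dist θ θ₀ * ∑ i, |φ x i|) * expo h φ θ₀ x) := by
      rw [abs_of_nonneg (mul_nonneg (abs_nonneg _) hsnn)]
      calc |ψ x| * expo h φ θ x * ∑ i, |φ x i|
          ≤ |ψ x| * (Real.exp (dist θ θ₀ * ∑ i, |φ x i|) * expo h φ θ₀ x) * ∑ i, |φ x i| := by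
            apply mul_le_mul_of_nonneg_right _ hsnn
            exact mul_le_mul_of_nonneg_left h2 (abs_nonneg _)
      _ = (|ψ x| * ∑ i, |φ x i|) * (Real.exp (dist θ θ₀ * ∑ i, |φ x i|) * expo h φ θ₀ x) := by
            ring
    refine h3.trans ?_
    exact hbd x (dist θ θ₀) dist_nonneg (le_of_lt (mem_ball.1 hθ))
  · -- differentiability pointwise
    have h1 : HasFDerivAt (fun θ : Fin d → ℝ => ∑ i, θ i * φ x i) (Lx φ x) θ := by
      rw [Lx]
      apply HasFDerivAt.fun_sum
      intro i _
      have := ((ContinuousLinearMap.proj i :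
        (Fin d → ℝ) →L[ℝ] ℝ).hasFDerivAt (x := θ)).mul_const (φ x i)
      exact this
    have h2 : HasFDerivAt (fun θ : Fin d → ℝ => h x + ∑ i, θ i * φ x i) (Lx φ x) θ :=
      h1.const_add (h x)
    have h3 := h2.exp
    have h4 := h3.const_mul (ψ x)
    have : HasFDerivAt (fun θ : Fin d → ℝ => ψ x * expo h φ θ x)
        (ψ x • Real.exp (h x + ∑ i, θ i * φ x i) • Lx φ x) θ := h4
    rw [smul_smul] at this
    exact this


section Analytic

open ContinuousMultilinearMap

/-- The `n`-th multilinear integrand `v ↦ Π_k ⟨v_k, φ x⟩`. -/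
noncomputable def Mx (n : ℕ) (x : Ω) :
    ContinuousMultilinearMap ℝ (fun _ : Fin n => (Fin d → ℝ)) ℝ :=
  (ContinuousMultilinearMap.mkPiAlgebraFin ℝ n ℝ).compContinuousLinearMap (fun _ => Lx φ x)

lemma Mx_apply_const (n : ℕ) (x : Ω) (y : Fin d → ℝ) :
    Mx φ n x (fun _ => y) = (Lx φ x y) ^ n := by
  rw [Mx, ContinuousMultilinearMap.compContinuousLinearMap_apply,
    ContinuousMultilinearMap.mkPiAlgebraFin_apply]
  rw [List.ofFn_const, List.prod_replicate]

lemma norm_Mx_le (n : ℕ) (x : Ω) : ‖Mx φ n x‖ ≤ (∑ i, |φ x i|) ^ n := by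
  refine (ContinuousMultilinearMap.norm_compContinuousLinearMap_le _ _).trans ?_
  have h1 : ‖ContinuousMultilinearMap.mkPiAlgebraFin ℝ n ℝ‖ ≤ 1 := by
    refine (ContinuousMultilinearMap.norm_mkPiAlgebraFin_le).trans ?_
    simp
  have h2 : ∏ _i : Fin n, ‖Lx φ x‖ ≤ (∑ i, |φ x i|) ^ n := by
    rw [Finset.prod_const, Finset.card_univ, Fintype.card_fin]
    exact pow_le_pow_left₀ (norm_nonneg _) (norm_Lx_le φ x) n
  calc ‖ContinuousMultilinearMap.mkPiAlgebraFin ℝ n ℝ‖ * ∏ _i : Fin n, ‖Lx φ x‖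
      ≤ 1 * ((∑ i, |φ x i|) ^ n) := by
        apply mul_le_mul h1 h2 (Finset.prod_nonneg fun _ _ => norm_nonneg _) zero_le_one
  _ = (∑ i, |φ x i|) ^ n := one_mul _

lemma stronglyMeasurable_Mx (hφ : Measurable φ) (n : ℕ) :
    StronglyMeasurable (fun x => Mx φ n x) := by
  have c1 : Continuous fun L : (Fin d → ℝ) →L[ℝ] ℝ =>
      (ContinuousMultilinearMap.compContinuousLinearMapLRight
        (ContinuousMultilinearMap.mkPiAlgebraFin ℝ n ℝ)
        : ContinuousMultilinearMap ℝ (fun _ : Fin n => (Fin d → ℝ) →L[ℝ] ℝ) _)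
        (fun _ : Fin n => L) :=
    (ContinuousMultilinearMap.compContinuousLinearMapLRight
      (ContinuousMultilinearMap.mkPiAlgebraFin ℝ n ℝ)).cont.comp
      (continuous_pi fun _ => continuous_id)
  have : (fun x => Mx φ n x) = (fun L : (Fin d → ℝ) →L[ℝ] ℝ =>
      (ContinuousMultilinearMap.compContinuousLinearMapLRight
        (ContinuousMultilinearMap.mkPiAlgebraFin ℝ n ℝ)
        : ContinuousMultilinearMap ℝ (fun _ : Fin n => (Fin d → ℝ) →L[ℝ] ℝ) _)
        (fun _ : Fin n => L)) ∘ (Lx φ) := by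
    funext x
    simp only [Function.comp_apply,
      ContinuousMultilinearMap.compContinuousLinearMapLRight_apply]
    rfl
  rw [this]
  exact c1.comp_stronglyMeasurable (stronglyMeasurable_Lx φ hφ)

lemma integrable_expo_smul_Mx (hh : Measurable h) (hφ : Measurable φ)
    {θ₀ : Fin d → ℝ} (hθ₀ : θ₀ ∈ S μ h φ) (n : ℕ) :
    Integrable (fun x => expo h φ θ₀ x • Mx φ n x) μ := by
  have hint := integrable_pow μ h φ (good_one μ h φ) hh hφ hθ₀ n
  simp only [abs_one, one_mul] at hint
  refine Integrable.mono' hint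
    (((measurable_expo h φ hh hφ θ₀).stronglyMeasurable.smul
      (stronglyMeasurable_Mx φ hφ n)).aestronglyMeasurable)
    (.of_forall fun x => ?_)
  rw [norm_smul (expo h φ θ₀ x) (Mx φ n x), Real.norm_eq_abs,
    abs_of_pos (expo_pos h φ θ₀ x)]
  calc expo h φ θ₀ x * ‖Mx φ n x‖ ≤ expo h φ θ₀ x * (∑ i, |φ x i|) ^ n :=
        mul_le_mul_of_nonneg_left (norm_Mx_le φ n x) (expo_pos h φ θ₀ x).le
  _ = (∑ i, |φ x i|) ^ n * expo h φ θ₀ x := mul_comm _ _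

/-- The candidate Taylor series of `Z` at `θ₀`. -/
noncomputable def zSeries (θ₀ : Fin d → ℝ) : FormalMultilinearSeries ℝ (Fin d → ℝ) ℝ :=
  fun n => (n.factorial : ℝ)⁻¹ • ∫ x, expo h φ θ₀ x • Mx φ n x ∂μ

lemma analyticAt_Z (hh : Measurable h) (hφ : Measurable φ)
    {θ₀ : Fin d → ℝ} (hθ₀ : θ₀ ∈ S μ h φ) :
    AnalyticAt ℝ (fun θ => ∫ x, expo h φ θ x ∂μ) θ₀ := by
  obtain ⟨ε, hε, B, hB, hbd⟩ := exists_bound μ h φ (good_one μ h φ) hθ₀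
  simp only [abs_one, one_mul] at hbd
  have hBnn : ∀ x, 0 ≤ B x := fun x =>
    le_trans (mul_nonneg (Real.exp_nonneg _) (expo_pos h φ θ₀ x).le) (hbd x 0 le_rfl hε.le)
  -- pointwise bound for the `n`-th integrand
  have hptbd : ∀ (n : ℕ) (t : ℝ), 0 ≤ t → t ≤ ε → ∀ x,
      (n.factorial : ℝ)⁻¹ * (expo h φ θ₀ x * (t * ∑ i, |φ x i|) ^ n) ≤ B x := by
    intro n t ht htε x
    have hsnn : 0 ≤ ∑ i, |φ x i| := Finset.sum_nonneg fun i _ => abs_nonneg _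
    have h1 : (t * ∑ i, |φ x i|) ^ n ≤ (n.factorial : ℝ) * Real.exp (t * ∑ i, |φ x i|) :=
      pow_le_fact_exp (mul_nonneg ht hsnn) n
    have hfac : (0:ℝ) < (n.factorial : ℝ) := by positivity
    calc (n.factorial : ℝ)⁻¹ * (expo h φ θ₀ x * (t * ∑ i, |φ x i|) ^ n)
        ≤ (n.factorial : ℝ)⁻¹ * (expo h φ θ₀ x *
            ((n.factorial : ℝ) * Real.exp (t * ∑ i, |φ x i|))) := by
          apply mul_le_mul_of_nonneg_left _ (by positivity)
          exact mul_le_mul_of_nonneg_left h1 (expo_pos h φ θ₀ x).le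
    _ = Real.exp (t * ∑ i, |φ x i|) * expo h φ θ₀ x := by
          field_simp
    _ ≤ B x := hbd x t ht htε
  -- integrability of each coefficient integrand
  have hGint : ∀ n, Integrable (fun x => expo h φ θ₀ x • Mx φ n x) μ :=
    integrable_expo_smul_Mx μ h φ hh hφ hθ₀
  have hpow_int : ∀ n, Integrable (fun x => (∑ i, |φ x i|) ^ n * expo h φ θ₀ x) μ := by
    intro n
    have := integrable_pow μ h φ (good_one μ h φ) hh hφ hθ₀ n
    simpa using this
  refine HasFPowerSeriesOnBall.analyticAt (p := zSeries μ h φ θ₀)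
    (r := ENNReal.ofReal ε) ?_
  constructor
  · -- radius bound
    rw [ENNReal.ofReal]
    apply FormalMultilinearSeries.le_radius_of_bound _ (∫ x, B x ∂μ)
    intro n
    have hnorm1 : ‖zSeries μ h φ θ₀ n‖
        ≤ (n.factorial : ℝ)⁻¹ * ∫ x, expo h φ θ₀ x * ‖Mx φ n x‖ ∂μ := by
      rw [zSeries, norm_smul ((n.factorial : ℝ)⁻¹) (∫ x, expo h φ θ₀ x • Mx φ n x ∂μ)]
      simp only [Real.norm_eq_abs]
      rw [abs_of_nonneg (by positivity : (0:ℝ) ≤ (n.factorial : ℝ)⁻¹)]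
      apply mul_le_mul_of_nonneg_left _ (by positivity)
      refine (norm_integral_le_integral_norm _).trans ?_
      apply le_of_eq
      congr 1
      funext x
      rw [norm_smul (expo h φ θ₀ x) (Mx φ n x), Real.norm_eq_abs,
        abs_of_pos (expo_pos h φ θ₀ x)]
    have hcoe : ((ε.toNNReal : ℝ)) = ε := Real.coe_toNNReal ε hε.le
    calc ‖zSeries μ h φ θ₀ n‖ * (ε.toNNReal : ℝ) ^ n
        ≤ ((n.factorial : ℝ)⁻¹ * ∫ x, expo h φ θ₀ x * ‖Mx φ n x‖ ∂μ) * ε ^ n := by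
          rw [hcoe]
          apply mul_le_mul_of_nonneg_right hnorm1 (by positivity)
    _ = ∫ x, (n.factorial : ℝ)⁻¹ * ε ^ n * (expo h φ θ₀ x * ‖Mx φ n x‖) ∂μ := by
          rw [integral_const_mul]; ring
    _ ≤ ∫ x, B x ∂μ := by
          apply integral_mono_of_nonneg
          · exact .of_forall fun x => mul_nonneg (by positivity)
              (mul_nonneg (expo_pos h φ θ₀ x).le (norm_nonneg _))
          · exact hB
          · refine .of_forall fun x => ?_
            have h2 : expo h φ θ₀ x * ‖Mx φ n x‖ ≤ expo h φ θ₀ x * (∑ i, |φ x i|) ^ n :=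
              mul_le_mul_of_nonneg_left (norm_Mx_le φ n x) (expo_pos h φ θ₀ x).le
            calc (n.factorial : ℝ)⁻¹ * ε ^ n * (expo h φ θ₀ x * ‖Mx φ n x‖)
                ≤ (n.factorial : ℝ)⁻¹ * ε ^ n * (expo h φ θ₀ x * (∑ i, |φ x i|) ^ n) := by
                  apply mul_le_mul_of_nonneg_left h2 (by positivity)
            _ = (n.factorial : ℝ)⁻¹ * (expo h φ θ₀ x * (ε * ∑ i, |φ x i|) ^ n) := by
                  rw [mul_pow]; ring
            _ ≤ B x := hptbd n ε hε.le le_rfl x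
  · exact ENNReal.ofReal_pos.2 hε
  · -- the sum converges to Z
    intro y hy
    have hy' : ‖y‖ < ε := by
      rw [EMetric.mem_ball, edist_zero_right, ← ofReal_norm] at hy
      exact (ENNReal.ofReal_lt_ofReal_iff hε).1 hy
    have hynn : (0:ℝ) ≤ ‖y‖ := norm_nonneg y
    set f : ℕ → Ω → ℝ :=
      fun n x => (n.factorial : ℝ)⁻¹ * (expo h φ θ₀ x * (Lx φ x y) ^ n) with hf
    have hLxy : ∀ x n, |Lx φ x y| ^ n ≤ (‖y‖ * ∑ i, |φ x i|) ^ n := by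
      intro x n
      apply pow_le_pow_left₀ (abs_nonneg _)
      calc |Lx φ x y| ≤ ‖Lx φ x‖ * ‖y‖ := (Lx φ x).le_opNorm y
      _ ≤ (∑ i, |φ x i|) * ‖y‖ := mul_le_mul_of_nonneg_right (norm_Lx_le φ x) hynn
      _ = ‖y‖ * ∑ i, |φ x i| := mul_comm _ _
    have hfbd : ∀ n x, ‖f n x‖ ≤ (n.factorial : ℝ)⁻¹ *
        (expo h φ θ₀ x * (‖y‖ * ∑ i, |φ x i|) ^ n) := by
      intro n x
      rw [hf]
      simp only [Real.norm_eq_abs, abs_mul, abs_pow,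
        abs_of_pos (expo_pos h φ θ₀ x),
        abs_of_nonneg (by positivity : (0:ℝ) ≤ ((n.factorial : ℝ))⁻¹)]
      exact mul_le_mul_of_nonneg_left
        (mul_le_mul_of_nonneg_left (hLxy x n) (expo_pos h φ θ₀ x).le) (by positivity)
    have hfmeas : ∀ n, AEStronglyMeasurable (f n) μ := by
      intro n
      apply Measurable.aestronglyMeasurable
      apply Measurable.const_mul
      apply (measurable_expo h φ hh hφ θ₀).mul
      apply Measurable.pow_const
      have : (fun x => Lx φ x y) = (fun L : (Fin d → ℝ) →L[ℝ] ℝ => L y) ∘ (Lx φ) := rfl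
      rw [this]
      exact ((ContinuousLinearMap.apply ℝ ℝ y).continuous.comp_stronglyMeasurable
        (stronglyMeasurable_Lx φ hφ)).measurable
    have hfint : ∀ n, Integrable (f n) μ := by
      intro n
      refine Integrable.mono' (((hpow_int n).const_mul ((n.factorial : ℝ)⁻¹ * ‖y‖ ^ n)))
        (hfmeas n) (.of_forall fun x => ?_)
      refine (hfbd n x).trans (le_of_eq ?_)
      rw [mul_pow]
      ring
    have hsum_norm : Summable fun n => ∫ x, ‖f n x‖ ∂μ := by
      apply summable_of_sum_range_le (c := ∫ x, B x ∂μ)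
        (fun n => integral_nonneg fun x => norm_nonneg _)
      intro N
      rw [← integral_finset_sum _ fun n _ => (hfint n).norm]
      apply integral_mono_of_nonneg
        (.of_forall fun x => Finset.sum_nonneg fun n _ => norm_nonneg _) hB
      refine .of_forall fun x => ?_
      have hsnn : 0 ≤ ∑ i, |φ x i| := Finset.sum_nonneg fun i _ => abs_nonneg _
      calc ∑ n ∈ Finset.range N, ‖f n x‖
          ≤ ∑ n ∈ Finset.range N, (n.factorial : ℝ)⁻¹ *
              (expo h φ θ₀ x * (‖y‖ * ∑ i, |φ x i|) ^ n) :=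
            Finset.sum_le_sum fun n _ => hfbd n x
      _ = (∑ n ∈ Finset.range N, (‖y‖ * ∑ i, |φ x i|) ^ n / (n.factorial : ℝ))
            * expo h φ θ₀ x := by
            rw [Finset.sum_mul]
            congr 1; funext n; ring
      _ ≤ Real.exp (‖y‖ * ∑ i, |φ x i|) * expo h φ θ₀ x := by
            apply mul_le_mul_of_nonneg_right _ (expo_pos h φ θ₀ x).le
            exact Real.sum_le_exp_of_nonneg (mul_nonneg hynn hsnn) N
      _ ≤ B x := hbd x ‖y‖ hynn hy'.le
    have hHasSum := hasSum_integral_of_summable_integral_norm hfint hsum_norm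
    -- identify the total
    have htot : ∫ x, ∑' n, f n x ∂μ = ∫ x, expo h φ (θ₀ + y) x ∂μ := by
      apply integral_congr_ae
      refine .of_forall fun x => ?_
      have h1 : ∀ n, f n x = expo h φ θ₀ x * ((Lx φ x y) ^ n / (n.factorial : ℝ)) := by
        intro n; rw [hf]; ring
      show ∑' n, f n x = expo h φ (θ₀ + y) x
      have h1' : ∑' n, f n x
          = ∑' n, expo h φ θ₀ x * ((Lx φ x y) ^ n / (n.factorial : ℝ)) := tsum_congr h1
      rw [h1', tsum_mul_left]
      have h2 : ∑' n : ℕ, (Lx φ x y) ^ n / (n.factorial : ℝ) = Real.exp (Lx φ x y) := by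
        rw [Real.exp_eq_exp_ℝ, NormedSpace.exp_eq_tsum_div]
      have h3 : ∑ i, φ x i * y i = ∑ i, y i * φ x i :=
        Finset.sum_congr rfl fun i _ => mul_comm _ _
      rw [h2, expo_shift, Lx_apply, h3]
    rw [htot] at hHasSum
    -- identify the terms
    have hterm : ∀ n, (zSeries μ h φ θ₀ n) (fun _ => y) = ∫ x, f n x ∂μ := by
      intro n
      rw [zSeries]
      rw [ContinuousMultilinearMap.smul_apply]
      have happly : (∫ x, expo h φ θ₀ x • Mx φ n x ∂μ) (fun _ => y)
          = ∫ x, (expo h φ θ₀ x • Mx φ n x) (fun _ => y) ∂μ := by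
        exact ((ContinuousMultilinearMap.apply ℝ (fun _ : Fin n => (Fin d → ℝ)) ℝ
          (fun _ => y)).integral_comp_comm (hGint n)).symm
      rw [happly]
      have : ∀ x, (expo h φ θ₀ x • Mx φ n x) (fun _ => y)
          = expo h φ θ₀ x * (Lx φ x y) ^ n := by
        intro x
        rw [ContinuousMultilinearMap.smul_apply, Mx_apply_const, smul_eq_mul]
      rw [integral_congr_ae (.of_forall this)]
      rw [hf, smul_eq_mul, ← integral_const_mul]
    have : (fun n => (zSeries μ h φ θ₀ n) (fun _ => y)) = fun n => ∫ x, f n x ∂μ :=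
      funext hterm
    rw [this]
    exact hHasSum

end Analytic

lemma Z_pos (hμ : μ ≠ 0) {θ : Fin d → ℝ} (hθ : θ ∈ S μ h φ) :
    0 < ∫ x, expo h φ θ x ∂μ := by
  have hint : Integrable (fun x => expo h φ θ x) μ := by
    have h2 : θ ∈ {θ : Fin d → ℝ | Integrable (fun x => Real.exp (h x + ∑ i, θ i * φ x i)) μ} :=
      interior_subset hθ
    exact h2
  rw [integral_pos_iff_support_of_nonneg (fun x => (expo_pos h φ θ x).le) hint]
  have hsupp : Function.support (fun x => expo h φ θ x) = Set.univ :=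
    Set.eq_univ_of_forall fun x => (expo_pos h φ θ x).ne'
  rw [hsupp]
  exact Measure.measure_univ_pos.2 hμ

lemma Lx_single (x : Ω) (k : Fin d) : Lx φ x (Pi.single k 1) = φ x k := by
  rw [Lx]
  exact eval_single (fun i => φ x i) k

lemma hasFDerivAt_linpart (x : Ω) (θ : Fin d → ℝ) :
    HasFDerivAt (fun θ' : Fin d → ℝ => ∑ m, θ' m * φ x m) (Lx φ x) θ := by
  rw [Lx]
  apply HasFDerivAt.fun_sum
  intro i _
  exact ((ContinuousLinearMap.proj i :
    (Fin d → ℝ) →L[ℝ] ℝ).hasFDerivAt (x := θ)).mul_const (φ x i)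

end Stmt10Aux

open Stmt10Aux

/-- Partial derivative in the `i`-th coordinate direction. -/
noncomputable def pderiv' (d : ℕ) (i : Fin d) (f : (Fin d → ℝ) → ℝ) (θ : Fin d → ℝ) : ℝ :=
  fderiv ℝ f θ (Pi.single i 1)

/-- Exponential family `p_θ = exp(h + ⟨θ,φ⟩ − F(θ))` on a σ-finite measure
space, with `Θ` a nonempty open subset of the interior of the natural domain `D`. Then the
log-partition function `F` is infinitely differentiable on `Θ`, `∂_i F(θ) = E_θ[φ_i]`,
`∂_i∂_j F(θ) = E_θ[(φ_i − E_θ[φ_i])(φ_j − E_θ[φ_j])]`, and the Fisher information matrix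
`G_{ij}(θ) = E_θ[∂_iℓ ∂_jℓ]` equals the Hessian of `F`. -/
theorem stmt10 {Ω : Type*} [MeasurableSpace Ω] (μ : Measure Ω) [SigmaFinite μ]
    (d : ℕ) (h : Ω → ℝ) (φ : Ω → Fin d → ℝ)
    (hh : Measurable h) (hφ : Measurable φ)
    (Θ : Set (Fin d → ℝ)) (hΘo : IsOpen Θ) (hΘne : Θ.Nonempty)
    (hΘD : Θ ⊆ interior {θ : Fin d → ℝ |
      Integrable (fun x => Real.exp (h x + ∑ i, θ i * φ x i)) μ})
    (F : (Fin d → ℝ) → ℝ)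
    (hF : ∀ θ, F θ = Real.log (∫ x, Real.exp (h x + ∑ i, θ i * φ x i) ∂μ))
    (p : (Fin d → ℝ) → Ω → ℝ)
    (hp : ∀ θ x, p θ x = Real.exp (h x + ∑ i, θ i * φ x i - F θ)) :
    ContDiffOn ℝ (⊤ : ℕ∞) F Θ ∧
    (∀ θ ∈ Θ, ∀ i, pderiv' d i F θ = ∫ x, φ x i * p θ x ∂μ) ∧
    (∀ θ ∈ Θ, ∀ i j,
      pderiv' d i (fun θ' => pderiv' d j F θ') θ
        = ∫ x, (φ x i - ∫ y, φ y i * p θ y ∂μ) * (φ x j - ∫ y, φ y j * p θ y ∂μ)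
            * p θ x ∂μ) ∧
    (∀ θ ∈ Θ, ∀ i j,
      ∫ x, (pderiv' d i (fun θ' => h x + ∑ m, θ' m * φ x m - F θ') θ)
          * (pderiv' d j (fun θ' => h x + ∑ m, θ' m * φ x m - F θ') θ) * p θ x ∂μ
        = pderiv' d i (fun θ' => pderiv' d j F θ') θ) := by
  classical
  have hFeq : F = fun θ => Real.log (∫ x, Real.exp (h x + ∑ i, θ i * φ x i) ∂μ) := funext hF
  subst hFeq
  have hpeq : p = fun θ x => Real.exp (h x + ∑ i, θ i * φ x i
      - Real.log (∫ x, Real.exp (h x + ∑ i, θ i * φ x i) ∂μ)) := by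
    funext θ x; exact hp θ x
  subst hpeq
  rcases eq_or_ne μ 0 with hμ | hμ
  · subst hμ
    refine ⟨?_, ?_, ?_, ?_⟩
    · simp only [integral_zero_measure, Real.log_zero]
      exact contDiffOn_const
    · intro θ hθ i
      simp [pderiv', integral_zero_measure, Real.log_zero]
    · intro θ hθ i j
      simp [pderiv', integral_zero_measure, Real.log_zero]
    · intro θ hθ i j
      simp [pderiv', integral_zero_measure, Real.log_zero]
  · -- main case
    have hS : Θ ⊆ S μ h φ := hΘD
    have hSopen : IsOpen (S μ h φ) := isOpen_interior
    have hZpos : ∀ θ' ∈ S μ h φ, (0:ℝ) < ∫ x, expo h φ θ' x ∂μ :=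
      fun θ' hθ' => Z_pos μ h φ hμ hθ'
    have hgood1 : ∀ j, Good μ h φ (fun x => φ x j) := by
      intro j
      have := Good.mul_phi μ h φ (good_one μ h φ) hh hφ j
      simpa using this
    have hgood2 : ∀ j i, Good μ h φ (fun x => φ x j * φ x i) :=
      fun j i => Good.mul_phi μ h φ (hgood1 j) hh hφ i
    have hZd : ∀ θ' ∈ S μ h φ, HasFDerivAt (fun θ'' => ∫ x, expo h φ θ'' x ∂μ)
        (∑ i, (∫ x, φ x i * expo h φ θ' x ∂μ) •
          (ContinuousLinearMap.proj i : (Fin d → ℝ) →L[ℝ] ℝ)) θ' := by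
      intro θ' hθ'
      have h0 := hasFDerivAt_int μ h φ hh hφ (good_one μ h φ) hθ'
      simpa using h0
    have hc1d : ∀ j, ∀ θ' ∈ S μ h φ,
        HasFDerivAt (fun θ'' => ∫ x, φ x j * expo h φ θ'' x ∂μ)
          (∑ i, (∫ x, (φ x j * φ x i) * expo h φ θ' x ∂μ) •
            (ContinuousLinearMap.proj i : (Fin d → ℝ) →L[ℝ] ℝ)) θ' :=
      fun j θ' hθ' => hasFDerivAt_int μ h φ hh hφ (hgood1 j) hθ'
    have hFd : ∀ θ' ∈ S μ h φ,
        HasFDerivAt (fun θ'' => Real.log (∫ x, expo h φ θ'' x ∂μ))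
          ((∫ x, expo h φ θ' x ∂μ)⁻¹ • ∑ i, (∫ x, φ x i * expo h φ θ' x ∂μ) •
            (ContinuousLinearMap.proj i : (Fin d → ℝ) →L[ℝ] ℝ)) θ' :=
      fun θ' hθ' => (hZd θ' hθ').log (hZpos θ' hθ').ne'
    have hpd : ∀ (j : Fin d), ∀ θ' ∈ S μ h φ,
        fderiv ℝ (fun θ'' => Real.log (∫ x, expo h φ θ'' x ∂μ)) θ' (Pi.single j 1)
          = (∫ x, φ x j * expo h φ θ' x ∂μ) * (∫ x, expo h φ θ' x ∂μ)⁻¹ := by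
      intro j θ' hθ'
      rw [(hFd θ' hθ').fderiv, ContinuousLinearMap.smul_apply, eval_single, smul_eq_mul]
      ring
    have hPx : ∀ θ' ∈ S μ h φ, ∀ x,
        Real.exp (h x + ∑ i, θ' i * φ x i - Real.log (∫ y, expo h φ θ' y ∂μ))
          = expo h φ θ' x * (∫ y, expo h φ θ' y ∂μ)⁻¹ := by
      intro θ' hθ' x
      rw [Real.exp_sub, Real.exp_log (hZpos θ' hθ'), div_eq_mul_inv]
      rfl
    have hm : ∀ θ' ∈ S μ h φ, ∀ k : Fin d,
        (∫ y, φ y k * Real.exp (h y + ∑ i, θ' i * φ y i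
            - Real.log (∫ x, expo h φ θ' x ∂μ)) ∂μ)
          = (∫ x, φ x k * expo h φ θ' x ∂μ) * (∫ x, expo h φ θ' x ∂μ)⁻¹ := by
      intro θ' hθ' k
      have he : ∀ y, φ y k * Real.exp (h y + ∑ i, θ' i * φ y i
            - Real.log (∫ x, expo h φ θ' x ∂μ))
          = (φ y k * expo h φ θ' y) * (∫ x, expo h φ θ' x ∂μ)⁻¹ := by
        intro y
        rw [hPx θ' hθ' y]
        ring
      rw [integral_congr_ae (Filter.Eventually.of_forall he), integral_mul_const]
    -- Part 1
    have part1 : ContDiffOn ℝ (⊤ : ℕ∞)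
        (fun θ => Real.log (∫ x, expo h φ θ x ∂μ)) Θ := by
      intro θ hθ
      have hZa := analyticAt_Z μ h φ hh hφ (hS hθ)
      exact ((hZa.contDiffAt).log (hZpos θ (hS hθ)).ne').contDiffWithinAt
    -- Part 2
    have part2 : ∀ θ ∈ Θ, ∀ i : Fin d,
        fderiv ℝ (fun θ'' => Real.log (∫ x, expo h φ θ'' x ∂μ)) θ (Pi.single i 1)
          = ∫ x, φ x i * Real.exp (h x + ∑ m, θ m * φ x m
              - Real.log (∫ y, expo h φ θ y ∂μ)) ∂μ := by
      intro θ hθ i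
      rw [hpd i θ (hS hθ), hm θ (hS hθ) i]
    -- Part 3
    have part3 : ∀ θ ∈ Θ, ∀ i j : Fin d,
        fderiv ℝ (fun θ'' => fderiv ℝ (fun θ₃ => Real.log (∫ x, expo h φ θ₃ x ∂μ)) θ''
            (Pi.single j 1)) θ (Pi.single i 1)
          = ∫ x, (φ x i - ∫ y, φ y i * Real.exp (h y + ∑ m, θ m * φ y m
                - Real.log (∫ z, expo h φ θ z ∂μ)) ∂μ)
              * (φ x j - ∫ y, φ y j * Real.exp (h y + ∑ m, θ m * φ y m
                - Real.log (∫ z, expo h φ θ z ∂μ)) ∂μ)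
              * Real.exp (h x + ∑ m, θ m * φ x m
                - Real.log (∫ z, expo h φ θ z ∂μ)) ∂μ := by
      intro θ hθ i j
      have hθS := hS hθ
      have hZne := (hZpos θ hθS).ne'
      have hev : (fun θ'' => fderiv ℝ (fun θ₃ => Real.log (∫ x, expo h φ θ₃ x ∂μ)) θ''
            (Pi.single j 1))
          =ᶠ[nhds θ] (fun θ'' => (∫ x, φ x j * expo h φ θ'' x ∂μ)
            * (∫ x, expo h φ θ'' x ∂μ)⁻¹) := by
        filter_upwards [hSopen.mem_nhds hθS] with θ'' hθ''
        exact hpd j θ'' hθ''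
      have hinv : HasFDerivAt (fun θ'' => (∫ x, expo h φ θ'' x ∂μ)⁻¹)
          ((ContinuousLinearMap.smulRight (1 : ℝ →L[ℝ] ℝ)
              (-((∫ x, expo h φ θ x ∂μ) ^ 2)⁻¹)).comp
            (∑ i', (∫ x, φ x i' * expo h φ θ x ∂μ) •
              (ContinuousLinearMap.proj i' : (Fin d → ℝ) →L[ℝ] ℝ))) θ :=
        (hasFDerivAt_inv hZne).comp θ (hZd θ hθS)
      have hG := (hc1d j θ hθS).fun_mul hinv
      rw [hev.fderiv_eq, hG.fderiv]
      rw [ContinuousLinearMap.add_apply, ContinuousLinearMap.smul_apply,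
        ContinuousLinearMap.smul_apply, ContinuousLinearMap.comp_apply, eval_single,
        eval_single, ContinuousLinearMap.smulRight_apply, ContinuousLinearMap.one_apply]
      rw [hm θ hθS i, hm θ hθS j]
      have e1 : ∀ x, (φ x i - (∫ y, φ y i * expo h φ θ y ∂μ) * (∫ y, expo h φ θ y ∂μ)⁻¹)
            * (φ x j - (∫ y, φ y j * expo h φ θ y ∂μ) * (∫ y, expo h φ θ y ∂μ)⁻¹)
            * Real.exp (h x + ∑ m, θ m * φ x m - Real.log (∫ z, expo h φ θ z ∂μ))
          = (∫ y, expo h φ θ y ∂μ)⁻¹ * ((φ x j * φ x i) * expo h φ θ x)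
            - ((∫ y, φ y i * expo h φ θ y ∂μ) * (∫ y, expo h φ θ y ∂μ)⁻¹
                * (∫ y, expo h φ θ y ∂μ)⁻¹) * (φ x j * expo h φ θ x)
            - ((∫ y, φ y j * expo h φ θ y ∂μ) * (∫ y, expo h φ θ y ∂μ)⁻¹
                * (∫ y, expo h φ θ y ∂μ)⁻¹) * (φ x i * expo h φ θ x)
            + ((∫ y, φ y i * expo h φ θ y ∂μ) * (∫ y, expo h φ θ y ∂μ)⁻¹
                * ((∫ y, φ y j * expo h φ θ y ∂μ) * (∫ y, expo h φ θ y ∂μ)⁻¹)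
                * (∫ y, expo h φ θ y ∂μ)⁻¹) * expo h φ θ x := by
        intro x
        rw [hPx θ hθS x]
        ring
      rw [integral_congr_ae (Filter.Eventually.of_forall e1)]
      have i1 : Integrable (fun x => (∫ y, expo h φ θ y ∂μ)⁻¹
          * ((φ x j * φ x i) * expo h φ θ x)) μ :=
        ((hgood2 j i).2 θ hθS).const_mul _
      have i2 : Integrable (fun x => ((∫ y, φ y i * expo h φ θ y ∂μ)
          * (∫ y, expo h φ θ y ∂μ)⁻¹ * (∫ y, expo h φ θ y ∂μ)⁻¹)
          * (φ x j * expo h φ θ x)) μ :=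
        ((hgood1 j).2 θ hθS).const_mul _
      have i3 : Integrable (fun x => ((∫ y, φ y j * expo h φ θ y ∂μ)
          * (∫ y, expo h φ θ y ∂μ)⁻¹ * (∫ y, expo h φ θ y ∂μ)⁻¹)
          * (φ x i * expo h φ θ x)) μ :=
        ((hgood1 i).2 θ hθS).const_mul _
      have iZ : Integrable (fun x => expo h φ θ x) μ := by
        have := (good_one μ h φ).2 θ hθS
        simpa using this
      have i4 : Integrable (fun x => ((∫ y, φ y i * expo h φ θ y ∂μ)
          * (∫ y, expo h φ θ y ∂μ)⁻¹ * ((∫ y, φ y j * expo h φ θ y ∂μ)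
          * (∫ y, expo h φ θ y ∂μ)⁻¹) * (∫ y, expo h φ θ y ∂μ)⁻¹)
          * expo h φ θ x) μ := iZ.const_mul _
      have i12 : Integrable (fun x => (∫ y, expo h φ θ y ∂μ)⁻¹ * ((φ x j * φ x i) * expo h φ θ x) - ((∫ y, φ y i * expo h φ θ y ∂μ) * (∫ y, expo h φ θ y ∂μ)⁻¹ * (∫ y, expo h φ θ y ∂μ)⁻¹) * (φ x j * expo h φ θ x)) μ := i1.sub i2
      have i123 : Integrable (fun x => (∫ y, expo h φ θ y ∂μ)⁻¹ * ((φ x j * φ x i) * expo h φ θ x) - ((∫ y, φ y i * expo h φ θ y ∂μ) * (∫ y, expo h φ θ y ∂μ)⁻¹ * (∫ y, expo h φ θ y ∂μ)⁻¹) * (φ x j * expo h φ θ x) - ((∫ y, φ y j * expo h φ θ y ∂μ) * (∫ y, expo h φ θ y ∂μ)⁻¹ * (∫ y, expo h φ θ y ∂μ)⁻¹) * (φ x i * expo h φ θ x)) μ := i12.sub i3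
      rw [integral_add i123 i4, integral_sub i12 i3, integral_sub i1 i2,
        integral_const_mul, integral_const_mul, integral_const_mul, integral_const_mul]
      simp only [smul_eq_mul]
      field_simp
      ring
    -- Part 4
    have part4 : ∀ θ ∈ Θ, ∀ i j : Fin d,
        ∫ x, (fderiv ℝ (fun θ' => h x + ∑ m, θ' m * φ x m
              - Real.log (∫ y, expo h φ θ' y ∂μ)) θ (Pi.single i 1))
            * (fderiv ℝ (fun θ' => h x + ∑ m, θ' m * φ x m
              - Real.log (∫ y, expo h φ θ' y ∂μ)) θ (Pi.single j 1))
            * Real.exp (h x + ∑ m, θ m * φ x m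
              - Real.log (∫ z, expo h φ θ z ∂μ)) ∂μ
          = fderiv ℝ (fun θ'' => fderiv ℝ (fun θ₃ => Real.log (∫ x, expo h φ θ₃ x ∂μ)) θ''
              (Pi.single j 1)) θ (Pi.single i 1) := by
      intro θ hθ i j
      have hθS := hS hθ
      have hder : ∀ (x : Ω) (k : Fin d),
          fderiv ℝ (fun θ' => h x + ∑ m, θ' m * φ x m
              - Real.log (∫ y, expo h φ θ' y ∂μ)) θ (Pi.single k 1)
            = φ x k - (∫ y, φ y k * expo h φ θ y ∂μ) * (∫ y, expo h φ θ y ∂μ)⁻¹ := by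
        intro x k
        have hlin := hasFDerivAt_linpart φ x θ
        have hl2 := (hlin.const_add (h x)).fun_sub (hFd θ hθS)
        rw [hl2.fderiv, ContinuousLinearMap.sub_apply, Lx_single,
          ContinuousLinearMap.smul_apply, eval_single, smul_eq_mul]
        ring
      have e2 : ∀ x, (fderiv ℝ (fun θ' => h x + ∑ m, θ' m * φ x m
              - Real.log (∫ y, expo h φ θ' y ∂μ)) θ (Pi.single i 1))
            * (fderiv ℝ (fun θ' => h x + ∑ m, θ' m * φ x m
              - Real.log (∫ y, expo h φ θ' y ∂μ)) θ (Pi.single j 1))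
            * Real.exp (h x + ∑ m, θ m * φ x m - Real.log (∫ z, expo h φ θ z ∂μ))
          = (φ x i - ∫ y, φ y i * Real.exp (h y + ∑ m, θ m * φ y m
                - Real.log (∫ z, expo h φ θ z ∂μ)) ∂μ)
            * (φ x j - ∫ y, φ y j * Real.exp (h y + ∑ m, θ m * φ y m
                - Real.log (∫ z, expo h φ θ z ∂μ)) ∂μ)
            * Real.exp (h x + ∑ m, θ m * φ x m - Real.log (∫ z, expo h φ θ z ∂μ)) := by
        intro x
        rw [hder x i, hder x j, hm θ hθS i, hm θ hθS j]
      rw [integral_congr_ae (Filter.Eventually.of_forall e2)]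
      exact (part3 θ hθ i j).symm
    exact ⟨part1, part2, part3, part4⟩
end

section
/- With the exponential family setup: for all θ ∈ Θ and all 1 ≤ i, j, k ≤ d, ∂_i ∂_j ∂_k F(θ) = E_θ[ (φ_i − ∂_iF(θ))(φ_j − ∂_jF(θ))(φ_k − ∂_kF(θ)) ]. Consequently, for every α ∈ ℝ, the Christoffel symbols of the first kind of the Amari–Čencov α-connection, Γ^{(α)}_{ij,k}(θ) = E_θ[ ( ∂_i∂_j ℓ(·,θ) + ((1−α)/2) ∂_iℓ(·,θ) ∂_jℓ(·,θ) ) ∂_kℓ(·,θ) ] with ℓ(x,θ) = h(x) + ⟨θ,φ(x)⟩ − F(θ), satisfy Γ^{(α)}_{ij,k}(θ) = ((1−α)/2) ∂_i∂_j∂_k F(θ). -/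
open MeasureTheory
open scoped BigOperators

/-!
Write `Z(θ) = ∫ exp (h + ⟨θ, φ⟩) dμ`, so that `F = log Z`. Near an interior point `θ` of the
natural parameter space, every function growing subexponentially in `|φ|₁` stays integrable
against `exp (h + ⟨θ', φ⟩)`, uniformly for `θ'` close to `θ`: indeed
`exp (δ |φ|₁) ≤ ∑_{σ ∈ {±1}^d} exp (δ ⟨σ, φ⟩)` and every `θ + δ σ` is still in the parameter
space. Hence one may differentiate under the integral sign,
`∂ᵢ ∫ c e^{h + ⟨θ, φ⟩} = ∫ φᵢ c e^{h + ⟨θ, φ⟩}`, which gives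
`∂ᵢ E_θ[c] = E_θ[φᵢ c] - E_θ[φᵢ] E_θ[c]`. Three applications starting from `∂ₖ F = E_θ[φₖ]`
express `∂ᵢ∂ⱼ∂ₖ F` through moments, and these combine into the third central moment. For the
α-connection, `∂ᵢℓ = φᵢ - ∂ᵢF` and `∂ᵢ∂ⱼℓ = -∂ᵢ∂ⱼF`, and the `∂ᵢ∂ⱼF` term drops out because
the score has mean zero.
-/

open Metric Filter Topology

section PartialDeriv

variable {d : ℕ} {f g : (Fin d → ℝ) → ℝ} {f' : (Fin d → ℝ) →L[ℝ] ℝ} {θ : Fin d → ℝ}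
  (i : Fin d)

theorem HasFDerivAt.pderiv'_eq (hf : HasFDerivAt f f' θ) :
    pderiv' d i f θ = f' (Pi.single i 1) := by
  rw [pderiv', hf.fderiv]

theorem Filter.EventuallyEq.pderiv'_eq (hfg : f =ᶠ[𝓝 θ] g) :
    pderiv' d i f θ = pderiv' d i g θ := by
  rw [pderiv', pderiv', hfg.fderiv_eq]

theorem pderiv'_sub (hf : DifferentiableAt ℝ f θ) (hg : DifferentiableAt ℝ g θ) :
    pderiv' d i (fun θ => f θ - g θ) θ = pderiv' d i f θ - pderiv' d i g θ := by
  simp [pderiv', fderiv_fun_sub hf hg]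

theorem pderiv'_mul (hf : DifferentiableAt ℝ f θ) (hg : DifferentiableAt ℝ g θ) :
    pderiv' d i (fun θ => f θ * g θ) θ = pderiv' d i f θ * g θ + f θ * pderiv' d i g θ := by
  simp only [pderiv', fderiv_fun_mul hf hg, add_apply,
    smul_apply, smul_eq_mul]
  ring

theorem pderiv'_div (hf : DifferentiableAt ℝ f θ) (hg : DifferentiableAt ℝ g θ)
    (hg0 : g θ ≠ 0) :
    pderiv' d i (fun θ => f θ / g θ) θ
      = (pderiv' d i f θ * g θ - f θ * pderiv' d i g θ) / g θ ^ 2 := by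
  have hinv : HasFDerivAt (fun θ => (g θ)⁻¹) ((-(g θ ^ 2)⁻¹) • fderiv ℝ g θ) θ :=
    (hasDerivAt_inv hg0).comp_hasFDerivAt θ hg.hasFDerivAt
  simp only [div_eq_mul_inv]
  rw [(hf.hasFDerivAt.fun_mul hinv).pderiv'_eq]
  simp only [add_apply, smul_apply, smul_eq_mul,
    neg_mul, mul_neg, pderiv']
  field_simp
  ring

theorem pderiv'_log (hf : DifferentiableAt ℝ f θ) (hf0 : f θ ≠ 0) :
    pderiv' d i (fun θ => Real.log (f θ)) θ = pderiv' d i f θ / f θ := by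
  rw [(hf.hasFDerivAt.log hf0).pderiv'_eq]
  simp [pderiv', div_eq_inv_mul]

theorem pderiv'_const_sub (a : ℝ) :
    pderiv' d i (fun θ => a - f θ) θ = -pderiv' d i f θ := by
  simp [pderiv', fderiv_const_sub]

end PartialDeriv

section SubexpBounded

variable {Ω : Type*}

def SubexpBounded (N c : Ω → ℝ) : Prop :=
  ∀ ε > 0, ∃ C, ∀ x, |c x| ≤ C * Real.exp (ε * N x)

variable {N c c' : Ω → ℝ}

theorem subexpBounded_const (hN : 0 ≤ N) (a : ℝ) : SubexpBounded N fun _ => a :=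
  fun _ hε => ⟨|a|, fun x => le_mul_of_one_le_right (abs_nonneg a)
    (Real.one_le_exp (mul_nonneg hε.le (hN x)))⟩

theorem SubexpBounded.of_abs_le (hc : ∀ x, |c x| ≤ N x) : SubexpBounded N c := by
  intro ε hε
  refine ⟨ε⁻¹, fun x => (hc x).trans ?_⟩
  rw [inv_mul_eq_div, le_div_iff₀' hε]
  linarith [Real.add_one_le_exp (ε * N x)]

theorem SubexpBounded.sub (hc : SubexpBounded N c) (hc' : SubexpBounded N c') :
    SubexpBounded N fun x => c x - c' x := by
  intro ε hε
  obtain ⟨C, hC⟩ := hc ε hε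
  obtain ⟨C', hC'⟩ := hc' ε hε
  exact ⟨C + C', fun x => (abs_sub _ _).trans (by linarith [hC x, hC' x])⟩

theorem SubexpBounded.mul (hc : SubexpBounded N c) (hc' : SubexpBounded N c') :
    SubexpBounded N fun x => c x * c' x := by
  intro ε hε
  obtain ⟨C, hC⟩ := hc (ε / 2) (by positivity)
  obtain ⟨C', hC'⟩ := hc' (ε / 2) (by positivity)
  refine ⟨C * C', fun x => ?_⟩
  calc |c x * c' x| ≤ (C * Real.exp (ε / 2 * N x)) * (C' * Real.exp (ε / 2 * N x)) := by
        rw [abs_mul]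
        exact mul_le_mul (hC x) (hC' x) (abs_nonneg _) ((abs_nonneg _).trans (hC x))
    _ = C * C' * Real.exp (ε * N x) := by
        rw [mul_mul_mul_comm, ← Real.exp_add]
        ring_nf

end SubexpBounded

theorem Real.exp_mul_sum_abs_le {d : ℕ} (a : ℝ) (y : Fin d → ℝ) :
    Real.exp (a * ∑ i, |y i|)
      ≤ ∑ σ ∈ Fintype.piFinset fun _ => ({-1, 1} : Finset ℝ), Real.exp (a * ∑ i, σ i * y i) :=
  calc Real.exp (a * ∑ i, |y i|) = ∏ i, Real.exp (a * |y i|) := by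
        rw [Finset.mul_sum, Real.exp_sum]
    _ ≤ ∏ i, ∑ s ∈ ({-1, 1} : Finset ℝ), Real.exp (a * (s * y i)) := by
        refine Finset.prod_le_prod (fun _ _ => (Real.exp_pos _).le) fun i _ => ?_
        rw [Finset.sum_pair (by norm_num)]
        simp only [neg_one_mul, one_mul, mul_neg]
        rcases abs_cases (y i) with ⟨hy, _⟩ | ⟨hy, _⟩ <;> simp only [hy, mul_neg]
        · exact le_add_of_nonneg_left (Real.exp_pos _).le
        · exact le_add_of_nonneg_right (Real.exp_pos _).le
    _ = ∑ σ ∈ Fintype.piFinset fun _ => ({-1, 1} : Finset ℝ), Real.exp (a * ∑ i, σ i * y i) := by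
        rw [Finset.prod_univ_sum]
        simp only [Finset.mul_sum, Real.exp_sum]

theorem integral_sub_mul_sub_mul_sub {α : Type*} [MeasurableSpace α] {ν : Measure α}
    {X Y Z w : α → ℝ}
    (hXYZ : Integrable (fun x => X x * (Y x * Z x) * w x) ν)
    (hYZ : Integrable (fun x => Y x * Z x * w x) ν)
    (hXZ : Integrable (fun x => X x * Z x * w x) ν)
    (hXY : Integrable (fun x => X x * Y x * w x) ν)
    (hX : Integrable (fun x => X x * w x) ν) (hY : Integrable (fun x => Y x * w x) ν)
    (hZ : Integrable (fun x => Z x * w x) ν) (hw : Integrable w ν) (a b c : ℝ) :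
    ∫ x, (X x - a) * (Y x - b) * (Z x - c) * w x ∂ν
      = ∫ x, X x * (Y x * Z x) * w x ∂ν - a * ∫ x, Y x * Z x * w x ∂ν
        - b * ∫ x, X x * Z x * w x ∂ν - c * ∫ x, X x * Y x * w x ∂ν
        + a * b * ∫ x, Z x * w x ∂ν + a * c * ∫ x, Y x * w x ∂ν + b * c * ∫ x, X x * w x ∂ν
        - a * b * c * ∫ x, w x ∂ν := by
  have hexp : ∀ x, (X x - a) * (Y x - b) * (Z x - c) * w x
      = X x * (Y x * Z x) * w x - a * (Y x * Z x * w x) - b * (X x * Z x * w x)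
        - c * (X x * Y x * w x) + a * b * (Z x * w x) + a * c * (Y x * w x)
        + b * c * (X x * w x) - a * b * c * w x := fun x => by ring
  simp_rw [hexp]
  simp (disch := fun_prop) only [integral_sub, integral_add, integral_const_mul]

noncomputable section

namespace ExpFamily

variable {Ω : Type*} {d : ℕ} {h : Ω → ℝ} {φ : Ω → Fin d → ℝ} {θ θ' : Fin d → ℝ} {x : Ω}

def expDensity (h : Ω → ℝ) (φ : Ω → Fin d → ℝ) (θ : Fin d → ℝ) (x : Ω) : ℝ :=
  Real.exp (h x + ∑ i, θ i * φ x i)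

def l1Norm (φ : Ω → Fin d → ℝ) (x : Ω) : ℝ :=
  ∑ i, |φ x i|

def pairing (φ : Ω → Fin d → ℝ) (x : Ω) : (Fin d → ℝ) →L[ℝ] ℝ :=
  ∑ i, φ x i • ContinuousLinearMap.proj i

theorem pairing_apply (v : Fin d → ℝ) : pairing φ x v = ∑ i, v i * φ x i := by
  simp [pairing, mul_comm]

theorem pairing_single (i : Fin d) : pairing φ x (Pi.single i 1) = φ x i := by
  simp [pairing_apply, Pi.single_apply]

theorem l1Norm_nonneg : 0 ≤ l1Norm φ x :=
  Finset.sum_nonneg fun _ _ => abs_nonneg _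

theorem abs_le_l1Norm (i : Fin d) : |φ x i| ≤ l1Norm φ x :=
  Finset.single_le_sum (f := fun j => |φ x j|) (fun _ _ => abs_nonneg _) (Finset.mem_univ i)

theorem subexpBounded_coord (i : Fin d) : SubexpBounded (l1Norm φ) fun x => φ x i :=
  .of_abs_le fun _ => abs_le_l1Norm i

theorem abs_pairing_le (v : Fin d → ℝ) : |pairing φ x v| ≤ ‖v‖ * l1Norm φ x := by
  rw [pairing_apply, l1Norm, Finset.mul_sum]
  refine (Finset.abs_sum_le_sum_abs _ _).trans (Finset.sum_le_sum fun i _ => ?_)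
  rw [abs_mul]
  exact mul_le_mul_of_nonneg_right (norm_le_pi_norm v i) (abs_nonneg _)

theorem norm_pairing_le : ‖pairing φ x‖ ≤ l1Norm φ x :=
  ContinuousLinearMap.opNorm_le_bound _ l1Norm_nonneg fun v => by
    rw [Real.norm_eq_abs, mul_comm]
    exact abs_pairing_le v

theorem expDensity_pos : 0 < expDensity h φ θ x :=
  Real.exp_pos _

theorem expDensity_add (v : Fin d → ℝ) :
    expDensity h φ (θ + v) x = expDensity h φ θ x * Real.exp (pairing φ x v) := by
  simp only [expDensity, pairing_apply, ← Real.exp_add, Pi.add_apply, add_mul,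
    Finset.sum_add_distrib, add_assoc]

theorem expDensity_le_of_dist_le {r : ℝ} (hθ' : dist θ' θ ≤ r) :
    expDensity h φ θ' x ≤ Real.exp (r * l1Norm φ x) * expDensity h φ θ x := by
  have hpair : pairing φ x (θ' - θ) ≤ r * l1Norm φ x :=
    (le_abs_self _).trans <| (abs_pairing_le _).trans <|
      mul_le_mul_of_nonneg_right (by rwa [← dist_eq_norm]) l1Norm_nonneg
  calc expDensity h φ θ' x = expDensity h φ θ x * Real.exp (pairing φ x (θ' - θ)) := by
        rw [← expDensity_add, add_sub_cancel]
    _ ≤ Real.exp (r * l1Norm φ x) * expDensity h φ θ x := by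
        rw [mul_comm]
        exact mul_le_mul_of_nonneg_right (Real.exp_le_exp.2 hpair) expDensity_pos.le

theorem norm_smul_pairing_le (a : ℝ) :
    ‖(a * expDensity h φ θ x) • pairing φ x‖ ≤ |a * l1Norm φ x| * expDensity h φ θ x := by
  rw [norm_smul, norm_mul, Real.norm_eq_abs, Real.norm_of_nonneg expDensity_pos.le, abs_mul,
    abs_of_nonneg l1Norm_nonneg, mul_right_comm]
  exact mul_le_mul_of_nonneg_right (mul_le_mul_of_nonneg_left norm_pairing_le (abs_nonneg a))
    expDensity_pos.le

theorem hasFDerivAt_logExpDensity :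
    HasFDerivAt (fun θ => h x + ∑ i, θ i * φ x i) (pairing φ x) θ := by
  simpa [pairing_apply] using (pairing φ x).hasFDerivAt.const_add (h x)

theorem hasFDerivAt_expDensity :
    HasFDerivAt (fun θ => expDensity h φ θ x) (expDensity h φ θ x • pairing φ x) θ :=
  hasFDerivAt_logExpDensity.exp

variable [MeasurableSpace Ω] {μ : Measure Ω}

def natParamSpace (μ : Measure Ω) (h : Ω → ℝ) (φ : Ω → Fin d → ℝ) : Set (Fin d → ℝ) :=
  {θ | Integrable (expDensity h φ θ) μ}

theorem measurable_expDensity (hh : Measurable h) (hφ : Measurable φ) :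
    Measurable (expDensity h φ θ) := by
  unfold expDensity
  fun_prop

theorem measurable_l1Norm (hφ : Measurable φ) : Measurable (l1Norm φ) := by
  unfold l1Norm
  fun_prop

theorem measurable_pairing (hφ : Measurable φ) : Measurable (pairing φ) := by
  unfold pairing
  fun_prop

theorem exists_integrable_exp_mul_l1Norm (hh : Measurable h) (hφ : Measurable φ)
    (hθ : θ ∈ interior (natParamSpace μ h φ)) :
    ∃ δ > 0, Integrable (fun x => Real.exp (δ * l1Norm φ x) * expDensity h φ θ x) μ := by
  obtain ⟨ε, hε, hball⟩ := Metric.isOpen_iff.1 isOpen_interior θ hθ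
  let signs := Fintype.piFinset fun _ : Fin d => ({-1, 1} : Finset ℝ)
  have hshift : ∀ σ ∈ signs, θ + (ε / 2) • σ ∈ natParamSpace μ h φ := by
    intro σ hσ
    refine interior_subset (hball ?_)
    have hσ1 : ‖σ‖ ≤ 1 := (pi_norm_le_iff_of_nonneg zero_le_one).2 fun i => by
      rcases Finset.mem_insert.1 (Fintype.mem_piFinset.1 hσ i) with hσi | hσi <;> simp_all
    rw [mem_ball, dist_eq_norm, add_sub_cancel_left, norm_smul, Real.norm_of_nonneg (by positivity)]
    linarith [mul_le_mul_of_nonneg_left hσ1 (by positivity : (0 : ℝ) ≤ ε / 2)]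
  refine ⟨ε / 2, by positivity, ?_⟩
  refine (integrable_finsetSum signs hshift).mono'
    ((((measurable_l1Norm hφ).const_mul _).exp.mul
      (measurable_expDensity hh hφ)).aestronglyMeasurable)
    (ae_of_all _ fun x => ?_)
  rw [Real.norm_of_nonneg (mul_pos (Real.exp_pos _) expDensity_pos).le]
  calc Real.exp (ε / 2 * l1Norm φ x) * expDensity h φ θ x
      ≤ (∑ σ ∈ signs, Real.exp (ε / 2 * ∑ i, σ i * φ x i)) * expDensity h φ θ x :=
        mul_le_mul_of_nonneg_right (Real.exp_mul_sum_abs_le _ _) expDensity_pos.le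
    _ = ∑ σ ∈ signs, expDensity h φ (θ + (ε / 2) • σ) x := by
        rw [Finset.sum_mul]
        refine Finset.sum_congr rfl fun σ _ => ?_
        simp only [expDensity_add, pairing_apply, Pi.smul_apply, smul_eq_mul, Finset.mul_sum,
          mul_assoc, mul_comm]

variable {c : Ω → ℝ}

theorem integrable_mul_expDensity (hh : Measurable h) (hφ : Measurable φ)
    (hθ : θ ∈ interior (natParamSpace μ h φ)) (hc : Measurable c)
    (hcb : SubexpBounded (l1Norm φ) c) :
    Integrable (fun x => c x * expDensity h φ θ x) μ := by
  obtain ⟨δ, hδ, hint⟩ := exists_integrable_exp_mul_l1Norm hh hφ hθ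
  obtain ⟨C, hC⟩ := hcb δ hδ
  refine (hint.const_mul C).mono' (hc.mul (measurable_expDensity hh hφ)).aestronglyMeasurable
    (ae_of_all _ fun x => ?_)
  rw [norm_mul, Real.norm_eq_abs, Real.norm_of_nonneg expDensity_pos.le, ← mul_assoc]
  exact mul_le_mul_of_nonneg_right (hC x) expDensity_pos.le

theorem integrable_smul_pairing (hh : Measurable h) (hφ : Measurable φ)
    (hθ : θ ∈ interior (natParamSpace μ h φ)) (hc : Measurable c)
    (hcb : SubexpBounded (l1Norm φ) c) :
    Integrable (fun x => (c x * expDensity h φ θ x) • pairing φ x) μ := by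
  have hcN : SubexpBounded (l1Norm φ) fun x => c x * l1Norm φ x :=
    hcb.mul (.of_abs_le fun _ => (abs_of_nonneg l1Norm_nonneg).le)
  refine (integrable_mul_expDensity hh hφ hθ (hc.mul (measurable_l1Norm hφ)) hcN).norm.mono'
    ?_ (ae_of_all _ fun x => ?_)
  · exact ((hc.mul (measurable_expDensity hh hφ)).smul (measurable_pairing hφ)).aestronglyMeasurable
  · rw [norm_mul, Real.norm_of_nonneg expDensity_pos.le, Real.norm_eq_abs]
    exact norm_smul_pairing_le _

theorem hasFDerivAt_integral_mul_expDensity (hh : Measurable h) (hφ : Measurable φ)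
    (hθ : θ ∈ interior (natParamSpace μ h φ)) (hc : Measurable c)
    (hcb : SubexpBounded (l1Norm φ) c) :
    HasFDerivAt (fun θ => ∫ x, c x * expDensity h φ θ x ∂μ)
      (∫ x, (c x * expDensity h φ θ x) • pairing φ x ∂μ) θ := by
  obtain ⟨δ, hδ, hint⟩ := exists_integrable_exp_mul_l1Norm hh hφ hθ
  obtain ⟨C, hC⟩ := hcb.mul (.of_abs_le fun _ => (abs_of_nonneg l1Norm_nonneg).le)
    (δ / 2) (by positivity)
  have hbound : ∀ x, ∀ θ' ∈ ball θ (δ / 2), ‖(c x * expDensity h φ θ' x) • pairing φ x‖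
      ≤ C * (Real.exp (δ * l1Norm φ x) * expDensity h φ θ x) := by
    intro x θ' hθ'
    calc ‖(c x * expDensity h φ θ' x) • pairing φ x‖
        ≤ |c x * l1Norm φ x| * expDensity h φ θ' x := norm_smul_pairing_le _
      _ ≤ C * Real.exp (δ / 2 * l1Norm φ x)
          * (Real.exp (δ / 2 * l1Norm φ x) * expDensity h φ θ x) :=
        mul_le_mul (hC x) (expDensity_le_of_dist_le (mem_ball.1 hθ').le) expDensity_pos.le
          ((abs_nonneg _).trans (hC x))
      _ = C * (Real.exp (δ * l1Norm φ x) * expDensity h φ θ x) := by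
        rw [← mul_assoc, mul_assoc C, ← Real.exp_add]
        ring_nf
  exact hasFDerivAt_integral_of_dominated_of_fderiv_le
    (F := fun θ x => c x * expDensity h φ θ x) (ball_mem_nhds θ (by positivity))
    (Eventually.of_forall fun _ => (hc.mul (measurable_expDensity hh hφ)).aestronglyMeasurable)
    (integrable_mul_expDensity hh hφ hθ hc hcb)
    (integrable_smul_pairing hh hφ hθ hc hcb).aestronglyMeasurable
    (ae_of_all _ hbound) (hint.const_mul C)
    (ae_of_all _ fun x θ' _ => by
      simpa [smul_smul] using hasFDerivAt_expDensity.const_mul (c x))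

theorem pderiv'_integral_mul_expDensity (hh : Measurable h) (hφ : Measurable φ)
    (hθ : θ ∈ interior (natParamSpace μ h φ)) (hc : Measurable c)
    (hcb : SubexpBounded (l1Norm φ) c) (i : Fin d) :
    pderiv' d i (fun θ => ∫ x, c x * expDensity h φ θ x ∂μ) θ
      = ∫ x, φ x i * c x * expDensity h φ θ x ∂μ := by
  rw [(hasFDerivAt_integral_mul_expDensity hh hφ hθ hc hcb).pderiv'_eq,
    ContinuousLinearMap.integral_apply (integrable_smul_pairing hh hφ hθ hc hcb)]
  simp [pairing_single, mul_comm, mul_left_comm]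

def partition (μ : Measure Ω) (h : Ω → ℝ) (φ : Ω → Fin d → ℝ) (θ : Fin d → ℝ) : ℝ :=
  ∫ x, expDensity h φ θ x ∂μ

def logPartition (μ : Measure Ω) (h : Ω → ℝ) (φ : Ω → Fin d → ℝ) (θ : Fin d → ℝ) : ℝ :=
  Real.log (partition μ h φ θ)

def density (μ : Measure Ω) (h : Ω → ℝ) (φ : Ω → Fin d → ℝ) (θ : Fin d → ℝ) (x : Ω) : ℝ :=
  Real.exp (h x + ∑ i, θ i * φ x i - logPartition μ h φ θ)

def logLik (μ : Measure Ω) (h : Ω → ℝ) (φ : Ω → Fin d → ℝ) (x : Ω) (θ : Fin d → ℝ) : ℝ :=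
  h x + ∑ m, θ m * φ x m - logPartition μ h φ θ

def alphaChristoffel (μ : Measure Ω) (h : Ω → ℝ) (φ : Ω → Fin d → ℝ) (α : ℝ) (i j k : Fin d)
    (θ : Fin d → ℝ) : ℝ :=
  ∫ x, (pderiv' d i (fun θ => pderiv' d j (logLik μ h φ x) θ) θ
      + (1 - α) / 2 * pderiv' d i (logLik μ h φ x) θ * pderiv' d j (logLik μ h φ x) θ)
    * pderiv' d k (logLik μ h φ x) θ * density μ h φ θ x ∂μ

def expect (μ : Measure Ω) (h : Ω → ℝ) (φ : Ω → Fin d → ℝ) (c : Ω → ℝ) (θ : Fin d → ℝ) : ℝ :=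
  ∫ x, c x * density μ h φ θ x ∂μ

theorem differentiableAt_partition (hh : Measurable h) (hφ : Measurable φ)
    (hθ : θ ∈ interior (natParamSpace μ h φ)) : DifferentiableAt ℝ (partition μ h φ) θ := by
  have := hasFDerivAt_integral_mul_expDensity hh hφ hθ measurable_const
    (subexpBounded_const (fun _ => l1Norm_nonneg) 1)
  simp only [one_mul] at this
  exact this.differentiableAt

theorem pderiv'_partition (hh : Measurable h) (hφ : Measurable φ)
    (hθ : θ ∈ interior (natParamSpace μ h φ)) (i : Fin d) :
    pderiv' d i (partition μ h φ) θ = ∫ x, φ x i * expDensity h φ θ x ∂μ := by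
  have := pderiv'_integral_mul_expDensity hh hφ hθ measurable_const
    (subexpBounded_const (fun _ => l1Norm_nonneg) 1) i
  simp only [one_mul, mul_one] at this
  exact this

theorem partition_pos [NeZero μ] (hθ : θ ∈ natParamSpace μ h φ) : 0 < partition μ h φ θ :=
  integral_exp_pos hθ

theorem density_eq [NeZero μ] (hθ : θ ∈ natParamSpace μ h φ) :
    density μ h φ θ x = expDensity h φ θ x / partition μ h φ θ := by
  rw [density, Real.exp_sub, logPartition, Real.exp_log (partition_pos hθ)]
  rfl

theorem expect_eq [NeZero μ] (hθ : θ ∈ natParamSpace μ h φ) :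
    expect μ h φ c θ = (∫ x, c x * expDensity h φ θ x ∂μ) / partition μ h φ θ := by
  simp_rw [expect, density_eq hθ, mul_div_assoc', integral_div]

theorem expect_eventuallyEq [NeZero μ] (hθ : θ ∈ interior (natParamSpace μ h φ)) :
    expect μ h φ c
      =ᶠ[𝓝 θ] fun θ => (∫ x, c x * expDensity h φ θ x ∂μ) / partition μ h φ θ :=
  eventuallyEq_of_mem (isOpen_interior.mem_nhds hθ) fun _ hθ' => expect_eq (interior_subset hθ')

theorem differentiableAt_expect [NeZero μ] (hh : Measurable h) (hφ : Measurable φ)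
    (hθ : θ ∈ interior (natParamSpace μ h φ)) (hc : Measurable c)
    (hcb : SubexpBounded (l1Norm φ) c) : DifferentiableAt ℝ (expect μ h φ c) θ := by
  have hM := (hasFDerivAt_integral_mul_expDensity hh hφ hθ hc hcb).differentiableAt
  have hZ := differentiableAt_partition hh hφ hθ
  have hZ0 := (partition_pos (interior_subset hθ)).ne'
  exact DifferentiableAt.congr_of_eventuallyEq (by fun_prop (disch := exact hZ0))
    (expect_eventuallyEq hθ)

theorem pderiv'_expect [NeZero μ] (hh : Measurable h) (hφ : Measurable φ)
    (hθ : θ ∈ interior (natParamSpace μ h φ)) (hc : Measurable c)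
    (hcb : SubexpBounded (l1Norm φ) c) (i : Fin d) :
    pderiv' d i (expect μ h φ c) θ
      = expect μ h φ (fun x => φ x i * c x) θ
        - expect μ h φ (fun x => φ x i) θ * expect μ h φ c θ := by
  have hZ := partition_pos (interior_subset hθ)
  rw [(expect_eventuallyEq hθ).pderiv'_eq,
    pderiv'_div _ (hasFDerivAt_integral_mul_expDensity hh hφ hθ hc hcb).differentiableAt
      (differentiableAt_partition hh hφ hθ) hZ.ne',
    pderiv'_integral_mul_expDensity hh hφ hθ hc hcb, pderiv'_partition hh hφ hθ,
    expect_eq (interior_subset hθ), expect_eq (interior_subset hθ),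
    expect_eq (interior_subset hθ)]
  field_simp

theorem differentiableAt_logPartition [NeZero μ] (hh : Measurable h) (hφ : Measurable φ)
    (hθ : θ ∈ interior (natParamSpace μ h φ)) : DifferentiableAt ℝ (logPartition μ h φ) θ :=
  (differentiableAt_partition hh hφ hθ).log (partition_pos (interior_subset hθ)).ne'

theorem pderiv'_logPartition [NeZero μ] (hh : Measurable h) (hφ : Measurable φ)
    (hθ : θ ∈ interior (natParamSpace μ h φ)) (k : Fin d) :
    pderiv' d k (logPartition μ h φ) θ = expect μ h φ (fun x => φ x k) θ := by
  change pderiv' d k (fun θ => Real.log (partition μ h φ θ)) θ = _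
  rw [pderiv'_log _ (differentiableAt_partition hh hφ hθ) (partition_pos (interior_subset hθ)).ne',
    pderiv'_partition hh hφ hθ, expect_eq (interior_subset hθ)]

theorem pderiv'_pderiv'_logPartition [NeZero μ] (hh : Measurable h) (hφ : Measurable φ)
    (hθ : θ ∈ interior (natParamSpace μ h φ)) (j k : Fin d) :
    pderiv' d j (fun θ => pderiv' d k (logPartition μ h φ) θ) θ
      = expect μ h φ (fun x => φ x j * φ x k) θ
        - expect μ h φ (fun x => φ x j) θ * expect μ h φ (fun x => φ x k) θ := by
  have hEq := eventuallyEq_of_mem (isOpen_interior.mem_nhds hθ) fun _ hθ' =>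
    pderiv'_logPartition hh hφ hθ' k
  rw [hEq.pderiv'_eq, pderiv'_expect hh hφ hθ (by fun_prop) (subexpBounded_coord k)]

theorem pderiv'_pderiv'_pderiv'_logPartition [NeZero μ] (hh : Measurable h)
    (hφ : Measurable φ) (hθ : θ ∈ interior (natParamSpace μ h φ)) (i j k : Fin d) :
    pderiv' d i (fun θ => pderiv' d j (fun θ => pderiv' d k (logPartition μ h φ) θ) θ) θ
      = expect μ h φ (fun x => φ x i * (φ x j * φ x k)) θ
        - expect μ h φ (fun x => φ x i) θ * expect μ h φ (fun x => φ x j * φ x k) θ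
        - ((expect μ h φ (fun x => φ x i * φ x j) θ
            - expect μ h φ (fun x => φ x i) θ * expect μ h φ (fun x => φ x j) θ)
              * expect μ h φ (fun x => φ x k) θ
          + expect μ h φ (fun x => φ x j) θ
            * (expect μ h φ (fun x => φ x i * φ x k) θ
              - expect μ h φ (fun x => φ x i) θ * expect μ h φ (fun x => φ x k) θ)) := by
  have hEq := eventuallyEq_of_mem (isOpen_interior.mem_nhds hθ) fun _ hθ' =>
    pderiv'_pderiv'_logPartition hh hφ hθ' j k
  have hb := subexpBounded_coord (φ := φ)
  have hD {c : Ω → ℝ} (hc : Measurable c) (hcb : SubexpBounded (l1Norm φ) c) :=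
    differentiableAt_expect hh hφ hθ hc hcb
  have hP {c : Ω → ℝ} (hc : Measurable c) (hcb : SubexpBounded (l1Norm φ) c) :=
    pderiv'_expect hh hφ hθ hc hcb i
  rw [hEq.pderiv'_eq,
    pderiv'_sub _ (hD (by fun_prop) ((hb j).mul (hb k)))
      ((hD (by fun_prop) (hb j)).fun_mul (hD (by fun_prop) (hb k))),
    pderiv'_mul _ (hD (by fun_prop) (hb j)) (hD (by fun_prop) (hb k)),
    hP (by fun_prop) ((hb j).mul (hb k)), hP (by fun_prop) (hb j), hP (by fun_prop) (hb k)]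

theorem integrable_density [NeZero μ] (hθ : θ ∈ natParamSpace μ h φ) :
    Integrable (density μ h φ θ) μ := by
  simp_rw [funext fun x => density_eq (x := x) hθ]
  exact hθ.div_const _

theorem integral_density [NeZero μ] (hθ : θ ∈ natParamSpace μ h φ) :
    ∫ x, density μ h φ θ x ∂μ = 1 := by
  simp_rw [density_eq hθ, integral_div]
  exact div_self (partition_pos hθ).ne'

theorem integrable_mul_density [NeZero μ] (hh : Measurable h) (hφ : Measurable φ)
    (hθ : θ ∈ interior (natParamSpace μ h φ)) (hc : Measurable c)
    (hcb : SubexpBounded (l1Norm φ) c) :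
    Integrable (fun x => c x * density μ h φ θ x) μ := by
  simp_rw [density_eq (interior_subset hθ), mul_div_assoc']
  exact (integrable_mul_expDensity hh hφ hθ hc hcb).div_const _

theorem pderiv'_pderiv'_pderiv'_logPartition_eq_integral [NeZero μ] (hh : Measurable h)
    (hφ : Measurable φ) (hθ : θ ∈ interior (natParamSpace μ h φ)) (i j k : Fin d) :
    pderiv' d i (fun θ => pderiv' d j (fun θ => pderiv' d k (logPartition μ h φ) θ) θ) θ
      = ∫ x, (φ x i - pderiv' d i (logPartition μ h φ) θ)
          * (φ x j - pderiv' d j (logPartition μ h φ) θ)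
          * (φ x k - pderiv' d k (logPartition μ h φ) θ) * density μ h φ θ x ∂μ := by
  have hint {c : Ω → ℝ} (hc : Measurable c) (hcb : SubexpBounded (l1Norm φ) c) :=
    integrable_mul_density hh hφ hθ hc hcb
  have hb := subexpBounded_coord (φ := φ)
  rw [pderiv'_pderiv'_pderiv'_logPartition hh hφ hθ, pderiv'_logPartition hh hφ hθ,
    pderiv'_logPartition hh hφ hθ, pderiv'_logPartition hh hφ hθ,
    integral_sub_mul_sub_mul_sub (hint (by fun_prop) ((hb i).mul ((hb j).mul (hb k))))
      (hint (by fun_prop) ((hb j).mul (hb k))) (hint (by fun_prop) ((hb i).mul (hb k)))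
      (hint (by fun_prop) ((hb i).mul (hb j))) (hint (by fun_prop) (hb i))
      (hint (by fun_prop) (hb j)) (hint (by fun_prop) (hb k))
      (integrable_density (interior_subset hθ)),
    integral_density (interior_subset hθ)]
  simp only [expect]
  ring

theorem pderiv'_logLik [NeZero μ] (hh : Measurable h) (hφ : Measurable φ)
    (hθ : θ ∈ interior (natParamSpace μ h φ)) (x : Ω) (i : Fin d) :
    pderiv' d i (logLik μ h φ x) θ = φ x i - pderiv' d i (logPartition μ h φ) θ := by
  unfold logLik
  rw [pderiv'_sub _ hasFDerivAt_logExpDensity.differentiableAt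
    (differentiableAt_logPartition hh hφ hθ), hasFDerivAt_logExpDensity.pderiv'_eq,
    pairing_single]

theorem pderiv'_pderiv'_logLik [NeZero μ] (hh : Measurable h) (hφ : Measurable φ)
    (hθ : θ ∈ interior (natParamSpace μ h φ)) (x : Ω) (i j : Fin d) :
    pderiv' d i (fun θ => pderiv' d j (logLik μ h φ x) θ) θ
      = -pderiv' d i (fun θ => pderiv' d j (logPartition μ h φ) θ) θ := by
  have hEq := eventuallyEq_of_mem (isOpen_interior.mem_nhds hθ) fun _ hθ' =>
    pderiv'_logLik hh hφ hθ' x j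
  rw [hEq.pderiv'_eq, pderiv'_const_sub]

theorem integral_sub_pderiv'_logPartition_mul_density [NeZero μ] (hh : Measurable h)
    (hφ : Measurable φ) (hθ : θ ∈ interior (natParamSpace μ h φ)) (k : Fin d) :
    ∫ x, (φ x k - pderiv' d k (logPartition μ h φ) θ) * density μ h φ θ x ∂μ = 0 := by
  simp_rw [sub_mul]
  rw [integral_sub (integrable_mul_density hh hφ hθ (by fun_prop) (subexpBounded_coord k))
      ((integrable_density (interior_subset hθ)).const_mul _),
    integral_const_mul, integral_density (interior_subset hθ), pderiv'_logPartition hh hφ hθ]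
  simp [expect]

theorem alphaChristoffel_eq [NeZero μ] (hh : Measurable h) (hφ : Measurable φ)
    (hθ : θ ∈ interior (natParamSpace μ h φ)) (α : ℝ) (i j k : Fin d) :
    alphaChristoffel μ h φ α i j k θ
      = (1 - α) / 2
        * pderiv' d i (fun θ => pderiv' d j (fun θ => pderiv' d k (logPartition μ h φ) θ) θ) θ := by
  simp_rw [alphaChristoffel, pderiv'_pderiv'_logLik hh hφ hθ, pderiv'_logLik hh hφ hθ]
  set F := logPartition μ h φ
  have hcentral : Integrable (fun x => (φ x i - pderiv' d i F θ) * (φ x j - pderiv' d j F θ)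
      * (φ x k - pderiv' d k F θ) * density μ h φ θ x) μ := by
    have hb := subexpBounded_coord (φ := φ)
    have hc (a : ℝ) := subexpBounded_const (fun x => l1Norm_nonneg (φ := φ) (x := x)) a
    exact integrable_mul_density hh hφ hθ (by fun_prop)
      ((((hb i).sub (hc _)).mul ((hb j).sub (hc _))).mul ((hb k).sub (hc _)))
  have hscore : Integrable (fun x => (φ x k - pderiv' d k F θ) * density μ h φ θ x) μ :=
    integrable_mul_density hh hφ hθ (by fun_prop)
    ((subexpBounded_coord k).sub (subexpBounded_const (fun _ => l1Norm_nonneg) (pderiv' d k F θ)))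
  set Fij := pderiv' d i (fun θ => pderiv' d j F θ) θ
  have hsplit : ∀ x, (-Fij + (1 - α) / 2 * (φ x i - pderiv' d i F θ) * (φ x j - pderiv' d j F θ))
        * (φ x k - pderiv' d k F θ) * density μ h φ θ x
      = (1 - α) / 2 * ((φ x i - pderiv' d i F θ) * (φ x j - pderiv' d j F θ)
          * (φ x k - pderiv' d k F θ) * density μ h φ θ x)
        - Fij * ((φ x k - pderiv' d k F θ) * density μ h φ θ x) := fun x => by ring
  simp_rw [hsplit]
  rw [integral_sub (hcentral.const_mul _) (hscore.const_mul _), integral_const_mul,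
    integral_const_mul, integral_sub_pderiv'_logPartition_mul_density hh hφ hθ,
    ← pderiv'_pderiv'_pderiv'_logPartition_eq_integral hh hφ hθ]
  ring

end ExpFamily

end

theorem stmt11_general {Ω : Type*} [MeasurableSpace Ω] (μ : Measure Ω)
    (d : ℕ) (h : Ω → ℝ) (φ : Ω → Fin d → ℝ)
    (hh : Measurable h) (hφ : Measurable φ)
    (Θ : Set (Fin d → ℝ))
    (hΘD : Θ ⊆ interior {θ : Fin d → ℝ |
      Integrable (fun x => Real.exp (h x + ∑ i, θ i * φ x i)) μ})
    (F : (Fin d → ℝ) → ℝ)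
    (hF : ∀ θ, F θ = Real.log (∫ x, Real.exp (h x + ∑ i, θ i * φ x i) ∂μ))
    (p : (Fin d → ℝ) → Ω → ℝ)
    (hp : ∀ θ x, p θ x = Real.exp (h x + ∑ i, θ i * φ x i - F θ)) :
    (∀ θ ∈ Θ, ∀ i j k,
      pderiv' d i (fun θ' => pderiv' d j (fun θ'' => pderiv' d k F θ'') θ') θ
        = ∫ x, (φ x i - pderiv' d i F θ) * (φ x j - pderiv' d j F θ)
            * (φ x k - pderiv' d k F θ) * p θ x ∂μ) ∧
    (∀ α : ℝ, ∀ θ ∈ Θ, ∀ i j k,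
      ∫ x, ((pderiv' d i (fun θ' =>
              pderiv' d j (fun θ'' => h x + ∑ m, θ'' m * φ x m - F θ'') θ') θ)
            + ((1 - α) / 2)
              * (pderiv' d i (fun θ' => h x + ∑ m, θ' m * φ x m - F θ') θ)
              * (pderiv' d j (fun θ' => h x + ∑ m, θ' m * φ x m - F θ') θ))
          * (pderiv' d k (fun θ' => h x + ∑ m, θ' m * φ x m - F θ') θ) * p θ x ∂μ
        = ((1 - α) / 2)
            * pderiv' d i (fun θ' => pderiv' d j (fun θ'' => pderiv' d k F θ'') θ') θ) := by
  rcases eq_zero_or_neZero μ with rfl | _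
  · obtain rfl : F = fun _ => 0 := funext fun θ => by simp [hF]
    simp [pderiv']
  obtain rfl : F = ExpFamily.logPartition μ h φ := funext hF
  obtain rfl : p = ExpFamily.density μ h φ := funext fun θ => funext (hp θ)
  exact ⟨fun θ hθ => ExpFamily.pderiv'_pderiv'_pderiv'_logPartition_eq_integral hh hφ (hΘD hθ),
    fun α θ hθ => ExpFamily.alphaChristoffel_eq hh hφ (hΘD hθ) α⟩

/-- For an exponential family `p_θ = exp(h + ⟨θ,φ⟩ − F(θ))`, the third
derivatives of the log-partition function are the third central moments,
`∂_i∂_j∂_k F(θ) = E_θ[(φ_i − ∂_iF)(φ_j − ∂_jF)(φ_k − ∂_kF)]`, and consequently for every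
`α ∈ ℝ` the α-connection Christoffel symbols of the first kind satisfy
`Γ^{(α)}_{ij,k}(θ) = ((1−α)/2) ∂_i∂_j∂_k F(θ)`. -/
theorem stmt11 {Ω : Type*} [MeasurableSpace Ω] (μ : Measure Ω) [SigmaFinite μ]
    (d : ℕ) (h : Ω → ℝ) (φ : Ω → Fin d → ℝ)
    (hh : Measurable h) (hφ : Measurable φ)
    (Θ : Set (Fin d → ℝ)) (hΘo : IsOpen Θ) (hΘne : Θ.Nonempty)
    (hΘD : Θ ⊆ interior {θ : Fin d → ℝ |
      Integrable (fun x => Real.exp (h x + ∑ i, θ i * φ x i)) μ})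
    (F : (Fin d → ℝ) → ℝ)
    (hF : ∀ θ, F θ = Real.log (∫ x, Real.exp (h x + ∑ i, θ i * φ x i) ∂μ))
    (p : (Fin d → ℝ) → Ω → ℝ)
    (hp : ∀ θ x, p θ x = Real.exp (h x + ∑ i, θ i * φ x i - F θ)) :
    (∀ θ ∈ Θ, ∀ i j k,
      pderiv' d i (fun θ' => pderiv' d j (fun θ'' => pderiv' d k F θ'') θ') θ
        = ∫ x, (φ x i - pderiv' d i F θ) * (φ x j - pderiv' d j F θ)
            * (φ x k - pderiv' d k F θ) * p θ x ∂μ) ∧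
    (∀ α : ℝ, ∀ θ ∈ Θ, ∀ i j k,
      ∫ x, ((pderiv' d i (fun θ' =>
              pderiv' d j (fun θ'' => h x + ∑ m, θ'' m * φ x m - F θ'') θ') θ)
            + ((1 - α) / 2)
              * (pderiv' d i (fun θ' => h x + ∑ m, θ' m * φ x m - F θ') θ)
              * (pderiv' d j (fun θ' => h x + ∑ m, θ' m * φ x m - F θ') θ))
          * (pderiv' d k (fun θ' => h x + ∑ m, θ' m * φ x m - F θ') θ) * p θ x ∂μ
        = ((1 - α) / 2)
            * pderiv' d i (fun θ' => pderiv' d j (fun θ'' => pderiv' d k F θ'') θ') θ) :=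
  stmt11_general μ d h φ hh hφ Θ hΘD F hF p hp
end

section
/- Let Θ ⊆ ℝ^d be open and F : Θ → ℝ smooth with everywhere invertible Hessian G(θ) = (∂_i∂_jF(θ))_{i,j}. Define Γ^m_{ki}(θ) = Σ_r (G(θ)^{−1})_{mr} ∂_k∂_i∂_r F(θ) (the Christoffel symbols of the (−1)-connection) and g(θ) = G(θ)² (the matrix square of the Hessian). Then for all θ ∈ Θ and all i, j, k: ∂_k g_{ij}(θ) = Σ_m ( Γ^m_{ki}(θ) g_{mj}(θ) + Γ^m_{kj}(θ) g_{im}(θ) ). In particular, when G(θ) is positive definite for all θ, the (−1)-connection is the Levi-Civita connection of the Riemannian metric g = (Hess F)². -/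
open scoped BigOperators

/-- The Hessian matrix `G(θ) = (∂_i∂_j F(θ))`. -/
noncomputable def hessMat (d : ℕ) (F : (Fin d → ℝ) → ℝ) (θ : Fin d → ℝ) :
    Matrix (Fin d) (Fin d) ℝ :=
  Matrix.of fun i j => pderiv' d i (fun θ' => pderiv' d j F θ') θ

/-- Christoffel symbols of the `(−1)`-connection (mixture connection):
`Γ^m_{ki}(θ) = Σ_r (G(θ)⁻¹)_{mr} ∂_k∂_i∂_r F(θ)`. -/
noncomputable def mixtureChristoffel (d : ℕ) (F : (Fin d → ℝ) → ℝ) (m k i : Fin d)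
    (θ : Fin d → ℝ) : ℝ :=
  ∑ r, (hessMat d F θ)⁻¹ m r
    * pderiv' d k (fun θ' => pderiv' d i (fun θ'' => pderiv' d r F θ'') θ') θ

section helpers

variable {d : ℕ} {Θ : Set (Fin d → ℝ)}

lemma pd_contDiffOn (hΘ : IsOpen Θ) {f : (Fin d → ℝ) → ℝ} (hf : ContDiffOn ℝ (⊤ : ℕ∞) f Θ)
    (i : Fin d) : ContDiffOn ℝ (⊤ : ℕ∞) (pderiv' d i f) Θ := by
  have h := hf.fderiv_of_isOpen hΘ (le_of_eq (by rw [← WithTop.coe_one, ← WithTop.coe_add, top_add]) : ((⊤ : ℕ∞) : WithTop ℕ∞) + 1 ≤ ((⊤ : ℕ∞) : WithTop ℕ∞))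
  exact h.clm_apply contDiffOn_const

lemma pd_diffAt (hΘ : IsOpen Θ) {f : (Fin d → ℝ) → ℝ} (hf : ContDiffOn ℝ (⊤ : ℕ∞) f Θ)
    {θ : Fin d → ℝ} (hθ : θ ∈ Θ) : DifferentiableAt ℝ f θ :=
  ((hf.differentiableOn (by simp)).differentiableAt (hΘ.mem_nhds hθ))

lemma pd_comm (hΘ : IsOpen Θ) {f : (Fin d → ℝ) → ℝ} (hf : ContDiffOn ℝ (⊤ : ℕ∞) f Θ)
    {θ : Fin d → ℝ} (hθ : θ ∈ Θ) (i j : Fin d) :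
    pderiv' d i (pderiv' d j f) θ = pderiv' d j (pderiv' d i f) θ := by
  have hca : ContDiffAt ℝ (⊤ : ℕ∞) f θ := hf.contDiffAt (hΘ.mem_nhds hθ)
  have hsym : IsSymmSndFDerivAt ℝ f θ := hca.isSymmSndFDerivAt (by rw [minSmoothness_of_isRCLikeNormedField, ← WithTop.coe_ofNat]; exact WithTop.coe_le_coe.mpr le_top)
  have hf' : ContDiffOn ℝ (⊤ : ℕ∞) (fderiv ℝ f) Θ :=
    hf.fderiv_of_isOpen hΘ (le_of_eq (by rw [← WithTop.coe_one, ← WithTop.coe_add, top_add]) : ((⊤ : ℕ∞) : WithTop ℕ∞) + 1 ≤ ((⊤ : ℕ∞) : WithTop ℕ∞))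
  have hd : DifferentiableAt ℝ (fderiv ℝ f) θ :=
    (hf'.differentiableOn (by simp)).differentiableAt (hΘ.mem_nhds hθ)
  have key : ∀ a b : Fin d, pderiv' d a (pderiv' d b f) θ
      = fderiv ℝ (fderiv ℝ f) θ (Pi.single a 1) (Pi.single b 1) := by
    intro a b
    show fderiv ℝ (fun y => (fderiv ℝ f y) (Pi.single b 1)) θ (Pi.single a 1) = _
    rw [fderiv_clm_apply hd (differentiableAt_const _)]
    simp
  rw [key, key, hsym]

lemma pd_mul {f g : (Fin d → ℝ) → ℝ} {θ : Fin d → ℝ} (hf : DifferentiableAt ℝ f θ)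
    (hg : DifferentiableAt ℝ g θ) (k : Fin d) :
    pderiv' d k (fun x => f x * g x) θ = pderiv' d k f θ * g θ + f θ * pderiv' d k g θ := by
  unfold pderiv'
  rw [fderiv_fun_mul hf hg]
  simp only [ContinuousLinearMap.add_apply, ContinuousLinearMap.smul_apply, smul_eq_mul]
  ring

lemma pd_sum {ι : Type*} (s : Finset ι) {f : ι → (Fin d → ℝ) → ℝ} {θ : Fin d → ℝ}
    (hf : ∀ a ∈ s, DifferentiableAt ℝ (f a) θ) (k : Fin d) :
    pderiv' d k (fun x => ∑ a ∈ s, f a x) θ = ∑ a ∈ s, pderiv' d k (f a) θ := by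
  unfold pderiv'
  rw [fderiv_fun_sum hf]
  simp

end helpers

/-- For smooth `F` on open `Θ ⊆ ℝ^d` with everywhere invertible Hessian `G`,
the matrix field `g = G²` is compatible with the `(−1)`-connection:
`∂_k g_{ij} = Σ_m (Γ^m_{ki} g_{mj} + Γ^m_{kj} g_{im})`. In particular, when `G` is positive
definite, the `(−1)`-connection is the Levi-Civita connection of the Riemannian metric
`g = (Hess F)²`. -/
theorem stmt13 (d : ℕ) (Θ : Set (Fin d → ℝ)) (hΘ : IsOpen Θ)
    (F : (Fin d → ℝ) → ℝ) (hF : ContDiffOn ℝ (⊤ : ℕ∞) F Θ)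
    (hinv : ∀ θ ∈ Θ, IsUnit (hessMat d F θ).det) :
    ∀ θ ∈ Θ, ∀ i j k : Fin d,
      pderiv' d k (fun θ' => (hessMat d F θ' * hessMat d F θ') i j) θ
        = ∑ m, (mixtureChristoffel d F m k i θ * (hessMat d F θ * hessMat d F θ) m j
            + mixtureChristoffel d F m k j θ * (hessMat d F θ * hessMat d F θ) i m) := by
  intro θ hθ i j k
  -- smoothness of iterated partials
  have h1 : ∀ a : Fin d, ContDiffOn ℝ (⊤ : ℕ∞) (pderiv' d a F) Θ := fun a => pd_contDiffOn hΘ hF a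
  have h2 : ∀ a b : Fin d, ContDiffOn ℝ (⊤ : ℕ∞) (pderiv' d a (pderiv' d b F)) Θ :=
    fun a b => pd_contDiffOn hΘ (h1 b) a
  have hdiff : ∀ a b : Fin d, DifferentiableAt ℝ (pderiv' d a (pderiv' d b F)) θ :=
    fun a b => pd_diffAt hΘ (h2 a b) hθ
  -- entries of the Hessian
  have hentry : ∀ (θ' : Fin d → ℝ) (a b : Fin d),
      hessMat d F θ' a b = pderiv' d a (pderiv' d b F) θ' := fun _ _ _ => rfl
  -- shorthand for third derivatives
  set T : Fin d → Fin d → Fin d → ℝ :=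
    fun k' a r => pderiv' d k' (pderiv' d a (pderiv' d r F)) θ with hT
  -- the Christoffel symbols in terms of T
  have hchris : ∀ m a : Fin d, mixtureChristoffel d F m a k θ
      = ∑ r, (hessMat d F θ)⁻¹ m r * T a k r := fun _ _ => rfl
  -- symmetry of the Hessian at points of Θ
  have hsymM : ∀ θ' ∈ Θ, Matrix.transpose (hessMat d F θ') = hessMat d F θ' := by
    intro θ' hθ'
    ext a b
    rw [Matrix.transpose_apply, hentry, hentry]
    exact pd_comm hΘ hF hθ' b a
  -- swapping the inner two indices of T
  have hswap : ∀ a b : Fin d, T k a b = T k b a := by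
    intro a b
    have hev : (pderiv' d a (pderiv' d b F)) =ᶠ[nhds θ] (pderiv' d b (pderiv' d a F)) :=
      Filter.eventuallyEq_of_mem (hΘ.mem_nhds hθ) (fun x hx => pd_comm hΘ hF hx a b)
    show fderiv ℝ (pderiv' d a (pderiv' d b F)) θ (Pi.single k 1)
      = fderiv ℝ (pderiv' d b (pderiv' d a F)) θ (Pi.single k 1)
    rw [hev.fderiv_eq]
  -- matrix identities
  have key1 : Matrix.transpose ((hessMat d F θ)⁻¹) * (hessMat d F θ * hessMat d F θ) = hessMat d F θ := by
    rw [Matrix.transpose_nonsing_inv, hsymM θ hθ, ← Matrix.mul_assoc,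
      Matrix.nonsing_inv_mul _ (hinv θ hθ), Matrix.one_mul]
  have key2 : (hessMat d F θ * hessMat d F θ) * (hessMat d F θ)⁻¹ = hessMat d F θ := by
    rw [Matrix.mul_assoc, Matrix.mul_nonsing_inv _ (hinv θ hθ), Matrix.mul_one]
  have key1' : ∀ r : Fin d, ∑ m, (hessMat d F θ)⁻¹ m r * (hessMat d F θ * hessMat d F θ) m j
      = hessMat d F θ r j := by
    intro r
    have := Matrix.ext_iff.mpr key1 r j
    simpa [Matrix.mul_apply, Matrix.transpose_apply] using this
  have key2' : ∀ r : Fin d, ∑ m, (hessMat d F θ * hessMat d F θ) i m * (hessMat d F θ)⁻¹ m r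
      = hessMat d F θ i r := by
    intro r
    have := Matrix.ext_iff.mpr key2 i r
    simpa [Matrix.mul_apply] using this
  -- compute the LHS
  have hLfun : (fun θ' => (hessMat d F θ' * hessMat d F θ') i j)
      = fun θ' => ∑ r, pderiv' d i (pderiv' d r F) θ' * pderiv' d r (pderiv' d j F) θ' := by
    funext θ'
    simp [Matrix.mul_apply, hentry]
  have hLHS : pderiv' d k (fun θ' => (hessMat d F θ' * hessMat d F θ') i j) θ
      = ∑ r, (T k i r * hessMat d F θ r j + hessMat d F θ i r * T k j r) := by
    rw [hLfun, pd_sum _ (fun r _ => ((hdiff i r).fun_mul (hdiff r j)))]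
    refine Finset.sum_congr rfl fun r _ => ?_
    rw [pd_mul (hdiff i r) (hdiff r j)]
    rw [hentry, hentry, hT]
    have : pderiv' d k (pderiv' d r (pderiv' d j F)) θ = T k j r := by
      rw [hT]; exact (hswap j r).symm
    rw [this]
  rw [hLHS]
  -- compute the RHS
  have hRHS : ∑ m, (mixtureChristoffel d F m k i θ * (hessMat d F θ * hessMat d F θ) m j
        + mixtureChristoffel d F m k j θ * (hessMat d F θ * hessMat d F θ) i m)
      = ∑ r, (T k i r * hessMat d F θ r j + hessMat d F θ i r * T k j r) := by
    rw [Finset.sum_add_distrib, Finset.sum_add_distrib]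
    congr 1
    · calc ∑ m, mixtureChristoffel d F m k i θ * (hessMat d F θ * hessMat d F θ) m j
          = ∑ m, ∑ r, (hessMat d F θ)⁻¹ m r * T k i r * (hessMat d F θ * hessMat d F θ) m j := by
            refine Finset.sum_congr rfl fun m _ => ?_
            rw [show mixtureChristoffel d F m k i θ = ∑ r, (hessMat d F θ)⁻¹ m r * T k i r from rfl,
              Finset.sum_mul]
        _ = ∑ r, ∑ m, (hessMat d F θ)⁻¹ m r * T k i r * (hessMat d F θ * hessMat d F θ) m j :=
            Finset.sum_comm
        _ = ∑ r, T k i r * hessMat d F θ r j := by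
            refine Finset.sum_congr rfl fun r _ => ?_
            rw [← key1' r, Finset.mul_sum]
            refine Finset.sum_congr rfl fun m _ => ?_
            ring
    · calc ∑ m, mixtureChristoffel d F m k j θ * (hessMat d F θ * hessMat d F θ) i m
          = ∑ m, ∑ r, (hessMat d F θ)⁻¹ m r * T k j r * (hessMat d F θ * hessMat d F θ) i m := by
            refine Finset.sum_congr rfl fun m _ => ?_
            rw [show mixtureChristoffel d F m k j θ = ∑ r, (hessMat d F θ)⁻¹ m r * T k j r from rfl,
              Finset.sum_mul]
        _ = ∑ r, ∑ m, (hessMat d F θ)⁻¹ m r * T k j r * (hessMat d F θ * hessMat d F θ) i m :=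
            Finset.sum_comm
        _ = ∑ r, hessMat d F θ i r * T k j r := by
            refine Finset.sum_congr rfl fun r _ => ?_
            rw [← key2' r, Finset.sum_mul]
            refine Finset.sum_congr rfl fun m _ => ?_
            ring
  rw [hRHS]
end
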